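/- arXiv:1702.02592 — 8 statements merged into one kernel-verified Lean document; each statement's English description precedes it below -/
import Mathlib

section
/- Let α ∈ (0,1) and let X be an infinite-dimensional real Banach space. Then there exist u₀ ∈ X, a continuous and locally Lipschitz function f : [0,∞) × X → X which does not map every bounded subset of [0,∞) × X into a bounded subset of X, and a bounded continuous function u : [0,1) → X with u(0) = u₀ satisfying u(t) = u₀ + (1/Γ(α)) ∫_0^t (t−s)^{α−1} f(s, u(s)) ds for every t ∈ [0,1), such that u admits no continuous extension to [0,1]. In particular, u is a bounded maximal local solution of the fractional Cauchy problem cD^α u(t) = f(t, u(t)), u(0) = u₀, defined exactly on [0,1). -/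
/-!
Choose unit vectors `e n` with `e n` at distance `≥ 1/2` from the span of the earlier ones
(Riesz's lemma). The trajectory `u = ∑ profile n • e n` passes from `e n` to `e (n + 1)` on
`[1 - 2⁻ⁿ⁻¹, 1 - 2⁻ⁿ⁻²]`, so it is bounded while `u (1 - 2⁻ⁿ⁻¹) = e n` has no limit.
Each profile is a difference of ramps, and by a Beta integral a ramp of width `w` is the
Riemann–Liouville integral of order `α` of a combination of truncated powers
`(r - c)₊ ^ (1 - α)` of size `≈ w ^ (-α)`. Hence `u = I^α G` for an explicit, unbounded `G`, and
`f (s, x)` is `G s` damped to `0` outside a thin tube around the trajectory. On late stages the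
trajectory stays `1/8` away from the span of all earlier `e k`, hence eventually away from any
given point; so `f` vanishes near every `(t, x)` with `t ≥ 1`, and is continuous and locally
Lipschitz there.
-/

open Set MeasureTheory Filter Topology

namespace FractionalBlowUp

noncomputable section

section RiemannLiouville

variable {E : Type*} [NormedAddCommGroup E] [NormedSpace ℝ E] {α : ℝ}

def riemannLiouville (α : ℝ) (g : ℝ → E) (t : ℝ) : E :=
  (1 / Real.Gamma α) • ∫ r in (0 : ℝ)..t, (t - r) ^ (α - 1) • g r

lemma intervalIntegrable_kernel_smul (hα : 0 < α) {g : ℝ → E} (hg : Continuous g) (t a b : ℝ) :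
    IntervalIntegrable (fun r => (t - r) ^ (α - 1) • g r) volume a b := by
  have hk : IntervalIntegrable (fun r => (t - r) ^ (α - 1)) volume a b := by
    simpa using (intervalIntegral.intervalIntegrable_rpow' (a := t - a) (b := t - b)
      (by linarith)).comp_sub_left t
  exact hk.smul_continuousOn hg.continuousOn

lemma riemannLiouville_congr {g g' : ℝ → E} {t : ℝ} (ht : 0 ≤ t) (h : EqOn g g' (Icc 0 t)) :
    riemannLiouville α g t = riemannLiouville α g' t := by
  unfold riemannLiouville
  congr 1
  refine intervalIntegral.integral_congr fun r hr => ?_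
  rw [uIcc_of_le ht] at hr
  simp only [h hr]

lemma riemannLiouville_const_mul (c : ℝ) (g : ℝ → ℝ) (t : ℝ) :
    riemannLiouville α (fun r => c * g r) t = c * riemannLiouville α g t := by
  simp only [riemannLiouville, smul_eq_mul, mul_left_comm _ c, intervalIntegral.integral_const_mul]

lemma riemannLiouville_sub (hα : 0 < α) {f g : ℝ → E} (hf : Continuous f) (hg : Continuous g)
    (t : ℝ) : riemannLiouville α (fun r => f r - g r) t =
      riemannLiouville α f t - riemannLiouville α g t := by
  simp only [riemannLiouville, ← smul_sub, ← intervalIntegral.integral_sub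
    (intervalIntegrable_kernel_smul hα hf t 0 t) (intervalIntegrable_kernel_smul hα hg t 0 t)]

lemma riemannLiouville_finset_sum_smul [CompleteSpace E] (hα : 0 < α) {ι : Type*} (s : Finset ι)
    {φ : ι → ℝ → ℝ} (hφ : ∀ i ∈ s, Continuous (φ i)) (v : ι → E) (t : ℝ) :
    riemannLiouville α (fun r => ∑ i ∈ s, φ i r • v i) t =
      ∑ i ∈ s, riemannLiouville α (φ i) t • v i := by
  have hsplit : (fun r => (t - r) ^ (α - 1) • ∑ i ∈ s, φ i r • v i) =
      fun r => ∑ i ∈ s, ((t - r) ^ (α - 1) • φ i r) • v i := by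
    ext r
    simp only [Finset.smul_sum, smul_smul, smul_eq_mul]
  rw [riemannLiouville, hsplit, intervalIntegral.integral_finsetSum fun i hi =>
    (intervalIntegrable_kernel_smul hα (hφ i hi) t 0 t).smul_continuousOn continuousOn_const,
    Finset.smul_sum]
  refine Finset.sum_congr rfl fun i _ => ?_
  rw [intervalIntegral.integral_smul_const, riemannLiouville, smul_assoc]

end RiemannLiouville

/-- `B(2 - α, α)`; only its positivity matters. -/
def betaConst (α : ℝ) : ℝ := ∫ x in (0 : ℝ)..1, x ^ (1 - α) * (1 - x) ^ (α - 1)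

variable {α : ℝ}

lemma betaConst_pos (hα₀ : 0 < α) (hα₁ : α < 1) : 0 < betaConst α := by
  have hint : IntervalIntegrable (fun x : ℝ => x ^ (1 - α) * (1 - x) ^ (α - 1)) volume 0 1 := by
    simpa only [smul_eq_mul, mul_comm] using intervalIntegrable_kernel_smul hα₀
      (g := fun x : ℝ => x ^ (1 - α)) (by fun_prop (disch := linarith)) 1 0 1
  refine intervalIntegral.intervalIntegral_pos_of_pos_on hint (fun x hx => ?_) one_pos
  have := Real.rpow_pos_of_pos hx.1 (1 - α)
  have := Real.rpow_pos_of_pos (sub_pos.mpr hx.2) (α - 1)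
  positivity

lemma integral_kernel_mul_rpow {c t : ℝ} (hct : c < t) :
    ∫ r in c..t, (t - r) ^ (α - 1) * (r - c) ^ (1 - α) = betaConst α * (t - c) := by
  set T := t - c
  have hT : 0 < T := sub_pos.mpr hct
  have hscale := intervalIntegral.integral_comp_mul_add (a := 0) (b := 1)
    (fun r => (t - r) ^ (α - 1) * (r - c) ^ (1 - α)) hT.ne' c
  simp only [mul_zero, zero_add, mul_one, show T + c = t by ring, smul_eq_mul] at hscale
  have hsub : ∫ x in (0 : ℝ)..1, (t - (T * x + c)) ^ (α - 1) * (T * x + c - c) ^ (1 - α) =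
      betaConst α := by
    refine intervalIntegral.integral_congr fun x hx => ?_
    rw [uIcc_of_le zero_le_one] at hx
    have hTT : T ^ (α - 1) * T ^ (1 - α) = 1 := by
      rw [← Real.rpow_add hT]; norm_num
    rw [show t - (T * x + c) = T * (1 - x) by ring, show T * x + c - c = T * x by ring,
      Real.mul_rpow hT.le (by linarith [hx.2]), Real.mul_rpow hT.le hx.1]
    linear_combination (x ^ (1 - α) * (1 - x) ^ (α - 1)) * hTT
  rw [hsub] at hscale
  field_simp at hscale
  linarith

lemma riemannLiouville_truncPow (hα₀ : 0 < α) (hα₁ : α < 1) {c t : ℝ} (hc : 0 ≤ c) (ht : 0 ≤ t) :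
    riemannLiouville α (fun r => max (r - c) 0 ^ (1 - α)) t =
      betaConst α / Real.Gamma α * max (t - c) 0 := by
  have hzero : ∀ r ≤ c, max (r - c) 0 ^ (1 - α) = 0 := fun r hr => by
    rw [max_eq_right (by linarith), Real.zero_rpow (by linarith)]
  have hcont : Continuous fun r : ℝ => max (r - c) 0 ^ (1 - α) :=
    by fun_prop (disch := linarith)
  rcases le_or_gt t c with htc | htc
  · rw [max_eq_right (by linarith), mul_zero, riemannLiouville_congr (g' := fun _ => 0) ht
      fun r hr => hzero r (hr.2.trans htc)]
    simp [riemannLiouville]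
  · have hint := intervalIntegrable_kernel_smul hα₀ hcont t
    rw [riemannLiouville, ← intervalIntegral.integral_add_adjacent_intervals (hint 0 c) (hint c t),
      intervalIntegral.integral_congr (g := fun _ => (0 : ℝ)) (a := 0) (b := c) fun r hr => by
        rw [uIcc_of_le hc] at hr; simp only [hzero r hr.2, smul_zero],
      intervalIntegral.integral_congr (g := fun r => (t - r) ^ (α - 1) * (r - c) ^ (1 - α))
        (a := c) (b := t) fun r hr => by
          rw [uIcc_of_le htc.le] at hr; simp only [max_eq_left (sub_nonneg.mpr hr.1), smul_eq_mul],
      integral_kernel_mul_rpow htc, max_eq_left (by linarith)]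
    simp only [intervalIntegral.integral_zero, zero_add, smul_eq_mul]
    ring

def ramp (a b t : ℝ) : ℝ := (max (t - a) 0 - max (t - b) 0) / (b - a)

def rampSource (α a b t : ℝ) : ℝ :=
  Real.Gamma α / (betaConst α * (b - a)) * (max (t - a) 0 ^ (1 - α) - max (t - b) 0 ^ (1 - α))

section Ramp

variable {a b t : ℝ}

lemma ramp_of_le (hab : a ≤ b) (ht : t ≤ a) : ramp a b t = 0 := by
  rw [ramp, max_eq_right (by linarith), max_eq_right (by linarith)]; simp

lemma ramp_of_ge (hab : a < b) (ht : b ≤ t) : ramp a b t = 1 := by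
  rw [ramp, max_eq_left (by linarith), max_eq_left (by linarith)]
  field_simp [sub_ne_zero.mpr hab.ne']
  ring

lemma ramp_mem_Icc (hab : a < b) (t : ℝ) : ramp a b t ∈ Icc 0 1 := by
  rcases le_total t a with hta | hat
  · rw [ramp_of_le hab.le hta]; exact ⟨le_rfl, zero_le_one⟩
  rcases le_total b t with hbt | htb
  · rw [ramp_of_ge hab hbt]; exact ⟨zero_le_one, le_rfl⟩
  rw [ramp, max_eq_left (sub_nonneg.mpr hat), max_eq_right (sub_nonpos.mpr htb), sub_zero]
  exact ⟨div_nonneg (by linarith) (by linarith), (div_le_one (by linarith)).mpr (by linarith)⟩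

lemma continuous_ramp (a b : ℝ) : Continuous (ramp a b) := by
  unfold ramp; fun_prop

end Ramp

section RampSource

variable {α a b t : ℝ}

lemma continuous_rampSource (hα₁ : α < 1) (a b : ℝ) : Continuous (rampSource α a b) := by
  unfold rampSource; fun_prop (disch := linarith)

lemma rampSource_of_le (hα₁ : α < 1) (hab : a ≤ b) (ht : t ≤ a) : rampSource α a b t = 0 := by
  rw [rampSource, max_eq_right (by linarith), max_eq_right (by linarith),
    Real.zero_rpow (by linarith)]; simp

lemma rampSource_right (hα₁ : α < 1) (hab : a < b) :
    rampSource α a b b = Real.Gamma α / betaConst α * (b - a) ^ (-α) := by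
  have hba : 0 < b - a := sub_pos.mpr hab
  rw [rampSource, max_eq_left hba.le, sub_self, max_self, Real.zero_rpow (by linarith), sub_zero,
    show -α = (1 - α) - 1 by ring, Real.rpow_sub_one hba.ne']
  field_simp

lemma riemannLiouville_rampSource (hα₀ : 0 < α) (hα₁ : α < 1) (ha : 0 ≤ a) (hb : 0 ≤ b)
    (ht : 0 ≤ t) : riemannLiouville α (rampSource α a b) t = ramp a b t := by
  have hcont : ∀ c : ℝ, Continuous fun r : ℝ => max (r - c) 0 ^ (1 - α) := fun c =>
    by fun_prop (disch := linarith)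
  have hΓ := (Real.Gamma_pos_of_pos hα₀).ne'
  have hB := (betaConst_pos hα₀ hα₁).ne'
  unfold rampSource
  rw [riemannLiouville_const_mul, riemannLiouville_sub hα₀ (hcont a) (hcont b),
    riemannLiouville_truncPow hα₀ hα₁ ha ht, riemannLiouville_truncPow hα₀ hα₁ hb ht, ramp]
  field_simp

end RampSource

def width (n : ℕ) : ℝ := (1 / 2) ^ n / 8

def stage (n : ℕ) : ℝ := 1 - 8 * width n

lemma width_pos (n : ℕ) : 0 < width n := by unfold width; positivity

lemma width_succ (n : ℕ) : width (n + 1) = width n / 2 := by unfold width; ring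

lemma stage_zero : stage 0 = 0 := by norm_num [stage, width]

lemma stage_succ (n : ℕ) : stage (n + 1) = stage n + 4 * width n := by
  rw [stage, stage, width_succ]; ring

lemma stage_add_two (n : ℕ) : stage (n + 2) = stage n + 6 * width n := by
  rw [stage_succ, stage_succ, width_succ]; ring

lemma stage_lt_one (n : ℕ) : stage n < 1 := by
  have := width_pos n; rw [stage]; linarith

lemma stage_strictMono : StrictMono stage :=
  strictMono_nat_of_lt_succ fun n => by have := width_pos n; rw [stage_succ]; linarith

lemma stage_nonneg (n : ℕ) : 0 ≤ stage n :=
  stage_zero ▸ stage_strictMono.monotone n.zero_le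

lemma tendsto_width : Tendsto width atTop (𝓝[>] 0) := by
  refine tendsto_nhdsWithin_iff.mpr ⟨?_, .of_forall width_pos⟩
  have h := (tendsto_pow_atTop_nhds_zero_of_lt_one (r := (1 / 2 : ℝ))
    (by norm_num) (by norm_num)).div_const 8
  rwa [zero_div] at h

lemma tendsto_stage : Tendsto stage atTop (𝓝 1) := by
  have h := ((tendsto_nhdsWithin_iff.mp tendsto_width).1.const_mul 8).const_sub 1
  rwa [mul_zero, sub_zero] at h

lemma exists_lt_stage {t : ℝ} (ht : t < 1) : ∃ n, t < stage n :=
  (tendsto_stage.eventually (lt_mem_nhds ht)).exists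

/-- `profile n` rises to `1` on `[stage n, stage n + width n]` and falls back to `0` right after
`profile (n + 1)` has reached `1`, at `stage (n + 1) + width (n + 1) = stage n + 9/2 * width n`. -/
def profile (n : ℕ) (t : ℝ) : ℝ :=
  ramp (stage n) (stage n + width n) t -
    ramp (stage n + 9 / 2 * width n) (stage n + 5 * width n) t

def profileSource (α : ℝ) (n : ℕ) (t : ℝ) : ℝ :=
  rampSource α (stage n) (stage n + width n) t -
    rampSource α (stage n + 9 / 2 * width n) (stage n + 5 * width n) t

section Profile

variable {n : ℕ} {t : ℝ}

lemma continuous_profile (n : ℕ) : Continuous (profile n) :=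
  (continuous_ramp _ _).sub (continuous_ramp _ _)

lemma profile_of_le_stage (ht : t ≤ stage n) : profile n t = 0 := by
  have := width_pos n
  rw [profile, ramp_of_le (by linarith) ht, ramp_of_le (by linarith) (by linarith), sub_zero]

lemma profile_of_stage_add_two_le (ht : stage (n + 2) ≤ t) : profile n t = 0 := by
  have := width_pos n
  rw [stage_add_two] at ht
  rw [profile, ramp_of_ge (by linarith) (by linarith), ramp_of_ge (by linarith) (by linarith),
    sub_self]

lemma profile_eq_one (h₁ : stage n + width n ≤ t) (h₂ : t ≤ stage n + 9 / 2 * width n) :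
    profile n t = 1 := by
  have := width_pos n
  rw [profile, ramp_of_ge (by linarith) h₁, ramp_of_le (by linarith) h₂, sub_zero]

lemma profile_mem_Icc (n : ℕ) (t : ℝ) : profile n t ∈ Icc 0 1 := by
  have := width_pos n
  rw [profile]
  rcases le_total t (stage n + 9 / 2 * width n) with ht | ht
  · rw [ramp_of_le (by linarith) ht, sub_zero]
    exact ramp_mem_Icc (by linarith) t
  · rw [ramp_of_ge (by linarith) (by linarith)]
    have hdown := ramp_mem_Icc (a := stage n + 9 / 2 * width n) (b := stage n + 5 * width n)
      (by linarith) t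
    constructor <;> linarith [hdown.1, hdown.2]

lemma profile_eq_one_or (h₁ : stage (n + 1) ≤ t) (h₂ : t ≤ stage (n + 2)) :
    profile n t = 1 ∨ profile (n + 1) t = 1 := by
  have := width_pos n
  rw [stage_succ] at h₁
  rw [stage_add_two] at h₂
  rcases le_total t (stage n + 9 / 2 * width n) with ht | ht
  · exact .inl (profile_eq_one (by linarith) ht)
  · refine .inr (profile_eq_one ?_ ?_) <;> rw [stage_succ, width_succ] <;> linarith

variable {α : ℝ}

lemma continuous_profileSource (hα₁ : α < 1) (n : ℕ) : Continuous (profileSource α n) :=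
  (continuous_rampSource hα₁ _ _).sub (continuous_rampSource hα₁ _ _)

lemma profileSource_of_le_stage (hα₁ : α < 1) (ht : t ≤ stage n) : profileSource α n t = 0 := by
  have := width_pos n
  rw [profileSource, rampSource_of_le hα₁ (by linarith) ht,
    rampSource_of_le hα₁ (by linarith) (by linarith), sub_zero]

lemma profileSource_stage_add_width (hα₁ : α < 1) (n : ℕ) :
    profileSource α n (stage n + width n) = Real.Gamma α / betaConst α * width n ^ (-α) := by
  have := width_pos n
  rw [profileSource, rampSource_right hα₁ (by linarith),
    rampSource_of_le hα₁ (by linarith) (by linarith), add_sub_cancel_left, sub_zero]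

lemma riemannLiouville_profileSource (hα₀ : 0 < α) (hα₁ : α < 1) (n : ℕ) (ht : 0 ≤ t) :
    riemannLiouville α (profileSource α n) t = profile n t := by
  have := stage_nonneg n
  have := width_pos n
  rw [profile, ← riemannLiouville_rampSource hα₀ hα₁ (by linarith) (by linarith) ht,
    ← riemannLiouville_rampSource hα₀ hα₁ (by linarith) (by linarith) ht,
    ← riemannLiouville_sub hα₀ (continuous_rampSource hα₁ _ _) (continuous_rampSource hα₁ _ _)]
  rfl

end Profile

section Series

variable {X : Type*} [NormedAddCommGroup X] [NormedSpace ℝ X]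

structure IsRieszSeq (e : ℕ → X) : Prop where
  norm_eq_one : ∀ n, ‖e n‖ = 1
  half_le_norm_sub : ∀ n, ∀ y ∈ Submodule.span ℝ (e '' Iio n), 1 / 2 ≤ ‖e n - y‖

lemma exists_isRieszSeq (hX : ¬ FiniteDimensional ℝ X) : ∃ e : ℕ → X, IsRieszSeq e := by
  classical
  have hnext (s : Finset X) :
      ∃ z : X, ‖z‖ = 1 ∧ ∀ y ∈ Submodule.span ℝ (s : Set X), 1 / 2 ≤ ‖z - y‖ := by
    have hne : ∃ x, x ∉ Submodule.span ℝ (s : Set X) := by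
      contrapose! hX
      have hfg : (Submodule.span ℝ (s : Set X)).FG := ⟨s, rfl⟩
      rw [Submodule.eq_top_iff'.mpr hX] at hfg
      exact .of_fg_top hfg
    obtain ⟨z, -, hz⟩ := riesz_lemma_of_lt_one (Submodule.closed_of_finiteDimensional _) hne
      (by norm_num : (1 / 2 : ℝ) < 1)
    exact ⟨z, hz⟩
  choose next hnext using hnext
  let chosen : ℕ → Finset X := fun n =>
    Nat.rec (motive := fun _ => Finset X) ∅ (fun _ s => insert (next s) s) n
  have hchosen (n : ℕ) : chosen n = (Finset.range n).image fun k => next (chosen k) := by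
    induction n with
    | zero => rfl
    | succ n ih => rw [Finset.range_add_one, Finset.image_insert, ← ih]
  refine ⟨fun n => next (chosen n), fun n => (hnext _).1, fun n => ?_⟩
  have himage : (fun k => next (chosen k)) '' Iio n = (↑(chosen n) : Set X) := by
    rw [hchosen n, Finset.coe_image, Finset.coe_range]
  rw [himage]
  exact (hnext _).2

namespace IsRieszSeq

variable {e : ℕ → X}

lemma half_mul_le_norm_smul_add (he : IsRieszSeq e) {n : ℕ} {c : ℝ} (hc : 0 < c) {z : X}
    (hz : z ∈ Submodule.span ℝ (e '' Iio n)) : c / 2 ≤ ‖c • e n + z‖ := by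
  have h := he.half_le_norm_sub n _ (neg_mem (Submodule.smul_mem _ c⁻¹ hz))
  have hcz : c • e n + z = c • (e n - -(c⁻¹ • z)) := by
    rw [sub_neg_eq_add, smul_add, smul_inv_smul₀ hc.ne']
  rw [hcz, norm_smul, Real.norm_of_nonneg hc.le]
  nlinarith

lemma not_tendsto (he : IsRieszSeq e) (x : X) : ¬ Tendsto e atTop (𝓝 x) := by
  intro h
  obtain ⟨N, hN⟩ := Metric.cauchySeq_iff'.mp h.cauchySeq (1 / 2) (by norm_num)
  have hsep := he.half_le_norm_sub (N + 1) (e N) (Submodule.subset_span ⟨N, N.lt_succ_self, rfl⟩)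
  rw [← dist_eq_norm] at hsep
  linarith [hN (N + 1) N.le_succ]

end IsRieszSeq

variable (v : ℕ → X) {φ : ℕ → ℝ → ℝ}

lemma tsum_smul_eq_sum_range (hφ : ∀ k t, t ≤ stage k → φ k t = 0) {N : ℕ} {t : ℝ}
    (ht : t ≤ stage N) : ∑' k, φ k t • v k = ∑ k ∈ Finset.range N, φ k t • v k :=
  tsum_eq_sum fun k hk => by
    rw [hφ k t (ht.trans (stage_strictMono.monotone (not_lt.mp (by simpa using hk)))), zero_smul]

lemma continuousAt_tsum_smul (hφ : ∀ k t, t ≤ stage k → φ k t = 0)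
    (hcont : ∀ k, Continuous (φ k)) {t : ℝ} (ht : t < 1) :
    ContinuousAt (fun s => ∑' k, φ k s • v k) t := by
  obtain ⟨N, hN⟩ := exists_lt_stage ht
  have hsum : Continuous fun s => ∑ k ∈ Finset.range N, φ k s • v k :=
    continuous_finsetSum _ fun k _ => (hcont k).smul continuous_const
  exact hsum.continuousAt.congr (eventually_of_mem (Iio_mem_nhds hN) fun s hs =>
    (tsum_smul_eq_sum_range v hφ (le_of_lt hs)).symm)

end Series

section Trajectory

variable {X : Type*} [NormedAddCommGroup X] [NormedSpace ℝ X] (e : ℕ → X) {α t : ℝ}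

def traj (t : ℝ) : X := ∑' k, profile k t • e k

def source (α t : ℝ) : X := ∑' k, profileSource α k t • e k

lemma traj_eq_sum {N : ℕ} (ht : t ≤ stage N) :
    traj e t = ∑ k ∈ Finset.range N, profile k t • e k :=
  tsum_smul_eq_sum_range e (fun _ _ => profile_of_le_stage) ht

lemma source_eq_sum (hα₁ : α < 1) {N : ℕ} (ht : t ≤ stage N) :
    source e α t = ∑ k ∈ Finset.range N, profileSource α k t • e k :=
  tsum_smul_eq_sum_range e (fun _ _ => profileSource_of_le_stage hα₁) ht

lemma continuousAt_traj (ht : t < 1) : ContinuousAt (traj e) t :=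
  continuousAt_tsum_smul e (fun _ _ => profile_of_le_stage) continuous_profile ht

lemma continuousAt_source (hα₁ : α < 1) (ht : t < 1) : ContinuousAt (source e α) t :=
  continuousAt_tsum_smul e (fun _ _ => profileSource_of_le_stage hα₁)
    (continuous_profileSource hα₁) ht

lemma traj_zero : traj e 0 = 0 := by
  rw [traj_eq_sum e (N := 0) stage_zero.ge, Finset.sum_range_zero]

lemma traj_mem_span {N : ℕ} (ht : t ≤ stage N) : traj e t ∈ Submodule.span ℝ (e '' Iio N) := by
  rw [traj_eq_sum e ht]
  exact Submodule.sum_mem _ fun k hk =>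
    Submodule.smul_mem _ _ (Submodule.subset_span ⟨k, by simpa using hk, rfl⟩)

lemma traj_eq_pair {m : ℕ} (hlow : ∀ k < m, stage (k + 2) ≤ t) (ht : t ≤ stage (m + 2)) :
    traj e t = profile m t • e m + profile (m + 1) t • e (m + 1) := by
  rw [traj, tsum_eq_sum (s := {m, m + 1}), Finset.sum_pair (by omega)]
  intro k hk
  simp only [Finset.mem_insert, Finset.mem_singleton, not_or] at hk
  rcases lt_or_gt_of_ne hk.1 with h | h
  · rw [profile_of_stage_add_two_le (hlow k h), zero_smul]
  · rw [profile_of_le_stage (ht.trans (stage_strictMono.monotone (by omega))), zero_smul]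

lemma exists_epoch {m : ℕ} (hm : stage (m + 1) ≤ t) (ht : t < 1) :
    ∃ n, m ≤ n ∧ stage (n + 1) ≤ t ∧ t ≤ stage (n + 2) := by
  classical
  have hex : ∃ n, t < stage (n + 2) := by
    obtain ⟨N, hN⟩ := exists_lt_stage ht
    exact ⟨N, hN.trans (stage_strictMono (by omega))⟩
  refine ⟨Nat.find hex, ?_, ?_, (Nat.find_spec hex).le⟩
  · by_contra! h
    linarith [Nat.find_spec hex, stage_strictMono.monotone (show Nat.find hex + 2 ≤ m + 1 by omega)]
  · cases hn : Nat.find hex with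
    | zero => exact (stage_strictMono.monotone (by omega)).trans hm
    | succ k => simpa using Nat.find_min hex (m := k) (by omega)

lemma traj_stage_succ (n : ℕ) : traj e (stage (n + 1)) = e n := by
  have := width_pos n
  rw [traj_eq_pair e (m := n) (fun k hk => stage_strictMono.monotone (by omega))
      (stage_strictMono.monotone (by omega)),
    profile_eq_one (by rw [stage_succ]; linarith) (by rw [stage_succ]; linarith),
    profile_of_le_stage le_rfl, one_smul, zero_smul, add_zero]

lemma norm_profile_smul_le (he : ∀ n, ‖e n‖ = 1) (k : ℕ) (t : ℝ) :
    ‖profile k t • e k‖ ≤ profile k t := by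
  rw [norm_smul, he, mul_one, Real.norm_of_nonneg (profile_mem_Icc k t).1]

lemma norm_traj_le (he : ∀ n, ‖e n‖ = 1) (ht : t < 1) : ‖traj e t‖ ≤ 2 := by
  obtain ⟨m, hlow, hup⟩ : ∃ m, (∀ k < m, stage (k + 2) ≤ t) ∧ t ≤ stage (m + 2) := by
    rcases lt_or_ge t (stage 1) with h | h
    · exact ⟨0, by simp, (h.trans (stage_strictMono (by norm_num))).le⟩
    · obtain ⟨n, -, h₁, h₂⟩ := exists_epoch (m := 0) h ht
      exact ⟨n, fun k hk => (stage_strictMono.monotone (by omega)).trans h₁, h₂⟩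
  rw [traj_eq_pair e hlow hup]
  linarith [norm_add_le (profile m t • e m) (profile (m + 1) t • e (m + 1)),
    norm_profile_smul_le e he m t, norm_profile_smul_le e he (m + 1) t,
    (profile_mem_Icc m t).2, (profile_mem_Icc (m + 1) t).2]

end Trajectory

namespace IsRieszSeq

variable {X : Type*} [NormedAddCommGroup X] [NormedSpace ℝ X] {e : ℕ → X} {α t : ℝ}

lemma one_div_eight_le_norm_traj_sub (he : IsRieszSeq e) {n : ℕ} (h₁ : stage (n + 1) ≤ t)
    (h₂ : t ≤ stage (n + 2)) {z : X} (hz : z ∈ Submodule.span ℝ (e '' Iio n)) :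
    1 / 8 ≤ ‖traj e t - z‖ := by
  rw [traj_eq_pair e (fun k hk => (stage_strictMono.monotone (by omega)).trans h₁) h₂]
  rcases le_or_gt (1 / 4) (profile (n + 1) t) with hbig | hsmall
  · have hz' : profile n t • e n - z ∈ Submodule.span ℝ (e '' Iio (n + 1)) :=
      sub_mem (Submodule.smul_mem _ _ (Submodule.subset_span ⟨n, n.lt_succ_self, rfl⟩))
        (Submodule.span_mono (image_mono (Iio_subset_Iio n.le_succ)) hz)
    have hsep := he.half_mul_le_norm_smul_add (by linarith) hz'
    rw [show profile n t • e n + profile (n + 1) t • e (n + 1) - z =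
      profile (n + 1) t • e (n + 1) + (profile n t • e n - z) by abel]
    linarith
  · have hn : profile n t = 1 := (profile_eq_one_or h₁ h₂).resolve_right (by linarith)
    rw [hn, one_smul, show e n + profile (n + 1) t • e (n + 1) - z =
      (e n - z) - -(profile (n + 1) t • e (n + 1)) by abel]
    have htri := norm_sub_norm_le (e n - z) (-(profile (n + 1) t • e (n + 1)))
    rw [norm_neg] at htri
    linarith [he.half_le_norm_sub n z hz, norm_profile_smul_le e he.norm_eq_one (n + 1) t]

lemma one_div_eight_le_norm_traj_sub_traj (he : IsRieszSeq e) {m : ℕ} {s₁ s₂ : ℝ}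
    (h₁ : s₁ ≤ stage m) (h₂ : stage (m + 1) ≤ s₂) (hs₂ : s₂ < 1) :
    1 / 8 ≤ ‖traj e s₂ - traj e s₁‖ := by
  obtain ⟨n, hmn, hn₁, hn₂⟩ := exists_epoch h₂ hs₂
  exact he.one_div_eight_le_norm_traj_sub hn₁ hn₂
    (Submodule.span_mono (image_mono (Iio_subset_Iio hmn)) (traj_mem_span e h₁))

lemma exists_le_norm_sub_traj (he : IsRieszSeq e) (x₀ : X) :
    ∃ N, ∀ s, stage N ≤ s → s < 1 → 1 / 16 ≤ ‖x₀ - traj e s‖ := by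
  by_cases h : ∃ s₁ < 1, ‖x₀ - traj e s₁‖ < 1 / 16
  · obtain ⟨s₁, hs₁, hx₀⟩ := h
    obtain ⟨m, hm⟩ := exists_lt_stage hs₁
    refine ⟨m + 1, fun s hs hs1 => ?_⟩
    have := he.one_div_eight_le_norm_traj_sub_traj hm.le hs hs1
    have := norm_sub_le_norm_sub_add_norm_sub (traj e s) x₀ (traj e s₁)
    rw [norm_sub_rev (traj e s) x₀] at this
    linarith
  · push Not at h
    exact ⟨0, fun s _ hs => h s hs⟩

lemma norm_source_ge (he : IsRieszSeq e) (hα₀ : 0 < α) (hα₁ : α < 1) (n : ℕ) :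
    Real.Gamma α / betaConst α * width n ^ (-α) / 2 ≤ ‖source e α (stage n + width n)‖ := by
  have hw := width_pos n
  have hpos : 0 < Real.Gamma α / betaConst α * width n ^ (-α) := by
    have := Real.Gamma_pos_of_pos hα₀
    have := betaConst_pos hα₀ hα₁
    positivity
  rw [source_eq_sum e hα₁ (N := n + 1) (by rw [stage_succ]; linarith), Finset.sum_range_succ,
    add_comm, profileSource_stage_add_width hα₁]
  exact he.half_mul_le_norm_smul_add hpos (Submodule.sum_mem _ fun k hk =>
    Submodule.smul_mem _ _ (Submodule.subset_span ⟨k, by simpa using hk, rfl⟩))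

lemma not_isBounded_source (he : IsRieszSeq e) (hα₀ : 0 < α) (hα₁ : α < 1) :
    ¬ Bornology.IsBounded (source e α '' Ico 0 1) := by
  intro hb
  obtain ⟨C, hC⟩ := hb.exists_norm_le
  have hgrow : Tendsto (fun n => Real.Gamma α / betaConst α * width n ^ (-α) / 2) atTop atTop :=
    (((tendsto_rpow_neg_nhdsGT_zero (neg_lt_zero.mpr hα₀)).comp tendsto_width).const_mul_atTop
      (div_pos (Real.Gamma_pos_of_pos hα₀) (betaConst_pos hα₀ hα₁))).atTop_div_const two_pos
  obtain ⟨n, hn⟩ := (hgrow.eventually_gt_atTop C).exists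
  have hmem : stage n + width n ∈ Ico (0 : ℝ) 1 := by
    have := stage_lt_one (n + 1)
    rw [stage_succ] at this
    exact ⟨by linarith [stage_nonneg n, width_pos n], by linarith [width_pos n]⟩
  linarith [hC _ (mem_image_of_mem _ hmem), he.norm_source_ge hα₀ hα₁ n]

lemma not_exists_continuousOn_extension_traj (he : IsRieszSeq e) :
    ¬ ∃ v : ℝ → X, ContinuousOn v (Icc 0 1) ∧ ∀ s ∈ Ico (0 : ℝ) 1, v s = traj e s := by
  rintro ⟨v, hv, hvu⟩
  refine he.not_tendsto (v 1) ?_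
  have hstage : Tendsto (fun n => stage (n + 1)) atTop (𝓝[Icc 0 1] 1) :=
    tendsto_nhdsWithin_iff.mpr ⟨tendsto_stage.comp (tendsto_add_atTop_nat 1),
      .of_forall fun n => ⟨stage_nonneg _, (stage_lt_one _).le⟩⟩
  refine ((hv 1 ⟨zero_le_one, le_rfl⟩).tendsto.comp hstage).congr fun n => ?_
  simp only [Function.comp, hvu _ ⟨stage_nonneg _, stage_lt_one _⟩, traj_stage_succ]

end IsRieszSeq

section Forcing

variable {X : Type*} [NormedAddCommGroup X] [NormedSpace ℝ X] (e : ℕ → X) {α : ℝ}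

def forcing (α s : ℝ) (x : X) : X :=
  if s < 1 then max (1 - 32 * ‖x - traj e s‖) 0 • source e α s else 0

lemma forcing_traj {s : ℝ} (hs : s < 1) : forcing e α s (traj e s) = source e α s := by
  simp [forcing, hs]

lemma norm_forcing_sub_le {s : ℝ} (hs : s < 1) (x y : X) :
    ‖forcing e α s x - forcing e α s y‖ ≤ 32 * ‖source e α s‖ * ‖x - y‖ := by
  simp only [forcing, if_pos hs, ← sub_smul, norm_smul, Real.norm_eq_abs]
  have hmax := abs_max_sub_max_le_abs (1 - 32 * ‖x - traj e s‖) (1 - 32 * ‖y - traj e s‖) 0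
  have hnorm := abs_norm_sub_norm_le (x - traj e s) (y - traj e s)
  rw [sub_sub_sub_cancel_right] at hnorm
  rw [show 1 - 32 * ‖x - traj e s‖ - (1 - 32 * ‖y - traj e s‖) =
    -(32 * (‖x - traj e s‖ - ‖y - traj e s‖)) by ring, abs_neg, abs_mul,
    abs_of_pos (by norm_num : (0 : ℝ) < 32)] at hmax
  calc _ ≤ 32 * ‖x - y‖ * ‖source e α s‖ :=
        mul_le_mul_of_nonneg_right (by linarith) (norm_nonneg _)
    _ = _ := by ring

lemma forcing_eventuallyEq {t₀ : ℝ} (ht₀ : t₀ < 1) (x₀ : X) :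
    (fun p : ℝ × X => forcing e α p.1 p.2) =ᶠ[𝓝 (t₀, x₀)]
      fun p => max (1 - 32 * ‖p.2 - traj e p.1‖) 0 • source e α p.1 := by
  filter_upwards [continuousAt_fst.preimage_mem_nhds (Iio_mem_nhds ht₀)] with p hp
  exact if_pos hp

lemma traj_eq_riemannLiouville [CompleteSpace X] (hα₀ : 0 < α) (hα₁ : α < 1) {t : ℝ}
    (h₀ : 0 ≤ t) (h₁ : t < 1) :
    traj e t = riemannLiouville α (fun r => forcing e α r (traj e r)) t := by
  obtain ⟨N, hN⟩ := exists_lt_stage h₁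
  rw [riemannLiouville_congr h₀ (g' := fun r => ∑ k ∈ Finset.range N, profileSource α k r • e k)
      fun r hr => by rw [forcing_traj e (hr.2.trans_lt h₁), source_eq_sum e hα₁ (hr.2.trans hN.le)],
    riemannLiouville_finset_sum_smul hα₀ _ (fun k _ => continuous_profileSource hα₁ k),
    traj_eq_sum e hN.le]
  exact Finset.sum_congr rfl fun k _ => by rw [riemannLiouville_profileSource hα₀ hα₁ k h₀]

namespace IsRieszSeq

variable {e}

lemma forcing_eventually_eq_zero (he : IsRieszSeq e) {t₀ : ℝ} (ht₀ : 1 ≤ t₀) (x₀ : X) :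
    ∀ᶠ p : ℝ × X in 𝓝 (t₀, x₀), forcing e α p.1 p.2 = 0 := by
  obtain ⟨N, hN⟩ := he.exists_le_norm_sub_traj x₀
  filter_upwards [prod_mem_nhds (Ioi_mem_nhds ((stage_lt_one N).trans_le ht₀))
    (Metric.ball_mem_nhds x₀ (by norm_num : (0 : ℝ) < 1 / 32))] with ⟨s, x⟩ ⟨hs, hx⟩
  dsimp only at hs hx ⊢
  unfold forcing
  split_ifs with hs₁
  · have hfar := hN s (le_of_lt hs) hs₁
    have htri := norm_sub_le_norm_sub_add_norm_sub x₀ x (traj e s)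
    rw [norm_sub_rev x₀ x] at htri
    rw [max_eq_right (by linarith [mem_ball_iff_norm.mp hx]), zero_smul]
  · rfl

lemma continuous_forcing (he : IsRieszSeq e) (hα₁ : α < 1) :
    Continuous fun p : ℝ × X => forcing e α p.1 p.2 := by
  refine continuous_iff_continuousAt.mpr fun ⟨t₀, x₀⟩ => ?_
  rcases lt_or_ge t₀ 1 with h | h
  · have hu := (continuousAt_traj e h).comp (continuousAt_fst (p := (t₀, x₀)))
    have hG := (continuousAt_source e hα₁ h).comp (continuousAt_fst (p := (t₀, x₀)))
    refine ContinuousAt.congr ?_ (forcing_eventuallyEq (α := α) e h x₀).symm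
    exact ((continuousAt_const.sub (continuousAt_const.mul (continuousAt_snd.sub hu).norm)).max
      continuousAt_const).smul hG
  · have hzero : (fun p : ℝ × X => forcing e α p.1 p.2) =ᶠ[𝓝 (t₀, x₀)] fun _ => 0 :=
      he.forcing_eventually_eq_zero h x₀
    exact continuousAt_const.congr hzero.symm

lemma locally_lipschitz_forcing (he : IsRieszSeq e) (hα₁ : α < 1) (t₀ : ℝ) (x₀ : X) :
    ∃ L > (0 : ℝ), ∃ r > (0 : ℝ), ∀ (s : ℝ) (x y : X),
      dist (s, x) (t₀, x₀) < r → dist (s, y) (t₀, x₀) < r →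
        ‖forcing e α s x - forcing e α s y‖ ≤ L * ‖x - y‖ := by
  rcases lt_or_ge t₀ 1 with h | h
  · set C := ‖source e α t₀‖ + 1
    have hev : ∀ᶠ p : ℝ × X in 𝓝 (t₀, x₀), p.1 < 1 ∧ ‖source e α p.1‖ < C :=
      (continuousAt_fst (p := (t₀, x₀))).eventually
        ((eventually_lt_nhds h).and ((continuousAt_source e hα₁ h).norm.eventually
          (eventually_lt_nhds (lt_add_one _))))
    obtain ⟨r, hr, hball⟩ := Metric.eventually_nhds_iff.mp hev
    refine ⟨32 * C, by positivity, r, hr, fun s x y hx _ => ?_⟩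
    obtain ⟨hs, hC⟩ := hball hx
    calc ‖forcing e α s x - forcing e α s y‖ ≤ 32 * ‖source e α s‖ * ‖x - y‖ :=
          norm_forcing_sub_le e hs x y
      _ ≤ 32 * C * ‖x - y‖ := by gcongr
  · obtain ⟨r, hr, hball⟩ :=
      Metric.eventually_nhds_iff.mp (he.forcing_eventually_eq_zero (α := α) h x₀)
    exact ⟨1, one_pos, r, hr, fun s x y hx hy => by simp [hball hx, hball hy]⟩

end IsRieszSeq

end Forcing

end

end FractionalBlowUp

open FractionalBlowUp in
/-- For `α ∈ (0,1)` and `X` an infinite-dimensional real Banach space, there exist an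
initial value `u₀`, a continuous locally Lipschitz `f : [0,∞) × X → X` which does not map
every bounded set into a bounded set, and a bounded continuous maximal local solution
`u : [0,1) → X` of the fractional Cauchy problem (in Volterra integral form) which admits
no continuous extension to `[0,1]`. -/
theorem absence_of_blow_up_counterexample
    (α : ℝ) (hα : α ∈ Set.Ioo (0 : ℝ) 1)
    (X : Type*) [NormedAddCommGroup X] [NormedSpace ℝ X] [CompleteSpace X]
    (hX : ¬ FiniteDimensional ℝ X) :
    ∃ (u₀ : X) (f : ℝ → X → X) (u : ℝ → X),
      -- f is continuous on [0,∞) × X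
      ContinuousOn (fun p : ℝ × X => f p.1 p.2) (Set.Ici 0 ×ˢ Set.univ) ∧
      -- f is locally Lipschitz (in the second variable, locally in both)
      (∀ t₀ ∈ Set.Ici (0 : ℝ), ∀ x₀ : X, ∃ L > (0 : ℝ), ∃ r > (0 : ℝ),
        ∀ (s : ℝ) (x y : X), s ∈ Set.Ici (0 : ℝ) →
          dist (s, x) (t₀, x₀) < r → dist (s, y) (t₀, x₀) < r →
          ‖f s x - f s y‖ ≤ L * ‖x - y‖) ∧
      -- f does not map every bounded subset of [0,∞) × X into a bounded subset of X
      (∃ S : Set (ℝ × X), S ⊆ Set.Ici 0 ×ˢ Set.univ ∧ Bornology.IsBounded S ∧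
        ¬ Bornology.IsBounded ((fun p : ℝ × X => f p.1 p.2) '' S)) ∧
      -- u is a bounded continuous function on [0,1) with u(0) = u₀
      ContinuousOn u (Set.Ico 0 1) ∧
      Bornology.IsBounded (u '' Set.Ico 0 1) ∧
      u 0 = u₀ ∧
      -- u solves the Volterra integral equation on [0,1)
      (∀ s ∈ Set.Ico (0 : ℝ) 1,
        u s = u₀ + (1 / Real.Gamma α) •
          ∫ r in (0 : ℝ)..s, ((s - r) ^ (α - 1)) • f r (u r)) ∧
      -- u admits no continuous extension to [0,1]
      ¬ ∃ v : ℝ → X, ContinuousOn v (Set.Icc 0 1) ∧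
        ∀ s ∈ Set.Ico (0 : ℝ) 1, v s = u s := by
  obtain ⟨hα₀, hα₁⟩ := hα
  obtain ⟨e, he⟩ := exists_isRieszSeq hX
  have hbdd : Bornology.IsBounded (traj e '' Ico 0 1) :=
    (Metric.isBounded_closedBall (x := (0 : X)) (r := 2)).subset <| by
      rintro _ ⟨s, hs, rfl⟩
      simpa using norm_traj_le e he.norm_eq_one hs.2
  refine ⟨0, forcing e α, traj e, (he.continuous_forcing hα₁).continuousOn,
    fun t₀ _ x₀ => ?_, ⟨(fun s => (s, traj e s)) '' Ico 0 1, ?_, ?_, ?_⟩,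
    fun t ht => (continuousAt_traj e ht.2).continuousWithinAt, hbdd, traj_zero e,
    fun s hs => by rw [zero_add]; exact traj_eq_riemannLiouville e hα₀ hα₁ hs.1 hs.2,
    he.not_exists_continuousOn_extension_traj⟩
  · obtain ⟨L, hL, r, hr, hlip⟩ := he.locally_lipschitz_forcing hα₁ t₀ x₀
    exact ⟨L, hL, r, hr, fun s x y _ => hlip s x y⟩
  · rintro _ ⟨s, hs, rfl⟩
    exact ⟨hs.1, trivial⟩
  · refine (Metric.isBounded_Icc (0 : ℝ) 1).prod hbdd |>.subset ?_
    rintro _ ⟨s, hs, rfl⟩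
    exact ⟨Ico_subset_Icc_self hs, mem_image_of_mem _ hs⟩
  · refine fun hb => he.not_isBounded_source hα₀ hα₁ (hb.subset ?_)
    rintro _ ⟨s, hs, rfl⟩
    exact ⟨(s, traj e s), mem_image_of_mem _ hs, forcing_traj e hs.2⟩
end

section
/- Let α ∈ (0,1), X a real Banach space, u₀ ∈ X, and let f : [0,∞) × X → X be continuous and locally Lipschitz. Then there exists τ > 0 and a continuous function u : [0,τ] → X with u(t) = u₀ + (1/Γ(α)) ∫_0^t (t−s)^{α−1} f(s, u(s)) ds for all t ∈ [0,τ]; moreover this solution is unique: any continuous v : [0,τ] → X satisfying the same integral equation on [0,τ] coincides with u. -/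
/-!
Picard iteration for the Volterra equation. Near `(0, u₀)` the field `f` is `L`-Lipschitz and
bounded by `M` on `[0, R] × B̄(u₀, R)`. Since the Riemann–Liouville integral satisfies
`‖I^α g (t)‖ ≤ t^α sup ‖g‖ / Γ(α + 1)`, for `τ` small the Volterra operator maps the closed
`R`-ball around `u₀` in `C([0, τ], X)` into itself and is a contraction there, so Banach's fixed
point theorem gives the solution. Any other continuous solution is trapped in the open ball: at the
first time it reached the sphere the same bound would put it strictly inside. Hence it is a fixed
point of the same contraction, and coincides with the first one.
-/

open Set Filter Topology MeasureTheory intervalIntegral Metric Function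
open scoped NNReal

section KernelIntegrals

variable {X : Type*} [NormedAddCommGroup X] [NormedSpace ℝ X] {α t : ℝ}

lemma intervalIntegrable_sub_rpow (hα : 0 < α) (t : ℝ) :
    IntervalIntegrable (fun s => (t - s) ^ (α - 1)) volume 0 t := by
  simpa using
    ((intervalIntegrable_rpow' (r := α - 1) (a := 0) (b := t) (by linarith)).comp_sub_left t).symm

lemma integral_sub_rpow (hα : 0 < α) (t : ℝ) :
    ∫ s in (0 : ℝ)..t, (t - s) ^ (α - 1) = t ^ α / α := by
  rw [integral_comp_sub_left (fun s => s ^ (α - 1)), sub_self, sub_zero,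
    integral_rpow (Or.inl (by linarith)), sub_add_cancel, Real.zero_rpow hα.ne', sub_zero]

lemma norm_integral_sub_rpow_smul_le (hα : 0 < α) (ht : 0 ≤ t) {g : ℝ → X} {M : ℝ}
    (hg : ∀ s ∈ Ioo 0 t, ‖g s‖ ≤ M) :
    ‖∫ s in (0 : ℝ)..t, (t - s) ^ (α - 1) • g s‖ ≤ t ^ α / α * M := by
  calc ‖∫ s in (0 : ℝ)..t, (t - s) ^ (α - 1) • g s‖
      ≤ ∫ s in (0 : ℝ)..t, (t - s) ^ (α - 1) * M := by
        refine norm_integral_le_of_norm_le ht ?_ ((intervalIntegrable_sub_rpow hα t).mul_const M)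
        filter_upwards [volume.ae_ne t] with s hst hs
        rw [norm_smul, Real.norm_of_nonneg (Real.rpow_nonneg (sub_nonneg.2 hs.2) _)]
        exact mul_le_mul_of_nonneg_left (hg s ⟨hs.1, hs.2.lt_of_ne hst⟩)
          (Real.rpow_nonneg (sub_nonneg.2 hs.2) _)
    _ = t ^ α / α * M := by rw [intervalIntegral.integral_mul_const, integral_sub_rpow hα]

lemma intervalIntegrable_sub_rpow_smul (hα : 0 < α) {g : ℝ → X} (hg : ContinuousOn g (Icc 0 t))
    (ht : 0 ≤ t) : IntervalIntegrable (fun s => (t - s) ^ (α - 1) • g s) volume 0 t :=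
  (intervalIntegrable_sub_rpow hα t).smul_continuousOn (by rwa [uIcc_of_le ht])

/-- Substituting `s = t - t σ` fixes the domain of integration, so that continuity in `t` becomes a
matter of dominated convergence. -/
lemma integral_sub_rpow_smul_eq_rpow_smul_integral (hα : 0 < α) (g : ℝ → X) (ht : 0 ≤ t) :
    ∫ s in (0 : ℝ)..t, (t - s) ^ (α - 1) • g s =
      t ^ α • ∫ σ in (0 : ℝ)..1, σ ^ (α - 1) • g (t - t * σ) := by
  rcases ht.eq_or_lt with rfl | ht
  · simp [Real.zero_rpow hα.ne']
  have hsubst := integral_comp_sub_mul (a := 0) (b := 1) (fun s => (t - s) ^ (α - 1) • g s) ht.ne' t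
  rw [mul_one, mul_zero, sub_self, sub_zero] at hsubst
  have hscale : ∫ σ in (0 : ℝ)..1, (t - (t - t * σ)) ^ (α - 1) • g (t - t * σ) =
      t ^ (α - 1) • ∫ σ in (0 : ℝ)..1, σ ^ (α - 1) • g (t - t * σ) := by
    rw [← intervalIntegral.integral_smul]
    refine integral_congr fun σ hσ => ?_
    rw [uIcc_of_le zero_le_one] at hσ
    simp only [sub_sub_cancel, Real.mul_rpow ht.le hσ.1, mul_smul]
  calc ∫ s in (0 : ℝ)..t, (t - s) ^ (α - 1) • g s
      = t • t⁻¹ • ∫ s in (0 : ℝ)..t, (t - s) ^ (α - 1) • g s := (smul_inv_smul₀ ht.ne' _).symm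
    _ = t ^ α • ∫ σ in (0 : ℝ)..1, σ ^ (α - 1) • g (t - t * σ) := by
      rw [← hsubst, hscale, smul_smul, ← Real.rpow_one_add' ht.le (by linarith), add_sub_cancel]

lemma mem_Icc_sub_mul {T σ : ℝ} (ht : t ∈ Icc 0 T) (hσ : σ ∈ Icc (0 : ℝ) 1) :
    t - t * σ ∈ Icc 0 T :=
  ⟨by nlinarith [ht.1, hσ.2], by nlinarith [ht.1, ht.2, hσ.1]⟩

lemma continuousOn_integral_rpow_smul_comp (hα : 0 < α) {g : ℝ → X} {T : ℝ}
    (hg : ContinuousOn g (Icc 0 T)) :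
    ContinuousOn (fun t => ∫ σ in (0 : ℝ)..1, σ ^ (α - 1) • g (t - t * σ)) (Icc 0 T) := by
  intro t₀ ht₀
  obtain ⟨C, hC⟩ := isCompact_Icc.exists_bound_of_continuousOn hg
  have hσ : ∀ σ ∈ uIoc (0 : ℝ) 1, σ ∈ Icc (0 : ℝ) 1 := fun σ hσ => by
    rw [uIoc_of_le zero_le_one] at hσ; exact Ioc_subset_Icc_self hσ
  refine continuousWithinAt_of_dominated_interval (bound := fun σ => σ ^ (α - 1) * C) ?_ ?_
    ((intervalIntegrable_rpow' (by linarith)).mul_const C) ?_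
  · filter_upwards [self_mem_nhdsWithin] with t ht
    refine (Measurable.pow_const measurable_id _).aestronglyMeasurable.smul
      ((hg.comp (by fun_prop) fun σ hσ' => mem_Icc_sub_mul ht (hσ σ hσ')).aestronglyMeasurable
        measurableSet_uIoc)
  · filter_upwards [self_mem_nhdsWithin] with t ht
    refine ae_of_all _ fun σ hσ' => ?_
    rw [norm_smul, Real.norm_of_nonneg (Real.rpow_nonneg (hσ σ hσ').1 _)]
    exact mul_le_mul_of_nonneg_left (hC _ (mem_Icc_sub_mul ht (hσ σ hσ')))
      (Real.rpow_nonneg (hσ σ hσ').1 _)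
  · refine ae_of_all _ fun σ hσ' => continuousWithinAt_const.smul ?_
    exact ContinuousWithinAt.comp (g := g) (f := fun t => t - t * σ)
      (hg _ (mem_Icc_sub_mul ht₀ (hσ σ hσ'))) (by fun_prop : Continuous fun t : ℝ =>
      t - t * σ).continuousWithinAt fun t ht => mem_Icc_sub_mul ht (hσ σ hσ')

end KernelIntegrals

section RiemannLiouville

variable {X : Type*} [NormedAddCommGroup X] [NormedSpace ℝ X] {α t : ℝ} {g g₁ g₂ : ℝ → X}

noncomputable def riemannLiouville (α : ℝ) (g : ℝ → X) (t : ℝ) : X :=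
  (1 / Real.Gamma α) • ∫ s in (0 : ℝ)..t, (t - s) ^ (α - 1) • g s

lemma norm_riemannLiouville_le (hα : 0 < α) (ht : 0 ≤ t) {M : ℝ}
    (hg : ∀ s ∈ Ioo 0 t, ‖g s‖ ≤ M) :
    ‖riemannLiouville α g t‖ ≤ t ^ α * M / Real.Gamma (α + 1) := by
  have hΓ := Real.Gamma_pos_of_pos hα
  rw [riemannLiouville, norm_smul, Real.norm_of_nonneg (by positivity),
    Real.Gamma_add_one hα.ne']
  calc 1 / Real.Gamma α * ‖∫ s in (0 : ℝ)..t, (t - s) ^ (α - 1) • g s‖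
      ≤ 1 / Real.Gamma α * (t ^ α / α * M) := by
        gcongr; exact norm_integral_sub_rpow_smul_le hα ht hg
    _ = t ^ α * M / (α * Real.Gamma α) := by field_simp

lemma riemannLiouville_sub (hα : 0 < α) (ht : 0 ≤ t) (hg₁ : ContinuousOn g₁ (Icc 0 t))
    (hg₂ : ContinuousOn g₂ (Icc 0 t)) :
    riemannLiouville α g₁ t - riemannLiouville α g₂ t =
      riemannLiouville α (fun s => g₁ s - g₂ s) t := by
  rw [riemannLiouville, riemannLiouville, riemannLiouville, ← smul_sub,
    ← integral_sub (intervalIntegrable_sub_rpow_smul hα hg₁ ht)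
      (intervalIntegrable_sub_rpow_smul hα hg₂ ht)]
  simp only [smul_sub]

lemma riemannLiouville_congr (ht : 0 ≤ t) (h : EqOn g₁ g₂ (Icc 0 t)) :
    riemannLiouville α g₁ t = riemannLiouville α g₂ t := by
  rw [riemannLiouville, riemannLiouville, integral_congr fun s hs => ?_]
  rw [uIcc_of_le ht] at hs
  simp only [h hs]

lemma continuousOn_riemannLiouville (hα : 0 < α) {T : ℝ} (hg : ContinuousOn g (Icc 0 T)) :
    ContinuousOn (riemannLiouville α g) (Icc 0 T) := by
  refine ((continuousOn_const (c := 1 / Real.Gamma α)).smul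
    ((Real.continuous_rpow_const hα.le).continuousOn.smul
      (continuousOn_integral_rpow_smul_comp hα hg))).congr fun t ht => ?_
  rw [riemannLiouville, integral_sub_rpow_smul_eq_rpow_smul_integral hα g ht.1]
  rfl

end RiemannLiouville

lemma ContinuousOn.forall_lt_of_forall_Ico_le {ι β : Type*} [ConditionallyCompleteLinearOrder ι]
    [TopologicalSpace ι] [OrderTopology ι] [LinearOrder β] [TopologicalSpace β]
    [OrderClosedTopology β] {φ : ι → β} {a b : ι} {R : β} (hφ : ContinuousOn φ (Icc a b))
    (hstep : ∀ t ∈ Icc a b, (∀ s ∈ Ico a t, φ s ≤ R) → φ t < R) :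
    ∀ t ∈ Icc a b, φ t < R := by
  by_contra! ⟨t, ht, hRt⟩
  have hbad : IsCompact (Icc a b ∩ φ ⁻¹' Ici R) := isCompact_Icc.of_isClosed_subset
    (hφ.preimage_isClosed_of_isClosed isClosed_Icc isClosed_Ici) inter_subset_left
  obtain ⟨t₀, ⟨ht₀, hRt₀⟩, hleast⟩ := hbad.exists_isLeast ⟨t, ht, hRt⟩
  refine (hstep t₀ ht₀ fun s hs => ?_).not_ge hRt₀
  by_contra! hRs
  exact hs.2.not_ge (hleast ⟨⟨hs.1, hs.2.le.trans ht₀.2⟩, hRs.le⟩)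

theorem LipschitzOnWith.existsUnique_isFixedPt {E : Type*} [MetricSpace E] {f : E → E}
    {s : Set E} {K : ℝ≥0} (hf : LipschitzOnWith K f s) (hK : K < 1) (hs : IsComplete s)
    (hne : s.Nonempty) (hmaps : MapsTo f s s) : ∃! x, x ∈ s ∧ IsFixedPt f x := by
  obtain ⟨x, hx⟩ := hne
  have hc : ContractingWith K (hmaps.restrict f s s) :=
    ⟨hK, LipschitzWith.of_dist_le_mul fun a b => hf.dist_le_mul a a.2 b b.2⟩
  obtain ⟨y, hys, hy, -⟩ := hc.exists_fixedPoint' hs hmaps hx (edist_ne_top _ _)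
  refine ⟨y, ⟨hys, hy⟩, fun z ⟨hzs, hz⟩ => dist_le_zero.1 ?_⟩
  have hzy := hf.dist_le_mul z hzs y hys
  rw [hz.eq, hy.eq] at hzy
  have hK' : (K : ℝ) < 1 := hK
  nlinarith [dist_nonneg (x := z) (y := y)]

lemma IccExtend_mem_closedBall {ι E : Type*} [ConditionallyCompleteLinearOrder ι]
    [TopologicalSpace ι] [OrderTopology ι] [PseudoMetricSpace E] {a b : ι} (hab : a ≤ b)
    {w : C(Icc a b, E)} {x : E} {R : ℝ} (hw : w ∈ closedBall (ContinuousMap.const _ x) R) (s : ι) :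
    IccExtend hab w s ∈ closedBall x R :=
  (ContinuousMap.dist_apply_le_dist _).trans hw

lemma continuousOn_comp_IccExtend {X Y : Type*} [TopologicalSpace X] [TopologicalSpace Y]
    {f : ℝ → X → Y} {τ : ℝ} (hτ : 0 ≤ τ) (hf : ContinuousOn (uncurry f) (Icc 0 τ ×ˢ univ))
    (w : C(Icc 0 τ, X)) : ContinuousOn (fun s => f s (IccExtend hτ w s)) (Icc 0 τ) :=
  hf.comp (continuousOn_id.prodMk w.continuous.Icc_extend'.continuousOn)
    fun _ hs => ⟨hs, mem_univ _⟩

section Picard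

variable {X : Type*} [NormedAddCommGroup X] [NormedSpace ℝ X] {α τ R M : ℝ} {f : ℝ → X → X}
  {u₀ : X} {u : ℝ → X}

/-- The Volterra form of the Caputo problem `ᶜD^α u = f(t, u)`, `u(0) = u₀`, on `[0, τ]`. -/
def IsCaputoSolution (α : ℝ) (f : ℝ → X → X) (u₀ : X) (τ : ℝ) (u : ℝ → X) : Prop :=
  ContinuousOn u (Icc 0 τ) ∧ ∀ t ∈ Icc 0 τ, u t = u₀ + riemannLiouville α (fun s => f s (u s)) t

lemma IsCaputoSolution.mem_ball (hu : IsCaputoSolution α f u₀ τ u) (hα : 0 < α) (hM₀ : 0 ≤ M)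
    (hM : ∀ s ∈ Icc 0 τ, ∀ x ∈ closedBall u₀ R, ‖f s x‖ ≤ M)
    (hτM : τ ^ α * M / Real.Gamma (α + 1) < R) : ∀ t ∈ Icc 0 τ, u t ∈ ball u₀ R := by
  refine (continuous_dist.comp_continuousOn
    (hu.1.prodMk continuousOn_const)).forall_lt_of_forall_Ico_le fun t ht hle => ?_
  rw [Function.comp_apply, hu.2 t ht, dist_self_add_left]
  calc _ ≤ t ^ α * M / Real.Gamma (α + 1) := norm_riemannLiouville_le hα ht.1
        fun s hs => hM s ⟨hs.1.le, hs.2.le.trans ht.2⟩ _ (hle s ⟨hs.1.le, hs.2⟩)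
    _ ≤ τ ^ α * M / Real.Gamma (α + 1) := by gcongr; exacts [ht.1, ht.2]
    _ < R := hτM

noncomputable def picardMap (hα : 0 < α) (hτ : 0 ≤ τ)
    (hf : ContinuousOn (uncurry f) (Icc 0 τ ×ˢ univ)) (u₀ : X) (w : C(Icc 0 τ, X)) :
    C(Icc 0 τ, X) :=
  ⟨(Icc 0 τ).domRestrict fun t => u₀ + riemannLiouville α (fun s => f s (IccExtend hτ w s)) t,
    (continuousOn_const.add (continuousOn_riemannLiouville hα
      (continuousOn_comp_IccExtend hτ hf w))).domRestrict⟩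

section PicardMap

variable (hα : 0 < α) (hτ : 0 ≤ τ) (hf : ContinuousOn (uncurry f) (Icc 0 τ ×ˢ univ))

lemma picardMap_apply (w : C(Icc 0 τ, X)) (p : Icc 0 τ) :
    picardMap hα hτ hf u₀ w p = u₀ + riemannLiouville α (fun s => f s (IccExtend hτ w s)) p :=
  rfl

lemma picardMap_mapsTo (hM₀ : 0 ≤ M) (hM : ∀ s ∈ Icc 0 τ, ∀ x ∈ closedBall u₀ R, ‖f s x‖ ≤ M)
    (hτM : τ ^ α * M / Real.Gamma (α + 1) ≤ R) :
    MapsTo (picardMap hα hτ hf u₀) (closedBall (ContinuousMap.const _ u₀) R)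
      (closedBall (ContinuousMap.const _ u₀) R) := by
  intro w hw
  refine (ContinuousMap.dist_le (dist_nonneg.trans hw)).2 fun p => ?_
  rw [picardMap_apply, ContinuousMap.const_apply, dist_self_add_left]
  calc _ ≤ (p : ℝ) ^ α * M / Real.Gamma (α + 1) := norm_riemannLiouville_le hα p.2.1
        fun s hs => hM s ⟨hs.1.le, hs.2.le.trans p.2.2⟩ _ (IccExtend_mem_closedBall hτ hw s)
    _ ≤ τ ^ α * M / Real.Gamma (α + 1) := by gcongr; exacts [p.2.1, p.2.2]
    _ ≤ R := hτM

lemma picardMap_lipschitzOnWith {L : ℝ≥0}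
    (hL : ∀ s ∈ Icc 0 τ, LipschitzOnWith L (f s) (closedBall u₀ R)) :
    LipschitzOnWith (τ ^ α * L / Real.Gamma (α + 1)).toNNReal (picardMap hα hτ hf u₀)
      (closedBall (ContinuousMap.const _ u₀) R) := by
  refine LipschitzOnWith.of_dist_le' fun w₁ hw₁ w₂ hw₂ =>
    (ContinuousMap.dist_le (by positivity)).2 fun p => ?_
  have hIcc : Icc 0 (p : ℝ) ⊆ Icc 0 τ := Icc_subset_Icc_right p.2.2
  rw [picardMap_apply, picardMap_apply, dist_add_left, dist_eq_norm,
    riemannLiouville_sub hα p.2.1 ((continuousOn_comp_IccExtend hτ hf w₁).mono hIcc)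
      ((continuousOn_comp_IccExtend hτ hf w₂).mono hIcc)]
  calc _ ≤ (p : ℝ) ^ α * (L * dist w₁ w₂) / Real.Gamma (α + 1) :=
        norm_riemannLiouville_le hα p.2.1 fun s hs => by
          rw [← dist_eq_norm]
          refine ((hL s (hIcc (Ioo_subset_Icc_self hs))).dist_le_mul _
            (IccExtend_mem_closedBall hτ hw₁ s) _ (IccExtend_mem_closedBall hτ hw₂ s)).trans ?_
          gcongr
          exact ContinuousMap.dist_apply_le_dist _
    _ ≤ τ ^ α * (L * dist w₁ w₂) / Real.Gamma (α + 1) := by gcongr; exacts [p.2.1, p.2.2]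
    _ = τ ^ α * L / Real.Gamma (α + 1) * dist w₁ w₂ := by ring

lemma isCaputoSolution_IccExtend {w : C(Icc 0 τ, X)} (hw : IsFixedPt (picardMap hα hτ hf u₀) w) :
    IsCaputoSolution α f u₀ τ (IccExtend hτ w) :=
  ⟨w.continuous.Icc_extend'.continuousOn, fun t ht => by
    rw [IccExtend_of_mem hτ w ht]
    exact (DFunLike.congr_fun hw _).symm⟩

lemma IsCaputoSolution.isFixedPt_picardMap (hu : IsCaputoSolution α f u₀ τ u) :
    IsFixedPt (picardMap hα hτ hf u₀) ⟨(Icc 0 τ).domRestrict u, hu.1.domRestrict⟩ :=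
  ContinuousMap.ext fun p => by
    rw [picardMap_apply, riemannLiouville_congr (g₂ := fun s => f s (u s)) p.2.1 fun s hs => by
      rw [IccExtend_of_mem hτ _ (Icc_subset_Icc_right p.2.2 hs)]; rfl]
    exact (hu.2 p p.2).symm

end PicardMap

theorem existsUnique_isCaputoSolution [CompleteSpace X] {L : ℝ≥0} (hα : 0 < α) (hτ : 0 ≤ τ)
    (hf : ContinuousOn (uncurry f) (Icc 0 τ ×ˢ univ)) (hR : 0 ≤ R)
    (hM : ∀ s ∈ Icc 0 τ, ∀ x ∈ closedBall u₀ R, ‖f s x‖ ≤ M)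
    (hL : ∀ s ∈ Icc 0 τ, LipschitzOnWith L (f s) (closedBall u₀ R))
    (hτM : τ ^ α * M / Real.Gamma (α + 1) < R) (hτL : τ ^ α * L / Real.Gamma (α + 1) < 1) :
    ∃ u, IsCaputoSolution α f u₀ τ u ∧
      ∀ v, IsCaputoSolution α f u₀ τ v → EqOn v u (Icc 0 τ) := by
  have hM₀ : 0 ≤ M := (norm_nonneg _).trans (hM 0 ⟨le_rfl, hτ⟩ u₀ (mem_closedBall_self hR))
  obtain ⟨w, ⟨-, hw⟩, huniq⟩ := (picardMap_lipschitzOnWith hα hτ hf hL).existsUnique_isFixedPt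
    (Real.toNNReal_lt_one.2 hτL) isClosed_closedBall.isComplete ⟨_, mem_closedBall_self hR⟩
    (picardMap_mapsTo hα hτ hf hM₀ hM hτM.le)
  refine ⟨IccExtend hτ w, isCaputoSolution_IccExtend hα hτ hf hw, fun v hv t ht => ?_⟩
  have hvw := huniq _ ⟨(ContinuousMap.dist_le hR).2 fun p => (hv.mem_ball hα hM₀ hM hτM p p.2).le,
    hv.isFixedPt_picardMap hα hτ hf⟩
  rw [IccExtend_of_mem hτ w ht, ← hvw]
  rfl

end Picard

lemma LipschitzOnWith.norm_le_add_mul {E F : Type*} [SeminormedAddCommGroup E]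
    [SeminormedAddCommGroup F] {g : E → F} {K : ℝ≥0} {c x : E} {R : ℝ}
    (hg : LipschitzOnWith K g (closedBall c R)) (hx : x ∈ closedBall c R) :
    ‖g x‖ ≤ ‖g c‖ + K * R := by
  calc ‖g x‖ ≤ ‖g c‖ + ‖g x - g c‖ := norm_le_norm_add_norm_sub' _ _
    _ ≤ ‖g c‖ + K * R := by
      rw [← dist_eq_norm]
      gcongr
      exact (hg.dist_le_mul x hx c (mem_closedBall_self (dist_nonneg.trans hx))).trans
        (by gcongr; exact hx)

lemma lipschitzOnWith_closedBall_of_dist_lt {X : Type*} [NormedAddCommGroup X] {f : ℝ → X → X}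
    {u₀ : X} {L r R s : ℝ} (hRr : R < r)
    (hlip : ∀ (s : ℝ) (x y : X), s ∈ Ici 0 → dist (s, x) (0, u₀) < r → dist (s, y) (0, u₀) < r →
      ‖f s x - f s y‖ ≤ L * ‖x - y‖) (hs : s ∈ Icc 0 R) :
    LipschitzOnWith L.toNNReal (f s) (closedBall u₀ R) := by
  have hbox : ∀ x ∈ closedBall u₀ R, dist (s, x) (0, u₀) < r := fun x hx => by
    rw [Prod.dist_eq, Real.dist_eq, sub_zero, abs_of_nonneg hs.1]
    exact max_lt (hs.2.trans_lt hRr) (hx.trans_lt hRr)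
  refine LipschitzOnWith.of_dist_le' fun x hx y hy => ?_
  simpa only [dist_eq_norm] using hlip s x y hs.1 (hbox x hx) (hbox y hy)

lemma eventually_rpow_mul_lt {α : ℝ} (hα : 0 < α) (C : ℝ) {ε : ℝ} (hε : 0 < ε) :
    ∀ᶠ τ in 𝓝[>] 0, τ ^ α * C < ε := by
  have hcont : ContinuousAt (fun τ : ℝ => τ ^ α * C) 0 :=
    (Real.continuousAt_rpow_const 0 α (Or.inr hα.le)).mul continuousAt_const
  refine nhdsWithin_le_nhds (hcont.eventually (gt_mem_nhds ?_))
  show (0 : ℝ) ^ α * C < ε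
  rwa [Real.zero_rpow hα.ne', zero_mul]

/-- Local existence and uniqueness for the fractional Cauchy problem in Volterra form:
if `f` is continuous and locally Lipschitz then there is `τ > 0` and a unique continuous
solution of the integral equation on `[0,τ]`. -/
theorem fractional_local_existence_uniqueness
    (α : ℝ) (hα : α ∈ Set.Ioo (0 : ℝ) 1)
    (X : Type*) [NormedAddCommGroup X] [NormedSpace ℝ X] [CompleteSpace X]
    (u₀ : X) (f : ℝ → X → X)
    (hf_cont : ContinuousOn (fun p : ℝ × X => f p.1 p.2) (Set.Ici 0 ×ˢ Set.univ))
    (hf_lip : ∀ t₀ ∈ Set.Ici (0 : ℝ), ∀ x₀ : X, ∃ L > (0 : ℝ), ∃ r > (0 : ℝ),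
      ∀ (s : ℝ) (x y : X), s ∈ Set.Ici (0 : ℝ) →
        dist (s, x) (t₀, x₀) < r → dist (s, y) (t₀, x₀) < r →
        ‖f s x - f s y‖ ≤ L * ‖x - y‖) :
    ∃ τ > (0 : ℝ), ∃ u : ℝ → X,
      ContinuousOn u (Set.Icc 0 τ) ∧
      (∀ s ∈ Set.Icc (0 : ℝ) τ,
        u s = u₀ + (1 / Real.Gamma α) •
          ∫ r in (0 : ℝ)..s, ((s - r) ^ (α - 1)) • f r (u r)) ∧
      (∀ v : ℝ → X, ContinuousOn v (Set.Icc 0 τ) →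
        (∀ s ∈ Set.Icc (0 : ℝ) τ,
          v s = u₀ + (1 / Real.Gamma α) •
            ∫ r in (0 : ℝ)..s, ((s - r) ^ (α - 1)) • f r (v r)) →
        ∀ s ∈ Set.Icc (0 : ℝ) τ, v s = u s) := by
  obtain ⟨hα₀, -⟩ := hα
  obtain ⟨L, -, r, hr, hlip⟩ := hf_lip 0 self_mem_Ici u₀
  set R := r / 2
  have hR : 0 < R := half_pos hr
  have hL : ∀ s ∈ Icc 0 R, LipschitzOnWith L.toNNReal (f s) (closedBall u₀ R) :=
    fun s hs => lipschitzOnWith_closedBall_of_dist_lt (half_lt_self hr) hlip hs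
  obtain ⟨M₀, hM₀⟩ := isCompact_Icc.exists_bound_of_continuousOn (s := Icc 0 R)
    (hf_cont.comp (continuousOn_id.prodMk continuousOn_const) fun s hs => ⟨hs.1, mem_univ u₀⟩)
  set M := M₀ + L.toNNReal * R
  have hM : ∀ s ∈ Icc 0 R, ∀ x ∈ closedBall u₀ R, ‖f s x‖ ≤ M := fun s hs x hx =>
    ((hL s hs).norm_le_add_mul hx).trans (add_le_add_left (hM₀ s hs) _)
  obtain ⟨τ, hτM, hτL, hτ₀, hτR⟩ :=
    ((eventually_rpow_mul_lt hα₀ (M / Real.Gamma (α + 1)) hR).and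
      ((eventually_rpow_mul_lt hα₀ (L.toNNReal / Real.Gamma (α + 1)) one_pos).and
        (Ioc_mem_nhdsGT hR))).exists
  rw [← mul_div_assoc] at hτM hτL
  obtain ⟨u, hu, huniq⟩ := existsUnique_isCaputoSolution hα₀ hτ₀.le
    (hf_cont.mono (prod_mono Icc_subset_Ici_self subset_rfl)) hR.le
    (fun s hs => hM s ⟨hs.1, hs.2.trans hτR⟩) (fun s hs => hL s ⟨hs.1, hs.2.trans hτR⟩) hτM hτL
  exact ⟨τ, hτ₀, u, hu.1, hu.2, fun v hv hveq => huniq v ⟨hv, hveq⟩⟩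
end

section
/- Under the standing construction, the function u : [0,1) → X defined by u(t) := Σ_{n=1}^∞ z_n(t) v_n is well defined (for each t ∈ [0,1) at most four terms of the series are nonzero; in fact for t ∈ [t_k, t_{k+1}) with k ≥ 4 one has u(t) = v₁ + z_{k−1}(t) v_{k−1} + z_k(t) v_k + z_{k+1}(t) v_{k+1}), u is continuous on [0,1), and ‖u(t)‖ ≤ 4 for all t ∈ [0,1). -/
open Set Filter

/-- Under the standing construction, `u(t) := Σ_{n≥1} z_n(t) v_n` is well defined (for each
`t ∈ [0,1)` at most four terms are nonzero, and for `t ∈ [t_k, t_{k+1})` with `k ≥ 4` one has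
`u(t) = v₁ + z_{k-1}(t) v_{k-1} + z_k(t) v_k + z_{k+1}(t) v_{k+1}`), `u` is continuous on
`[0,1)`, and `‖u(t)‖ ≤ 4` for all `t ∈ [0,1)`. -/
theorem standing_construction_solution_bounded
    (α : ℝ) (hα : α ∈ Set.Ioo (0 : ℝ) 1)
    (X : Type*) [NormedAddCommGroup X] [NormedSpace ℝ X] [CompleteSpace X]
    (t : ℕ → ℝ) (z : ℕ → ℝ → ℝ) (v : ℕ → X)
    (ht_mem : ∀ n, 1 ≤ n → t n ∈ Set.Ioo (0 : ℝ) 1)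
    (ht_mono : ∀ n, 1 ≤ n → t n < t (n + 1))
    (ht_lim : Filter.Tendsto t Filter.atTop (nhds 1))
    (ht_step : ∀ n, 2 ≤ n → t (n + 1) - t n < t n - t (n - 1))
    (hz1 : ∀ s : ℝ, z 1 s = 1)
    (hz_smooth : ∀ n, 2 ≤ n → ContDiff ℝ 1 (z n))
    (hz_one : ∀ n, 2 ≤ n → ∀ s ∈ Set.Icc (t n) (t (n + 1)), z n s = 1)
    (hz_mid : ∀ n, 2 ≤ n → ∀ s ∈ Set.Ioo ((t (n - 1) + t n) / 2) (t n) ∪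
        Set.Ioo (t (n + 1)) ((t (n + 1) + t (n + 2)) / 2),
      0 < z n s ∧ z n s < 1)
    (hz_zero : ∀ n, 2 ≤ n → ∀ s : ℝ,
      s ∉ Set.Ioo ((t (n - 1) + t n) / 2) ((t (n + 1) + t (n + 2)) / 2) → z n s = 0)
    (hz_deriv_nonneg : ∀ n, 2 ≤ n →
      ∀ s ∈ Set.Icc ((t (n - 1) + t n) / 2) (t n), 0 ≤ deriv (z n) s)
    (hz_deriv_nonpos : ∀ n, 2 ≤ n →
      ∀ s ∈ Set.Icc (t (n + 1)) ((t (n + 1) + t (n + 2)) / 2), deriv (z n) s ≤ 0)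
    (hv : ∀ n, 1 ≤ n → ‖v n‖ = 1) :
    ∀ u : ℝ → X, (∀ s : ℝ, u s = ∑' n : ℕ, z (n + 1) s • v (n + 1)) →
      (∀ s ∈ Set.Ico (0 : ℝ) 1, Summable (fun n : ℕ => z (n + 1) s • v (n + 1))) ∧
      (∀ s ∈ Set.Ico (0 : ℝ) 1,
        {n : ℕ | z (n + 1) s • v (n + 1) ≠ 0}.Finite ∧
        {n : ℕ | z (n + 1) s • v (n + 1) ≠ 0}.ncard ≤ 4) ∧
      (∀ k, 4 ≤ k → ∀ s ∈ Set.Ico (t k) (t (k + 1)),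
        u s = v 1 + z (k - 1) s • v (k - 1) + z k s • v k + z (k + 1) s • v (k + 1)) ∧
      ContinuousOn u (Set.Ico 0 1) ∧
      (∀ s ∈ Set.Ico (0 : ℝ) 1, ‖u s‖ ≤ 4) := by
  classical
  intro u hu
  -- strict monotonicity of t on indices ≥ 1
  have tlt : ∀ a b : ℕ, 1 ≤ a → a < b → t a < t b := by
    intro a b ha hab
    induction b with
    | zero => omega
    | succ b ih =>
      rcases Nat.lt_succ_iff_lt_or_eq.mp hab with h | h
      · exact (ih h).trans (ht_mono b (by omega))
      · subst h; exact ht_mono a ha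
  have tle : ∀ a b : ℕ, 1 ≤ a → a ≤ b → t a ≤ t b := by
    intro a b ha hab
    rcases eq_or_lt_of_le hab with rfl | h
    · exact le_rfl
    · exact (tlt a b ha h).le
  -- support of z n
  have supp : ∀ n : ℕ, 2 ≤ n → ∀ s : ℝ, z n s ≠ 0 →
      (t (n-1) + t n)/2 < s ∧ s < (t (n+1) + t (n+2))/2 := by
    intro n hn s hz
    by_contra hcon
    apply hz
    apply hz_zero n hn s
    intro hmem
    exact hcon ⟨hmem.1, hmem.2⟩
  have consec : ∀ (s : ℝ) (n k : ℕ), 2 ≤ n → n < k → z n s ≠ 0 → z k s ≠ 0 → k = n + 1 := by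
    intro s n k hn hnk hzn hzk
    by_contra hne
    obtain ⟨_, h1⟩ := supp n hn s hzn
    obtain ⟨h2, _⟩ := supp k (by omega) s hzk
    have e1 : t (n+1) ≤ t (k-1) := tle _ _ (by omega) (by omega)
    have e2 : t (n+2) ≤ t k := tle _ _ (by omega) (by omega)
    linarith
  have zbound : ∀ n : ℕ, 1 ≤ n → ∀ s : ℝ, 0 ≤ z n s ∧ z n s ≤ 1 := by
    intro n hn s
    rcases eq_or_lt_of_le hn with h | h
    · rw [← h, hz1 s]; norm_num
    · by_cases hmem : (t (n-1) + t n)/2 < s ∧ s < (t (n+1) + t (n+2))/2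
      · rcases lt_or_ge s (t n) with hlt | hge
        · have := hz_mid n h s (Set.mem_union_left _ ⟨hmem.1, hlt⟩)
          exact ⟨this.1.le, this.2.le⟩
        · rcases le_or_gt s (t (n+1)) with hle | hgt
          · rw [hz_one n h s ⟨hge, hle⟩]; norm_num
          · have := hz_mid n h s (Set.mem_union_right _ ⟨hgt, hmem.2⟩)
            exact ⟨this.1.le, this.2.le⟩
      · rw [hz_zero n h s (fun hc => hmem ⟨hc.1, hc.2⟩)]; norm_num
  have vanish : ∀ N : ℕ, 1 ≤ N → ∀ s : ℝ, s < t N → ∀ n : ℕ, N ≤ n →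
      z (n+1) s • v (n+1) = 0 := by
    intro N hN s hs n hn
    rcases eq_or_ne (z (n+1) s) 0 with h | h
    · rw [h, zero_smul]
    · exfalso
      obtain ⟨h1, _⟩ := supp (n+1) (by omega) s h
      simp only [Nat.add_sub_cancel] at h1
      have e1 : t N ≤ t n := tle N n hN hn
      have e2 : t n < t (n+1) := tlt n (n+1) (by omega) (by omega)
      linarith
  have exN : ∀ s : ℝ, s < 1 → ∃ N : ℕ, 1 ≤ N ∧ s < t N := by
    intro s hs
    have h1 : ∀ᶠ n in Filter.atTop, s < t n := ht_lim.eventually (eventually_gt_nhds hs)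
    obtain ⟨N, hN1, hN2⟩ := (h1.and (Filter.eventually_ge_atTop 1)).exists
    exact ⟨N, hN2, hN1⟩
  have key : ∀ s ∈ Set.Ico (0:ℝ) 1, ∃ F : Finset ℕ, F.card ≤ 3 ∧
      {n : ℕ | z (n+1) s • v (n+1) ≠ 0} ⊆ ↑F := by
    intro s _
    by_cases h : ∃ n : ℕ, n ≠ 0 ∧ z (n+1) s • v (n+1) ≠ 0
    · set a := Nat.find h with ha
      obtain ⟨ha0, haz⟩ := Nat.find_spec h
      refine ⟨{0, a, a+1}, ?_, ?_⟩
      · have c1 := Finset.card_insert_le 0 ({a, a+1} : Finset ℕ)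
        have c2 := Finset.card_insert_le a ({a+1} : Finset ℕ)
        have c3 : ({a+1} : Finset ℕ).card = 1 := Finset.card_singleton _
        omega
      · intro n hn
        simp only [Set.mem_setOf_eq] at hn
        simp only [Finset.coe_insert, Finset.coe_singleton, Set.mem_insert_iff,
          Set.mem_singleton_iff]
        by_contra hc
        push_neg at hc
        obtain ⟨h0, hA, hA1⟩ := hc
        have hal : a ≤ n := Nat.find_min' h ⟨h0, hn⟩
        have hz_a : z (a+1) s ≠ 0 := fun hzz => haz (by rw [hzz, zero_smul])
        have hz_n : z (n+1) s ≠ 0 := fun hzz => hn (by rw [hzz, zero_smul])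
        have := consec s (a+1) (n+1) (by omega) (by omega) hz_a hz_n
        omega
    · push_neg at h
      refine ⟨{0}, by simp, ?_⟩
      intro n hn
      simp only [Set.mem_setOf_eq] at hn
      simp only [Finset.coe_singleton, Set.mem_singleton_iff]
      by_contra h0
      exact hn (h n h0)
  refine ⟨?_, ?_, ?_, ?_, ?_⟩
  · -- summability
    intro s hs
    obtain ⟨F, hF, hsub⟩ := key s hs
    exact summable_of_ne_finset_zero (s := F) (fun n hn => by
      by_contra hc
      exact hn (hsub hc))
  · -- finite support of cardinality ≤ 4
    intro s hs
    obtain ⟨F, hF, hsub⟩ := key s hs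
    have hfin : {n : ℕ | z (n+1) s • v (n+1) ≠ 0}.Finite :=
      Set.Finite.subset F.finite_toSet hsub
    refine ⟨hfin, ?_⟩
    calc {n : ℕ | z (n+1) s • v (n+1) ≠ 0}.ncard
        ≤ (↑F : Set ℕ).ncard := Set.ncard_le_ncard hsub F.finite_toSet
      _ = F.card := Set.ncard_coe_finset F
      _ ≤ 4 := by omega
  · -- explicit formula
    intro k hk s hs
    have hzero : ∀ n ∉ ({0, k-2, k-1, k} : Finset ℕ), z (n+1) s • v (n+1) = 0 := by
      intro n hn
      simp only [Finset.mem_insert, Finset.mem_singleton] at hn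
      push_neg at hn
      obtain ⟨hn0, hnk2, hnk1, hnk⟩ := hn
      rcases eq_or_ne (z (n+1) s) 0 with h | h
      · rw [h, zero_smul]
      · exfalso
        obtain ⟨h1, h2⟩ := supp (n+1) (by omega) s h
        simp only [Nat.add_sub_cancel, show n+1+1 = n+2 from rfl,
          show n+1+2 = n+3 from rfl] at h1 h2
        have e1 : t n < t (n+1) := tlt _ _ (by omega) (by omega)
        have e2 : t (n+2) < t (n+3) := tlt _ _ (by omega) (by omega)
        have hklt : k < n + 3 := by
          by_contra hcc
          have : t (n+3) ≤ t k := tle _ _ (by omega) (by omega)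
          linarith [hs.1]
        have hnlt : n < k + 1 := by
          by_contra hcc
          have : t (k+1) ≤ t n := tle _ _ (by omega) (by omega)
          linarith [hs.2]
        omega
    rw [hu s, tsum_eq_sum hzero]
    have h02 : (0:ℕ) ∉ ({k-2, k-1, k} : Finset ℕ) := by simp; omega
    have h2' : (k-2) ∉ ({k-1, k} : Finset ℕ) := by simp; omega
    have h1' : (k-1) ∉ ({k} : Finset ℕ) := by simp; omega
    rw [Finset.sum_insert h02, Finset.sum_insert h2', Finset.sum_insert h1',
      Finset.sum_singleton]
    have e1 : k - 2 + 1 = k - 1 := by omega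
    have e2 : k - 1 + 1 = k := by omega
    rw [e1, e2, show (0:ℕ)+1 = 1 from rfl, hz1 s, one_smul]
    abel
  · -- continuity
    intro s₀ hs₀
    obtain ⟨N, hN1, hN2⟩ := exN s₀ hs₀.2
    have hopen : Set.Iio (t N) ∈ nhds s₀ := Iio_mem_nhds hN2
    have heq : u =ᶠ[nhds s₀] fun s => ∑ n ∈ Finset.range N, z (n+1) s • v (n+1) := by
      filter_upwards [hopen] with s hsN
      rw [hu s]
      exact tsum_eq_sum (fun n hn =>
        vanish N hN1 s hsN n (le_of_not_gt (by simpa using hn)))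
    have hcont : ContinuousAt (fun s => ∑ n ∈ Finset.range N, z (n+1) s • v (n+1)) s₀ := by
      apply Continuous.continuousAt
      apply continuous_finset_sum
      intro n _
      refine Continuous.smul ?_ continuous_const
      rcases Nat.eq_zero_or_pos n with rfl | hpos
      · have hz1' : z (0+1) = fun _ => (1:ℝ) := funext hz1
        rw [hz1']
        exact continuous_const
      · exact (hz_smooth (n+1) (by omega)).continuous
    exact (hcont.congr heq.symm).continuousWithinAt
  · -- norm bound
    intro s hs
    obtain ⟨F, hF, hsub⟩ := key s hs
    have hz0 : ∀ n ∉ F, z (n+1) s • v (n+1) = 0 := fun n hn => by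
      by_contra hc; exact hn (hsub hc)
    rw [hu s, tsum_eq_sum hz0]
    have hcard : (F.card : ℝ) ≤ 3 := by exact_mod_cast hF
    calc ‖∑ n ∈ F, z (n+1) s • v (n+1)‖
        ≤ ∑ n ∈ F, ‖z (n+1) s • v (n+1)‖ := norm_sum_le _ _
      _ ≤ ∑ _n ∈ F, (1:ℝ) := by
          apply Finset.sum_le_sum
          intro n _
          rw [norm_smul, hv (n+1) (by omega), mul_one, Real.norm_eq_abs]
          have h := zbound (n+1) (by omega) s
          rw [abs_le]
          constructor <;> linarith [h.1, h.2]
      _ = F.card := by simp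
      _ ≤ 4 := by linarith
end

section
/- Under the standing construction, assume additionally that there are continuous linear functionals V_n* : X → ℝ with ‖V_n*‖ ≤ 1 and V_n*(v_m) = δ_{nm} for all n,m. Let u : [0,1) → X be u(t) := Σ_{n=1}^∞ z_n(t) v_n and set σ_n := (t_n + t_{n+1})/2. Then u(σ_n) = v₁ + v_n for every n ≥ 2, ‖u(σ_n) − u(σ_m)‖ = ‖v_n − v_m‖ ≥ 1 for all n ≠ m with n,m ≥ 2, the limit lim_{t→1⁻} u(t) does not exist, and there is no continuous function v : [0,1] → X with v(t) = u(t) for all t ∈ [0,1). -/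
open Set Filter Topology

/-!
At `σ_n = (t_n + t_{n+1})/2` only the bumps `z_1` and `z_n` are nonzero, so `u(σ_n) = v_1 + v_n`.
Since `‖V_n‖ ≤ 1` and `V_n (v_n - v_m) = 1`, distinct points `v_n`, `v_m` are at distance at
least `1`. Hence `u(σ_n)` does not converge although `σ_n ↑ 1`, so `u` has no left limit at `1`,
and a fortiori no continuous extension to `[0,1]`.
-/

lemma one_le_norm_of_apply_eq_one {E : Type*} [SeminormedAddCommGroup E] [NormedSpace ℝ E]
    {φ : E →L[ℝ] ℝ} (hφ : ‖φ‖ ≤ 1) {x : E} (hx : φ x = 1) : 1 ≤ ‖x‖ :=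
  calc (1 : ℝ) = ‖φ x‖ := by rw [hx, norm_one]
    _ ≤ ‖φ‖ * ‖x‖ := φ.le_opNorm x
    _ ≤ ‖x‖ := mul_le_of_le_one_left (norm_nonneg x) hφ

lemma tsum_eq_add_of_eq_zero_of_ne {M : Type*} [AddCommMonoid M] [TopologicalSpace M]
    {f : ℕ → M} {a b : ℕ} (hab : a ≠ b) (hf : ∀ j, j ≠ a → j ≠ b → f j = 0) :
    ∑' j, f j = f a + f b := by
  rw [tsum_eq_sum (s := {a, b}) fun j hj ↦ ?_, Finset.sum_pair hab]
  simp only [Finset.mem_insert, Finset.mem_singleton, not_or] at hj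
  exact hf j hj.1 hj.2

lemma not_tendsto_of_le_dist_succ {X : Type*} [PseudoMetricSpace X] {f : ℕ → X} {ε : ℝ}
    (hε : 0 < ε) (hf : ∀ n, ε ≤ dist (f n) (f (n + 1))) (L : X) :
    ¬ Tendsto f atTop (𝓝 L) := fun hL ↦ by
  have h := hL.dist (hL.comp (tendsto_add_atTop_nat 1))
  rw [dist_self] at h
  exact hε.not_ge (ge_of_tendsto' h hf)

lemma not_tendsto_nhdsLT_of_le_dist_succ {X : Type*} [PseudoMetricSpace X] {u : ℝ → X}
    {a : ℝ} {σ : ℕ → ℝ} (hσ_lt : ∀ n, σ n < a) (hσ : Tendsto σ atTop (𝓝 a)) {ε : ℝ}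
    (hε : 0 < ε) (hu : ∀ n, ε ≤ dist (u (σ n)) (u (σ (n + 1)))) (L : X) :
    ¬ Tendsto u (𝓝[<] a) (𝓝 L) := fun hL ↦
  not_tendsto_of_le_dist_succ hε hu L <|
    hL.comp (tendsto_nhdsWithin_of_tendsto_nhds_of_eventually_within σ hσ (.of_forall hσ_lt))

lemma ContinuousOn.tendsto_nhdsLT_of_eqOn {X : Type*} [TopologicalSpace X] {w u : ℝ → X}
    {a b : ℝ} (hab : a < b) (hw : ContinuousOn w (Icc a b)) (hwu : EqOn w u (Ico a b)) :
    Tendsto u (𝓝[<] b) (𝓝 (w b)) := by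
  have h : ContinuousWithinAt w (Ico a b) b :=
    (hw b (right_mem_Icc.2 hab.le)).mono Ico_subset_Icc_self
  rw [ContinuousWithinAt, nhdsWithin_Ico_eq_nhdsLT hab] at h
  exact h.congr' (eventuallyEq_of_mem (Ico_mem_nhdsLT hab) hwu)

section Bumps

variable {t : ℕ → ℝ}

lemma midpoint_notMem_Ioo_of_ne (ht : ∀ n, 1 ≤ n → t n ≤ t (n + 1)) {n k : ℕ}
    (hn : 1 ≤ n) (hkn : k ≠ n) :
    (t n + t (n + 1)) / 2 ∉ Ioo ((t (k - 1) + t k) / 2) ((t (k + 1) + t (k + 2)) / 2) := by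
  have hmono := Nat.rel_of_forall_rel_succ_of_le_of_le (· ≤ ·) ht
  rintro ⟨hleft, hright⟩
  rcases Nat.lt_or_gt_of_ne hkn with hlt | hgt
  · have h₁ : t (k + 1) ≤ t n := hmono (by omega) (by omega)
    have h₂ : t (k + 2) ≤ t (n + 1) := hmono (by omega) (by omega)
    linarith
  · have h₁ : t n ≤ t (k - 1) := hmono hn (by omega)
    have h₂ : t (n + 1) ≤ t k := hmono (by omega) (by omega)
    linarith

lemma tsum_smul_apply_midpoint {X : Type*} [NormedAddCommGroup X] [NormedSpace ℝ X]
    {z : ℕ → ℝ → ℝ} (v : ℕ → X) (ht : ∀ n, 1 ≤ n → t n ≤ t (n + 1)) (hz1 : ∀ s, z 1 s = 1)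
    (hz_one : ∀ n, 2 ≤ n → ∀ s ∈ Icc (t n) (t (n + 1)), z n s = 1)
    (hz_zero : ∀ n, 2 ≤ n → ∀ s : ℝ,
      s ∉ Ioo ((t (n - 1) + t n) / 2) ((t (n + 1) + t (n + 2)) / 2) → z n s = 0)
    {n : ℕ} (hn : 2 ≤ n) :
    ∑' k : ℕ, z (k + 1) ((t n + t (n + 1)) / 2) • v (k + 1) = v 1 + v n := by
  have hσ : (t n + t (n + 1)) / 2 ∈ Icc (t n) (t (n + 1)) := by
    have := ht n (by omega)
    constructor <;> linarith
  rw [tsum_eq_add_of_eq_zero_of_ne (a := 0) (b := n - 1) (by omega) fun j hj0 hjn ↦ ?_,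
    Nat.sub_add_cancel (by omega : 1 ≤ n), hz1, hz_one n hn _ hσ, one_smul, one_smul]
  rw [hz_zero (j + 1) (by omega) _ (midpoint_notMem_Ioo_of_ne ht (by omega) (by omega)),
    zero_smul]

end Bumps

theorem standing_construction_no_extension_general
    (X : Type*) [NormedAddCommGroup X] [NormedSpace ℝ X]
    (t : ℕ → ℝ) (z : ℕ → ℝ → ℝ) (v : ℕ → X) (V : ℕ → X →L[ℝ] ℝ)
    (ht_mem : ∀ n, 1 ≤ n → t n ∈ Set.Ioo (0 : ℝ) 1)
    (ht_mono : ∀ n, 1 ≤ n → t n < t (n + 1))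
    (ht_lim : Filter.Tendsto t Filter.atTop (nhds 1))
    (hz1 : ∀ s : ℝ, z 1 s = 1)
    (hz_one : ∀ n, 2 ≤ n → ∀ s ∈ Set.Icc (t n) (t (n + 1)), z n s = 1)
    (hz_zero : ∀ n, 2 ≤ n → ∀ s : ℝ,
      s ∉ Set.Ioo ((t (n - 1) + t n) / 2) ((t (n + 1) + t (n + 2)) / 2) → z n s = 0)
    (hV_norm : ∀ n, 1 ≤ n → ‖V n‖ ≤ 1)
    (hV_biorth : ∀ n m, 1 ≤ n → 1 ≤ m → V n (v m) = if n = m then 1 else 0) :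
    ∀ u : ℝ → X, (∀ s : ℝ, u s = ∑' n : ℕ, z (n + 1) s • v (n + 1)) →
      (∀ n, 2 ≤ n → u ((t n + t (n + 1)) / 2) = v 1 + v n) ∧
      (∀ n m, 2 ≤ n → 2 ≤ m → n ≠ m →
        ‖u ((t n + t (n + 1)) / 2) - u ((t m + t (m + 1)) / 2)‖ = ‖v n - v m‖ ∧
        1 ≤ ‖v n - v m‖) ∧
      (¬ ∃ L : X, Filter.Tendsto u (nhdsWithin 1 (Set.Iio 1)) (nhds L)) ∧
      (¬ ∃ w : ℝ → X, ContinuousOn w (Set.Icc 0 1) ∧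
        ∀ s ∈ Set.Ico (0 : ℝ) 1, w s = u s) := by
  intro u hu
  have hmid : ∀ n, 2 ≤ n → u ((t n + t (n + 1)) / 2) = v 1 + v n := fun n hn ↦
    (hu _).trans <|
      tsum_smul_apply_midpoint v (fun k hk ↦ (ht_mono k hk).le) hz1 hz_one hz_zero hn
  have hsep : ∀ n m, 2 ≤ n → 2 ≤ m → n ≠ m →
      ‖u ((t n + t (n + 1)) / 2) - u ((t m + t (m + 1)) / 2)‖ = ‖v n - v m‖ ∧
      1 ≤ ‖v n - v m‖ := by
    intro n m hn hm hnm
    refine ⟨by rw [hmid n hn, hmid m hm, add_sub_add_left_eq_sub],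
      one_le_norm_of_apply_eq_one (hV_norm n (by omega)) ?_⟩
    rw [map_sub, hV_biorth n n (by omega) (by omega), hV_biorth n m (by omega) (by omega),
      if_pos rfl, if_neg hnm, sub_zero]
  have hnolim : ¬ ∃ L : X, Tendsto u (𝓝[<] 1) (𝓝 L) := by
    rintro ⟨L, hL⟩
    refine not_tendsto_nhdsLT_of_le_dist_succ (σ := fun n ↦ (t (n + 2) + t (n + 2 + 1)) / 2)
      (fun n ↦ ?_) ?_ one_pos (fun n ↦ ?_) L hL
    · linarith [(ht_mem (n + 2) (by omega)).2, (ht_mem (n + 2 + 1) (by omega)).2]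
    · have h := (ht_lim.comp (tendsto_add_atTop_nat 2)).add
        (ht_lim.comp (tendsto_add_atTop_nat 3)) |>.div_const 2
      norm_num at h
      exact h
    · obtain ⟨heq, hge⟩ := hsep (n + 2) (n + 1 + 2) (by omega) (by omega) (by omega)
      rwa [dist_eq_norm, heq]
  exact ⟨hmid, hsep, hnolim, fun ⟨w, hw, hwu⟩ ↦
    hnolim ⟨w 1, hw.tendsto_nhdsLT_of_eqOn zero_lt_one hwu⟩⟩

/-- Under the standing construction with biorthogonal functionals, `u(σ_n) = v₁ + v_n`
for `σ_n = (t_n + t_{n+1})/2` and `n ≥ 2`, `‖u(σ_n) - u(σ_m)‖ = ‖v_n - v_m‖ ≥ 1` for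
`n ≠ m`, the limit of `u(t)` as `t → 1⁻` does not exist, and `u` has no continuous
extension to `[0,1]`. -/
theorem standing_construction_no_extension
    (α : ℝ) (hα : α ∈ Set.Ioo (0 : ℝ) 1)
    (X : Type*) [NormedAddCommGroup X] [NormedSpace ℝ X] [CompleteSpace X]
    (t : ℕ → ℝ) (z : ℕ → ℝ → ℝ) (v : ℕ → X) (V : ℕ → X →L[ℝ] ℝ)
    (ht_mem : ∀ n, 1 ≤ n → t n ∈ Set.Ioo (0 : ℝ) 1)
    (ht_mono : ∀ n, 1 ≤ n → t n < t (n + 1))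
    (ht_lim : Filter.Tendsto t Filter.atTop (nhds 1))
    (ht_step : ∀ n, 2 ≤ n → t (n + 1) - t n < t n - t (n - 1))
    (hz1 : ∀ s : ℝ, z 1 s = 1)
    (hz_smooth : ∀ n, 2 ≤ n → ContDiff ℝ 1 (z n))
    (hz_one : ∀ n, 2 ≤ n → ∀ s ∈ Set.Icc (t n) (t (n + 1)), z n s = 1)
    (hz_mid : ∀ n, 2 ≤ n → ∀ s ∈ Set.Ioo ((t (n - 1) + t n) / 2) (t n) ∪
        Set.Ioo (t (n + 1)) ((t (n + 1) + t (n + 2)) / 2),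
      0 < z n s ∧ z n s < 1)
    (hz_zero : ∀ n, 2 ≤ n → ∀ s : ℝ,
      s ∉ Set.Ioo ((t (n - 1) + t n) / 2) ((t (n + 1) + t (n + 2)) / 2) → z n s = 0)
    (hz_deriv_nonneg : ∀ n, 2 ≤ n →
      ∀ s ∈ Set.Icc ((t (n - 1) + t n) / 2) (t n), 0 ≤ deriv (z n) s)
    (hz_deriv_nonpos : ∀ n, 2 ≤ n →
      ∀ s ∈ Set.Icc (t (n + 1)) ((t (n + 1) + t (n + 2)) / 2), deriv (z n) s ≤ 0)
    (hv : ∀ n, 1 ≤ n → ‖v n‖ = 1)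
    (hV_norm : ∀ n, 1 ≤ n → ‖V n‖ ≤ 1)
    (hV_biorth : ∀ n m, 1 ≤ n → 1 ≤ m → V n (v m) = if n = m then 1 else 0) :
    ∀ u : ℝ → X, (∀ s : ℝ, u s = ∑' n : ℕ, z (n + 1) s • v (n + 1)) →
      (∀ n, 2 ≤ n → u ((t n + t (n + 1)) / 2) = v 1 + v n) ∧
      (∀ n m, 2 ≤ n → 2 ≤ m → n ≠ m →
        ‖u ((t n + t (n + 1)) / 2) - u ((t m + t (m + 1)) / 2)‖ = ‖v n - v m‖ ∧
        1 ≤ ‖v n - v m‖) ∧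
      (¬ ∃ L : X, Filter.Tendsto u (nhdsWithin 1 (Set.Iio 1)) (nhds L)) ∧
      (¬ ∃ w : ℝ → X, ContinuousOn w (Set.Icc 0 1) ∧
        ∀ s ∈ Set.Ico (0 : ℝ) 1, w s = u s) :=
  standing_construction_no_extension_general X t z v V ht_mem ht_mono ht_lim hz1 hz_one hz_zero
    hV_norm hV_biorth
end

section
/- Under the standing construction, define w : [0,1) → X by w(t) := Σ_{n=1}^∞ χ_{[t_n,1)}(t) · (1/Γ(1−α)) (∫_0^t (t−s)^{−α} z_{n+1}′(s) ds) v_{n+1}, which is a finite sum for each t ∈ [0,1). Then w is continuous on [0,1), and for every t ∈ (0,1) the function r ↦ (1/Γ(1−α)) ∫_0^r (r−s)^{−α} (u(s) − v₁) ds is differentiable at t with derivative w(t); that is, the Caputo fractional derivative of order α of u(t) := Σ_{n=1}^∞ z_n(t) v_n exists on (0,1) and equals w. -/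
/-!
For `f` vanishing on `(-∞, 0]` and `r ≥ 0`, the integral `∫_0^r (r - σ)^(-α) f(σ) dσ` is the
convolution of `f` with the locally integrable kernel `σ ↦ σ^(-α) 1_{σ ≥ 0}`. Convolution with a
locally integrable function is continuous on continuous compactly supported functions and commutes
with differentiation of `C¹` compactly supported ones, so for such `f` supported in `(0, ∞)` the
derivative of this integral is the same integral of `f'`.

Since `z (n + 2)` vanishes up to `t (n + 1)` and `t n → 1`, on `(-∞, b]` with `b < 1` only finitely
many summands of `u - v 1` and of `w` are nonzero, and the indicators in `w` change nothing. Both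
claims about `w` then follow summand by summand from the scalar case.
-/

open Set Filter MeasureTheory Topology
open scoped Convolution

section Support

variable {f : ℝ → ℝ}

theorem eq_zero_of_tsupport_subset_Ioi {c x : ℝ} (h : tsupport f ⊆ Ioi c) (hx : x ≤ c) :
    f x = 0 :=
  image_eq_zero_of_notMem_tsupport fun hx' => (h hx').not_ge hx

theorem tsupport_subset_Icc {a b : ℝ} (hf : ∀ x ∉ Ioo a b, f x = 0) : tsupport f ⊆ Icc a b :=
  closure_minimal ((Function.support_subset_iff'.2 hf).trans Ioo_subset_Icc_self) isClosed_Icc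

end Support

section RiemannLiouville

noncomputable def fracKernel (α : ℝ) : ℝ → ℝ := (Ici 0).indicator fun σ => σ ^ (-α)

/-- The Riemann–Liouville integral of order `1 - α`, without its factor `1 / Γ(1 - α)`. -/
noncomputable def rlIntegral (α : ℝ) (f : ℝ → ℝ) (r : ℝ) : ℝ :=
  ∫ σ in (0 : ℝ)..r, (r - σ) ^ (-α) * f σ

variable {α : ℝ} {f : ℝ → ℝ}

theorem locallyIntegrable_fracKernel (hα : α < 1) : LocallyIntegrable (fracKernel α) := by
  refine LocallyIntegrable.indicator ?_ measurableSet_Ici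
  refine locallyIntegrable_iff.2 fun K hK => ?_
  obtain ⟨R, hR⟩ := hK.isBounded.subset_closedBall 0
  rw [Real.closedBall_eq_Icc] at hR
  exact ((intervalIntegrable_iff' enorm_ne_top).1
    (intervalIntegral.intervalIntegrable_rpow' (by linarith))).mono_set (hR.trans Icc_subset_uIcc)

theorem rlIntegral_eq_convolution (hf : ∀ x ≤ 0, f x = 0) {r : ℝ} (hr : 0 ≤ r) :
    rlIntegral α f r = (fracKernel α ⋆[ContinuousLinearMap.mul ℝ ℝ] f) r := by
  rw [convolution_def, ← integral_sub_left_eq_self _ volume r]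
  simp only [ContinuousLinearMap.mul_apply', sub_sub_cancel]
  rw [← setIntegral_eq_integral_of_forall_compl_eq_zero (s := Ioc 0 r), rlIntegral,
    intervalIntegral.integral_of_le hr]
  · refine setIntegral_congr_fun measurableSet_Ioc fun σ hσ => ?_
    simp [fracKernel, hσ.2]
  · intro σ hσ
    rcases le_or_gt σ 0 with h | h
    · simp [hf σ h]
    · have : r < σ := by simpa [h] using hσ
      simp [fracKernel, this]

theorem rlIntegral_eq_zero {c s : ℝ} (hf : ∀ x ≤ c, f x = 0) (hs₀ : 0 ≤ s) (hs : s ≤ c) :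
    rlIntegral α f s = 0 := by
  rw [rlIntegral, intervalIntegral.integral_congr (g := fun _ => 0), intervalIntegral.integral_zero]
  intro σ hσ
  rw [uIcc_of_le hs₀] at hσ
  simp [hf σ (hσ.2.trans hs)]

theorem continuousOn_rlIntegral (hα : α < 1) (hf : Continuous f) (hcf : HasCompactSupport f)
    (hf₀ : ∀ x ≤ 0, f x = 0) : ContinuousOn (rlIntegral α f) (Ici 0) :=
  (hcf.continuous_convolution_right _ (locallyIntegrable_fracKernel hα) hf).continuousOn.congr
    fun _ hr => rlIntegral_eq_convolution hf₀ hr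

theorem hasDerivAt_rlIntegral (hα : α < 1) (hf : ContDiff ℝ 1 f) (hcf : HasCompactSupport f)
    (hsupp : tsupport f ⊆ Ioi 0) {r : ℝ} (hr : 0 < r) :
    HasDerivAt (rlIntegral α f) (rlIntegral α (deriv f) r) r := by
  rw [rlIntegral_eq_convolution (fun _ => eq_zero_of_tsupport_subset_Ioi
    (tsupport_deriv_subset.trans hsupp)) hr.le]
  refine (hcf.hasDerivAt_convolution_right _ (locallyIntegrable_fracKernel hα) hf r)
    |>.congr_of_eventuallyEq ?_
  filter_upwards [Ioi_mem_nhds hr] with r' hr'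
  exact rlIntegral_eq_convolution (fun _ => eq_zero_of_tsupport_subset_Ioi hsupp) hr'.le

theorem intervalIntegrable_rpow_sub_mul (hα : α < 1) (hf : Continuous f) (r a b : ℝ) :
    IntervalIntegrable (fun σ => (r - σ) ^ (-α) * f σ) volume a b := by
  have hk := (intervalIntegral.intervalIntegrable_rpow' (r := -α) (by linarith)
    (a := r - a) (b := r - b)).comp_sub_left r
  simp only [sub_sub_cancel] at hk
  exact hk.mul_continuousOn hf.continuousOn

theorem indicator_Ico_mul_rlIntegral_deriv_eq {c d s : ℝ} (hsupp : tsupport f ⊆ Ioi c)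
    (hs₀ : 0 ≤ s) (hsd : s < d) (k : ℝ) :
    (Ico c d).indicator (fun r => k * rlIntegral α (deriv f) r) s
      = k * rlIntegral α (deriv f) s := by
  by_cases hcs : c ≤ s
  · exact indicator_of_mem (show s ∈ Ico c d from ⟨hcs, hsd⟩) _
  · rw [indicator_of_notMem fun h => hcs h.1, rlIntegral_eq_zero
      (fun _ => eq_zero_of_tsupport_subset_Ioi (tsupport_deriv_subset.trans hsupp)) hs₀
      (not_le.1 hcs).le, mul_zero]

end RiemannLiouville

section Series

variable {X : Type*} [NormedAddCommGroup X] [NormedSpace ℝ X] {α : ℝ}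

theorem tsum_smul_eq_sum_range_of_eq_zero {F τ : ℕ → ℝ} {x : ℝ} {N : ℕ}
    (hF : ∀ n, x ≤ τ n → F n = 0) (hN : ∀ n ≥ N, x < τ n) (e : ℕ → X) :
    ∑' n, F n • e n = ∑ n ∈ Finset.range N, F n • e n :=
  tsum_eq_sum fun n hn => by
    rw [hF n (hN n (by simpa using hn)).le, zero_smul]

theorem finite_setOf_smul_ne_zero {τ F : ℕ → ℝ} (hτ : Tendsto τ atTop (𝓝 1)) {s : ℝ}
    (hs : s < 1) (hF : ∀ n, s < τ n → F n = 0) (e : ℕ → X) : {n | F n • e n ≠ 0}.Finite := by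
  have hfin : {n | ¬ s < τ n}.Finite := by
    rw [← eventually_cofinite, Nat.cofinite_eq_atTop]
    exact hτ.eventually (eventually_gt_nhds hs)
  refine hfin.subset fun n hn hsn => hn ?_
  rw [hF n hsn, zero_smul]

theorem smul_integral_rpow_smul_sum [CompleteSpace X] (hα : α < 1) {ι : Type*} (S : Finset ι)
    {F : ι → ℝ → ℝ} (hF : ∀ i, Continuous (F i)) (e : ι → X) (k r : ℝ) :
    k • ∫ σ in (0 : ℝ)..r, (r - σ) ^ (-α) • ∑ i ∈ S, F i σ • e i
      = ∑ i ∈ S, (k * rlIntegral α (F i) r) • e i := by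
  simp only [Finset.smul_sum, smul_smul]
  rw [intervalIntegral.integral_finsetSum fun i _ =>
    have hi := intervalIntegrable_rpow_sub_mul hα (hF i) r 0 r
    ⟨hi.1.smul_const (e i), hi.2.smul_const (e i)⟩]
  simp only [intervalIntegral.integral_smul_const, Finset.smul_sum, smul_smul, rlIntegral]

variable {φ : ℕ → ℝ → ℝ} {τ : ℕ → ℝ}

theorem continuousOn_tsum_smul_rlIntegral_deriv (hα : α < 1) (hφ : ∀ n, ContDiff ℝ 1 (φ n))
    (hcpt : ∀ n, HasCompactSupport (φ n)) (hsupp : ∀ n, tsupport (φ n) ⊆ Ioi (τ n))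
    (hτ : ∀ n, 0 ≤ τ n) (hτ1 : Tendsto τ atTop (𝓝 1)) (k : ℝ) (e : ℕ → X) {w : ℝ → X}
    (hw : ∀ s ∈ Ico (0 : ℝ) 1, w s = ∑' n, (k * rlIntegral α (deriv (φ n)) s) • e n) :
    ContinuousOn w (Ico 0 1) := by
  have hderiv n : ∀ x ≤ τ n, deriv (φ n) x = 0 := fun _ =>
    eq_zero_of_tsupport_subset_Ioi (tsupport_deriv_subset.trans (hsupp n))
  refine continuousOn_of_locally_continuousOn fun s hs => ?_
  obtain ⟨b, hsb, hb⟩ := exists_between hs.2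
  obtain ⟨N, hN⟩ := eventually_atTop.1 (hτ1.eventually (eventually_gt_nhds hb))
  have hsum : ContinuousOn
      (fun s => ∑ n ∈ Finset.range N, (k * rlIntegral α (deriv (φ n)) s) • e n) (Ici 0) :=
    continuousOn_finsetSum _ fun n _ =>
      ((continuousOn_rlIntegral hα ((hφ n).continuous_deriv le_rfl) (hcpt n).deriv
        fun x hx => hderiv n x (hx.trans (hτ n))).const_smul k).smul continuousOn_const
  refine ⟨Iio b, isOpen_Iio, hsb, (hsum.mono fun x hx => hx.1.1).congr fun x hx => ?_⟩
  rw [hw x hx.1]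
  refine tsum_smul_eq_sum_range_of_eq_zero (fun n hn => ?_) (fun n hn => hx.2.trans (hN n hn)) e
  rw [rlIntegral_eq_zero (hderiv n) hx.1.1 hn, mul_zero]

theorem hasDerivAt_smul_integral_tsum [CompleteSpace X] (hα : α < 1)
    (hφ : ∀ n, ContDiff ℝ 1 (φ n)) (hcpt : ∀ n, HasCompactSupport (φ n))
    (hsupp : ∀ n, tsupport (φ n) ⊆ Ioi (τ n)) (hτ : ∀ n, 0 ≤ τ n)
    (hτ1 : Tendsto τ atTop (𝓝 1)) (k : ℝ) (e : ℕ → X) {g : ℝ → X}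
    (hg : ∀ σ < 1, g σ = ∑' n, φ n σ • e n) {s : ℝ} (hs : s ∈ Ioo (0 : ℝ) 1) :
    HasDerivAt (fun r => k • ∫ σ in (0 : ℝ)..r, (r - σ) ^ (-α) • g σ)
      (∑' n, (k * rlIntegral α (deriv (φ n)) s) • e n) s := by
  obtain ⟨b, hsb, hb⟩ := exists_between hs.2
  obtain ⟨N, hN⟩ := eventually_atTop.1 (hτ1.eventually (eventually_gt_nhds hb))
  have hg_sum : ∀ σ ≤ b, g σ = ∑ n ∈ Finset.range N, φ n σ • e n :=
    fun σ hσ => (hg σ (hσ.trans_lt hb)).trans <| tsum_smul_eq_sum_range_of_eq_zero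
      (fun n => eq_zero_of_tsupport_subset_Ioi (hsupp n)) (fun n hn => hσ.trans_lt (hN n hn)) e
  rw [tsum_smul_eq_sum_range_of_eq_zero (fun n hn => by
      rw [rlIntegral_eq_zero (fun _ => eq_zero_of_tsupport_subset_Ioi
        (tsupport_deriv_subset.trans (hsupp n))) hs.1.le hn, mul_zero])
    (fun n hn => hsb.trans (hN n hn)) e]
  refine (HasDerivAt.fun_sum fun n _ => ((hasDerivAt_rlIntegral hα (hφ n) (hcpt n)
    ((hsupp n).trans (Ioi_subset_Ioi (hτ n))) hs.1).const_mul k).smul_const (e n))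
    |>.congr_of_eventuallyEq ?_
  filter_upwards [Iio_mem_nhds hsb] with r hr
  rw [← smul_integral_rpow_smul_sum hα _ (fun n => (hφ n).continuous)]
  refine congrArg (k • ·) (intervalIntegral.integral_congr fun σ hσ => ?_)
  rw [hg_sum σ (hσ.2.trans (max_le (hs.1.trans hsb).le hr.le))]

end Series

theorem standing_construction_caputo_derivative_general
    (α : ℝ) (hα : α ∈ Set.Ioo (0 : ℝ) 1)
    (X : Type*) [NormedAddCommGroup X] [NormedSpace ℝ X] [CompleteSpace X]
    (t : ℕ → ℝ) (z : ℕ → ℝ → ℝ) (v : ℕ → X)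
    (ht_mem : ∀ n, 1 ≤ n → t n ∈ Set.Ioo (0 : ℝ) 1)
    (ht_mono : ∀ n, 1 ≤ n → t n < t (n + 1))
    (ht_lim : Filter.Tendsto t Filter.atTop (nhds 1))
    (hz1 : ∀ s : ℝ, z 1 s = 1)
    (hz_smooth : ∀ n, 2 ≤ n → ContDiff ℝ 1 (z n))
    (hz_zero : ∀ n, 2 ≤ n → ∀ s : ℝ,
      s ∉ Set.Ioo ((t (n - 1) + t n) / 2) ((t (n + 1) + t (n + 2)) / 2) → z n s = 0) :
    ∀ u w : ℝ → X,
      (∀ s : ℝ, u s = ∑' n : ℕ, z (n + 1) s • v (n + 1)) →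
      (∀ s : ℝ, w s = ∑' n : ℕ,
        Set.indicator (Set.Ico (t (n + 1)) 1)
          (fun r : ℝ => (1 / Real.Gamma (1 - α)) *
            ∫ σ in (0 : ℝ)..r, ((r - σ) ^ (-α)) * deriv (z (n + 2)) σ) s • v (n + 2)) →
      -- for each t ∈ [0,1) only finitely many terms are nonzero
      (∀ s ∈ Set.Ico (0 : ℝ) 1,
        {n : ℕ | Set.indicator (Set.Ico (t (n + 1)) 1)
          (fun r : ℝ => (1 / Real.Gamma (1 - α)) *
            ∫ σ in (0 : ℝ)..r, ((r - σ) ^ (-α)) * deriv (z (n + 2)) σ) s • v (n + 2) ≠ 0}.Finite) ∧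
      -- w is continuous on [0,1)
      ContinuousOn w (Set.Ico 0 1) ∧
      -- the Caputo derivative of u exists on (0,1) and equals w
      (∀ s ∈ Set.Ioo (0 : ℝ) 1,
        HasDerivAt (fun r : ℝ => (1 / Real.Gamma (1 - α)) •
          ∫ σ in (0 : ℝ)..r, ((r - σ) ^ (-α)) • (u σ - v 1)) (w s) s) := by
  intro u w hu hw
  have hτ1 : Tendsto (fun n => t (n + 1)) atTop (𝓝 1) := ht_lim.comp (tendsto_add_atTop_nat 1)
  have hτ n : 0 ≤ t (n + 1) := (ht_mem (n + 1) (by omega)).1.le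
  have hsmooth n : ContDiff ℝ 1 (z (n + 2)) := hz_smooth (n + 2) (by omega)
  have hIcc n : tsupport (z (n + 2))
      ⊆ Icc ((t (n + 1) + t (n + 2)) / 2) ((t (n + 3) + t (n + 4)) / 2) :=
    tsupport_subset_Icc (hz_zero (n + 2) (by omega))
  have hcpt n : HasCompactSupport (z (n + 2)) :=
    isCompact_Icc.of_isClosed_subset (isClosed_tsupport _) (hIcc n)
  have hIoi n : tsupport (z (n + 2)) ⊆ Ioi (t (n + 1)) := fun x hx =>
    show t (n + 1) < x by linarith [(hIcc n hx).1, ht_mono (n + 1) (by omega)]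
  have hu' : ∀ σ < 1, u σ - v 1 = ∑' n, z (n + 2) σ • v (n + 2) := fun σ hσ => by
    rw [hu, tsum_eq_zero_add' (f := fun n => z (n + 1) σ • v (n + 1))
      (summable_of_hasFiniteSupport (finite_setOf_smul_ne_zero hτ1 hσ
      (fun n hn => eq_zero_of_tsupport_subset_Ioi (hIoi n) hn.le) _)), hz1, one_smul,
      add_sub_cancel_left]
  have hw' : ∀ s ∈ Ico (0 : ℝ) 1, w s
      = ∑' n, (1 / Real.Gamma (1 - α) * rlIntegral α (deriv (z (n + 2))) s) • v (n + 2) :=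
    fun s hs => by
      rw [hw]
      exact tsum_congr fun n =>
        congrArg (· • v (n + 2)) (indicator_Ico_mul_rlIntegral_deriv_eq (hIoi n) hs.1 hs.2 _)
  refine ⟨fun s hs => finite_setOf_smul_ne_zero hτ1 hs.2
      (fun n hn => indicator_of_notMem (fun h => hn.not_ge h.1) _) _,
    continuousOn_tsum_smul_rlIntegral_deriv hα.2 hsmooth hcpt hIoi hτ hτ1 _ _ hw',
    fun s hs => ?_⟩
  rw [hw' s (Ioo_subset_Ico_self hs)]
  exact hasDerivAt_smul_integral_tsum hα.2 hsmooth hcpt hIoi hτ hτ1 _ _ hu' hs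

/-- Under the standing construction, the function
`w(t) = Σ_{n≥1} χ_{[t_n,1)}(t) (1/Γ(1-α)) (∫_0^t (t-s)^{-α} z_{n+1}′(s) ds) v_{n+1}`
is a finite sum for each `t ∈ [0,1)`, is continuous on `[0,1)`, and is the Caputo
fractional derivative of order `α` of `u(t) = Σ_{n≥1} z_n(t) v_n` on `(0,1)`. -/
theorem standing_construction_caputo_derivative
    (α : ℝ) (hα : α ∈ Set.Ioo (0 : ℝ) 1)
    (X : Type*) [NormedAddCommGroup X] [NormedSpace ℝ X] [CompleteSpace X]
    (t : ℕ → ℝ) (z : ℕ → ℝ → ℝ) (v : ℕ → X)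
    (ht_mem : ∀ n, 1 ≤ n → t n ∈ Set.Ioo (0 : ℝ) 1)
    (ht_mono : ∀ n, 1 ≤ n → t n < t (n + 1))
    (ht_lim : Filter.Tendsto t Filter.atTop (nhds 1))
    (ht_step : ∀ n, 2 ≤ n → t (n + 1) - t n < t n - t (n - 1))
    (hz1 : ∀ s : ℝ, z 1 s = 1)
    (hz_smooth : ∀ n, 2 ≤ n → ContDiff ℝ 1 (z n))
    (hz_one : ∀ n, 2 ≤ n → ∀ s ∈ Set.Icc (t n) (t (n + 1)), z n s = 1)
    (hz_mid : ∀ n, 2 ≤ n → ∀ s ∈ Set.Ioo ((t (n - 1) + t n) / 2) (t n) ∪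
        Set.Ioo (t (n + 1)) ((t (n + 1) + t (n + 2)) / 2),
      0 < z n s ∧ z n s < 1)
    (hz_zero : ∀ n, 2 ≤ n → ∀ s : ℝ,
      s ∉ Set.Ioo ((t (n - 1) + t n) / 2) ((t (n + 1) + t (n + 2)) / 2) → z n s = 0)
    (hz_deriv_nonneg : ∀ n, 2 ≤ n →
      ∀ s ∈ Set.Icc ((t (n - 1) + t n) / 2) (t n), 0 ≤ deriv (z n) s)
    (hz_deriv_nonpos : ∀ n, 2 ≤ n →
      ∀ s ∈ Set.Icc (t (n + 1)) ((t (n + 1) + t (n + 2)) / 2), deriv (z n) s ≤ 0)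
    (hv : ∀ n, 1 ≤ n → ‖v n‖ = 1) :
    ∀ u w : ℝ → X,
      (∀ s : ℝ, u s = ∑' n : ℕ, z (n + 1) s • v (n + 1)) →
      (∀ s : ℝ, w s = ∑' n : ℕ,
        Set.indicator (Set.Ico (t (n + 1)) 1)
          (fun r : ℝ => (1 / Real.Gamma (1 - α)) *
            ∫ σ in (0 : ℝ)..r, ((r - σ) ^ (-α)) * deriv (z (n + 2)) σ) s • v (n + 2)) →
      -- for each t ∈ [0,1) only finitely many terms are nonzero
      (∀ s ∈ Set.Ico (0 : ℝ) 1,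
        {n : ℕ | Set.indicator (Set.Ico (t (n + 1)) 1)
          (fun r : ℝ => (1 / Real.Gamma (1 - α)) *
            ∫ σ in (0 : ℝ)..r, ((r - σ) ^ (-α)) * deriv (z (n + 2)) σ) s • v (n + 2) ≠ 0}.Finite) ∧
      -- w is continuous on [0,1)
      ContinuousOn w (Set.Ico 0 1) ∧
      -- the Caputo derivative of u exists on (0,1) and equals w
      (∀ s ∈ Set.Ioo (0 : ℝ) 1,
        HasDerivAt (fun r : ℝ => (1 / Real.Gamma (1 - α)) •
          ∫ σ in (0 : ℝ)..r, ((r - σ) ^ (-α)) • (u σ - v 1)) (w s) s) :=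
  standing_construction_caputo_derivative_general α hα X t z v ht_mem ht_mono ht_lim hz1 hz_smooth
    hz_zero
end

section
/- Let X be a real Banach space, {t_n}_{n≥1} ⊂ (0,1) a strictly increasing sequence converging to 1, and {V_i*}_{i≥1} continuous linear functionals on X with ‖V_i*‖ ≤ 1 for all i. Define H : [0,∞) × X → ℝ by H(t,x) := V₁*(x) χ_{[0,t₁)}(t) + Σ_{i=1}^∞ [ i^{−2} V_i*(x) χ_{[t_i,∞)}(t) + (i+1)^{−2} V_{i+1}*(x) ((t − t_i)/(t_{i+1} − t_i)) χ_{[t_i, t_{i+1})}(t) ]. Then H is continuous on [0,∞) × X, and H is locally Lipschitz in the second variable: for every (t₀,x₀) ∈ [0,∞) × X there exist r, L > 0 such that |H(t,x) − H(t,y)| ≤ L ‖x − y‖ whenever (t,x) and (t,y) lie in the ball of radius r around (t₀,x₀). -/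
open Set Filter

/-- The function
`H(t,x) = V₁*(x) χ_{[0,t₁)}(t) + Σ_{i≥1} [ i⁻² V_i*(x) χ_{[t_i,∞)}(t)
  + (i+1)⁻² V_{i+1}*(x) ((t-t_i)/(t_{i+1}-t_i)) χ_{[t_i,t_{i+1})}(t) ]`
is continuous on `[0,∞) × X` and locally Lipschitz in the second variable. -/
theorem H_continuous_and_locally_Lipschitz
    (X : Type*) [NormedAddCommGroup X] [NormedSpace ℝ X] [CompleteSpace X]
    (t : ℕ → ℝ) (V : ℕ → X →L[ℝ] ℝ)
    (ht_mem : ∀ n, 1 ≤ n → t n ∈ Set.Ioo (0 : ℝ) 1)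
    (ht_mono : ∀ n, 1 ≤ n → t n < t (n + 1))
    (ht_lim : Filter.Tendsto t Filter.atTop (nhds 1))
    (hV_norm : ∀ n, 1 ≤ n → ‖V n‖ ≤ 1) :
    ∀ H : ℝ → X → ℝ,
      (∀ (s : ℝ) (x : X), H s x =
        V 1 x * Set.indicator (Set.Ico (0 : ℝ) (t 1)) (fun _ => (1 : ℝ)) s +
        ∑' i : ℕ,
          ((1 / ((i : ℝ) + 1) ^ 2) * V (i + 1) x *
              Set.indicator (Set.Ici (t (i + 1))) (fun _ => (1 : ℝ)) s +
            (1 / ((i : ℝ) + 2) ^ 2) * V (i + 2) x *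
              ((s - t (i + 1)) / (t (i + 2) - t (i + 1))) *
              Set.indicator (Set.Ico (t (i + 1)) (t (i + 2))) (fun _ => (1 : ℝ)) s)) →
      -- H is continuous on [0,∞) × X
      ContinuousOn (fun p : ℝ × X => H p.1 p.2) (Set.Ici 0 ×ˢ Set.univ) ∧
      -- H is locally Lipschitz in the second variable
      (∀ t₀ ∈ Set.Ici (0 : ℝ), ∀ x₀ : X, ∃ r > (0 : ℝ), ∃ L > (0 : ℝ),
        ∀ (s : ℝ) (x y : X),
          dist (s, x) (t₀, x₀) < r → dist (s, y) (t₀, x₀) < r →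
          |H s x - H s y| ≤ L * ‖x - y‖) := by
  intro H hH
  have ht1pos : (0:ℝ) < t 1 := (ht_mem 1 le_rfl).1
  have htlt : ∀ i : ℕ, t (i+1) < t (i+2) := fun i => ht_mono (i+1) (Nat.le_add_left 1 i)
  have hVx : ∀ i : ℕ, 1 ≤ i → ∀ z : X, |V i z| ≤ ‖z‖ := by
    intro i hi z
    calc |V i z| = ‖V i z‖ := (Real.norm_eq_abs _).symm
    _ ≤ ‖V i‖ * ‖z‖ := (V i).le_opNorm z
    _ ≤ 1 * ‖z‖ := by gcongr; exact hV_norm i hi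
    _ = ‖z‖ := one_mul _
  have hind : ∀ (I : Set ℝ) (s : ℝ), |I.indicator (fun _ => (1:ℝ)) s| ≤ 1 := by
    intro I s; by_cases h : s ∈ I <;> simp [h]
  -- summability of 1/(i+1)^2 and 1/(i+2)^2
  have hsumbase : Summable (fun n : ℕ => 1 / (n : ℝ) ^ 2) :=
    Real.summable_one_div_nat_pow.mpr one_lt_two
  have hsum1 : Summable (fun i : ℕ => 1 / ((i:ℝ)+1) ^ 2) := by
    have := (summable_nat_add_iff 1).mpr hsumbase
    refine this.congr fun i => ?_
    push_cast; ring_nf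
  have hsum2 : Summable (fun i : ℕ => 1 / ((i:ℝ)+2) ^ 2) := by
    have := (summable_nat_add_iff 2).mpr hsumbase
    refine this.congr fun i => ?_
    push_cast; ring_nf
  -- the continuous "ramp" functions
  set ψ : ℕ → ℝ → ℝ :=
    fun i s => max 0 (min 1 ((s - t (i+1)) / (t (i+2) - t (i+1)))) with hψdef
  have hψ0 : ∀ i s, 0 ≤ ψ i s := fun i s => le_max_left _ _
  have hψ1 : ∀ i s, ψ i s ≤ 1 := fun i s => max_le zero_le_one (min_le_left _ _)
  have hψcont : ∀ i, Continuous (ψ i) := by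
    intro i
    exact continuous_const.max (continuous_const.min
      ((continuous_id.sub continuous_const).div_const _))
  -- the operator-valued series
  have hopnorm : ∀ (i : ℕ) (s : ℝ),
      ‖(1 / ((i:ℝ)+2) ^ 2 * ψ i s) • V (i+2)‖ ≤ 1 / ((i:ℝ)+2) ^ 2 := by
    intro i s
    have hnn : 0 ≤ 1 / ((i:ℝ)+2) ^ 2 * ψ i s :=
      mul_nonneg (by positivity) (hψ0 i s)
    have h1 : ‖1 / ((i:ℝ)+2) ^ 2 * ψ i s‖ ≤ 1 / ((i:ℝ)+2) ^ 2 := by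
      rw [Real.norm_eq_abs, abs_of_nonneg hnn]
      calc 1 / ((i:ℝ)+2) ^ 2 * ψ i s ≤ 1 / ((i:ℝ)+2) ^ 2 * 1 :=
            mul_le_mul_of_nonneg_left (hψ1 i s) (by positivity)
        _ = 1 / ((i:ℝ)+2) ^ 2 := mul_one _
    calc ‖(1 / ((i:ℝ)+2) ^ 2 * ψ i s) • V (i+2)‖
        = ‖1 / ((i:ℝ)+2) ^ 2 * ψ i s‖ * ‖V (i+2)‖ := norm_smul _ _
      _ ≤ (1 / ((i:ℝ)+2) ^ 2) * 1 :=
          mul_le_mul h1 (hV_norm (i+2) (by omega)) (norm_nonneg _) (by positivity)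
      _ = 1 / ((i:ℝ)+2) ^ 2 := mul_one _
  have hΦsum : ∀ s : ℝ, Summable (fun i : ℕ => (1 / ((i:ℝ)+2) ^ 2 * ψ i s) • V (i+2)) := by
    intro s
    refine Summable.of_norm (Summable.of_nonneg_of_le (fun i => norm_nonneg _)
      (fun i => hopnorm i s) hsum2)
  set Φ : ℝ → (X →L[ℝ] ℝ) :=
    fun s => ∑' i : ℕ, (1 / ((i:ℝ)+2) ^ 2 * ψ i s) • V (i+2) with hΦdef
  have hΦcont : Continuous Φ := by
    refine continuous_tsum (fun i => ?_) hsum2 (fun i s => hopnorm i s)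
    exact (continuous_const.mul (hψcont i)).smul continuous_const
  set C : ℝ := ∑' i : ℕ, 1 / ((i:ℝ)+2) ^ 2 with hCdef
  have hC0 : 0 ≤ C := tsum_nonneg fun i => by positivity
  have hΦnorm : ∀ s, ‖Φ s‖ ≤ C := by
    intro s
    have h1 : Summable fun i : ℕ => ‖(1 / ((i:ℝ)+2) ^ 2 * ψ i s) • V (i+2)‖ :=
      Summable.of_nonneg_of_le (fun i => norm_nonneg _) (fun i => hopnorm i s) hsum2
    calc ‖Φ s‖ ≤ ∑' i : ℕ, ‖(1 / ((i:ℝ)+2) ^ 2 * ψ i s) • V (i+2)‖ :=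
          norm_tsum_le_tsum_norm h1
    _ ≤ C := Summable.tsum_le_tsum (fun i => hopnorm i s) h1 hsum2
  have hΦapp : ∀ (s : ℝ) (x : X),
      Φ s x = ∑' i : ℕ, 1 / ((i:ℝ)+2) ^ 2 * V (i+2) x * ψ i s := by
    intro s x
    have := (ContinuousLinearMap.apply ℝ ℝ x).map_tsum (hΦsum s)
    simp only [ContinuousLinearMap.apply_apply] at this
    rw [hΦdef]
    rw [this]
    refine tsum_congr fun i => ?_
    rw [ContinuousLinearMap.smul_apply]
    simp [smul_eq_mul]; ring
  -- the key pointwise identity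
  have key : ∀ (s : ℝ) (x : X),
      H s x = (Ici (0:ℝ)).indicator (fun _ => (1:ℝ)) s * V 1 x + Φ s x := by
    intro s x
    set A : ℕ → ℝ := fun i => (1 / ((i : ℝ) + 1) ^ 2) * V (i + 1) x *
        Set.indicator (Set.Ici (t (i + 1))) (fun _ => (1 : ℝ)) s with hAdef
    set B : ℕ → ℝ := fun i => (1 / ((i : ℝ) + 2) ^ 2) * V (i + 2) x *
        ((s - t (i + 1)) / (t (i + 2) - t (i + 1))) *
        Set.indicator (Set.Ico (t (i + 1)) (t (i + 2))) (fun _ => (1 : ℝ)) s with hBdef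
    have hAle : ∀ i, |A i| ≤ 1 / ((i:ℝ)+1) ^ 2 * ‖x‖ := by
      intro i
      rw [hAdef]
      simp only []
      rw [abs_mul, abs_mul, abs_of_nonneg (a := 1 / ((i:ℝ)+1) ^ 2) (by positivity)]
      calc 1 / ((i:ℝ)+1) ^ 2 * |V (i+1) x| * |Set.indicator (Set.Ici (t (i + 1))) (fun _ => (1 : ℝ)) s|
          ≤ 1 / ((i:ℝ)+1) ^ 2 * ‖x‖ * 1 := by
            refine mul_le_mul (mul_le_mul_of_nonneg_left (hVx (i+1) (by omega) x)
              (by positivity)) (hind _ _) (abs_nonneg _) (by positivity)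
      _ = 1 / ((i:ℝ)+1) ^ 2 * ‖x‖ := mul_one _
    have hrampind : ∀ i, |((s - t (i + 1)) / (t (i + 2) - t (i + 1))) *
        Set.indicator (Set.Ico (t (i + 1)) (t (i + 2))) (fun _ => (1 : ℝ)) s| ≤ 1 := by
      intro i
      by_cases h : s ∈ Set.Ico (t (i+1)) (t (i+2))
      · rw [Set.indicator_of_mem h, mul_one, abs_of_nonneg
          (div_nonneg (by linarith [h.1]) (by linarith [htlt i]))]
        rw [div_le_one (by linarith [htlt i])]
        linarith [h.2]
      · rw [Set.indicator_of_notMem h, mul_zero, abs_zero]; norm_num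
    have hBle : ∀ i, |B i| ≤ 1 / ((i:ℝ)+2) ^ 2 * ‖x‖ := by
      intro i
      rw [hBdef]
      simp only []
      rw [mul_assoc, abs_mul, abs_mul, abs_of_nonneg (a := 1 / ((i:ℝ)+2) ^ 2) (by positivity)]
      calc 1 / ((i:ℝ)+2) ^ 2 * |V (i+2) x| * _
          ≤ 1 / ((i:ℝ)+2) ^ 2 * ‖x‖ * 1 := by
            refine mul_le_mul (mul_le_mul_of_nonneg_left (hVx (i+2) (by omega) x)
              (by positivity)) (hrampind i) (abs_nonneg _) (by positivity)
      _ = 1 / ((i:ℝ)+2) ^ 2 * ‖x‖ := mul_one _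
    have hAs : Summable A :=
      Summable.of_abs (Summable.of_nonneg_of_le (fun i => abs_nonneg _) hAle
        (hsum1.mul_right ‖x‖))
    have hBs : Summable B :=
      Summable.of_abs (Summable.of_nonneg_of_le (fun i => abs_nonneg _) hBle
        (hsum2.mul_right ‖x‖))
    have hA1s : Summable (fun i => A (i+1)) := (summable_nat_add_iff 1).mpr hAs
    have e1 : ∑' i : ℕ, (A i + B i) = A 0 + ∑' i : ℕ, (A (i+1) + B i) := by
      rw [Summable.tsum_add hAs hBs, Summable.tsum_eq_zero_add hAs, add_assoc, ← Summable.tsum_add hA1s hBs]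
    have hcomb : ∀ i : ℕ,
        (Set.Ici (t (i+2))).indicator (fun _ => (1:ℝ)) s +
          ((s - t (i + 1)) / (t (i + 2) - t (i + 1))) *
            (Set.Ico (t (i+1)) (t (i+2))).indicator (fun _ => (1:ℝ)) s = ψ i s := by
      intro i
      have h12 := htlt i
      have hden : (0:ℝ) < t (i+2) - t (i+1) := by linarith
      rcases lt_or_ge s (t (i+1)) with h1 | h1
      · have h2 : s ∉ Set.Ici (t (i+2)) := by simp only [Set.mem_Ici, not_le]; linarith
        have h3 : s ∉ Set.Ico (t (i+1)) (t (i+2)) := by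
          simp only [Set.mem_Ico, not_and, not_lt]; intro h; linarith
        rw [Set.indicator_of_notMem h2, Set.indicator_of_notMem h3, mul_zero, add_zero]
        have hr : (s - t (i+1)) / (t (i+2) - t (i+1)) ≤ 0 :=
          div_nonpos_of_nonpos_of_nonneg (by linarith) (by linarith)
        rw [hψdef]
        simp only []
        rw [max_eq_left ((min_le_right _ _).trans hr)]
      · rcases lt_or_ge s (t (i+2)) with h2 | h2
        · have h3 : s ∉ Set.Ici (t (i+2)) := by simp only [Set.mem_Ici, not_le]; linarith
          have h4 : s ∈ Set.Ico (t (i+1)) (t (i+2)) := ⟨h1, h2⟩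
          rw [Set.indicator_of_notMem h3, Set.indicator_of_mem h4, mul_one, zero_add]
          have hr0 : 0 ≤ (s - t (i+1)) / (t (i+2) - t (i+1)) :=
            div_nonneg (by linarith) (by linarith)
          have hr1 : (s - t (i+1)) / (t (i+2) - t (i+1)) ≤ 1 := by
            rw [div_le_one hden]; linarith
          rw [hψdef]
          simp only []
          rw [min_eq_right hr1, max_eq_right hr0]
        · have h3 : s ∈ Set.Ici (t (i+2)) := h2
          have h4 : s ∉ Set.Ico (t (i+1)) (t (i+2)) := by
            simp only [Set.mem_Ico, not_and, not_lt]; intro h; linarith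
          rw [Set.indicator_of_mem h3, Set.indicator_of_notMem h4, mul_zero, add_zero]
          have hr1 : 1 ≤ (s - t (i+1)) / (t (i+2) - t (i+1)) := by
            rw [le_div_iff₀ hden]; linarith
          rw [hψdef]
          simp only []
          rw [min_eq_left hr1, max_eq_right zero_le_one]
    have e2 : ∑' i : ℕ, (A (i+1) + B i)
        = ∑' i : ℕ, 1 / ((i:ℝ)+2) ^ 2 * V (i+2) x * ψ i s := by
      refine tsum_congr fun i => ?_
      have hiv : ((i + 1 : ℕ) : ℝ) + 1 = (i:ℝ) + 2 := by push_cast; ring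
      have hin : (i + 1 + 1 : ℕ) = i + 2 := by omega
      have : A (i+1) + B i = 1 / ((i:ℝ)+2) ^ 2 * V (i+2) x *
          ((Set.Ici (t (i+2))).indicator (fun _ => (1:ℝ)) s +
            ((s - t (i + 1)) / (t (i + 2) - t (i + 1))) *
              (Set.Ico (t (i+1)) (t (i+2))).indicator (fun _ => (1:ℝ)) s) := by
        rw [hAdef, hBdef]
        simp only [hin, hiv]
        ring
      rw [this, hcomb i]
    have e3 : V 1 x * Set.indicator (Set.Ico (0 : ℝ) (t 1)) (fun _ => (1 : ℝ)) s + A 0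
        = (Ici (0:ℝ)).indicator (fun _ => (1:ℝ)) s * V 1 x := by
      have hA0 : A 0 = V 1 x * (Set.Ici (t 1)).indicator (fun _ => (1:ℝ)) s := by
        rw [hAdef]; norm_num
      rw [hA0]
      rcases lt_or_ge s 0 with h1 | h1
      · have h2 : s ∉ Set.Ico (0:ℝ) (t 1) := by
          simp only [Set.mem_Ico, not_and, not_lt]; intro h; linarith
        have h3 : s ∉ Set.Ici (t 1) := by simp only [Set.mem_Ici, not_le]; linarith
        have h4 : s ∉ Set.Ici (0:ℝ) := by simp only [Set.mem_Ici, not_le]; linarith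
        rw [Set.indicator_of_notMem h2, Set.indicator_of_notMem h3,
          Set.indicator_of_notMem h4]
        ring
      · have h4 : s ∈ Set.Ici (0:ℝ) := h1
        rcases lt_or_ge s (t 1) with h2 | h2
        · have h5 : s ∈ Set.Ico (0:ℝ) (t 1) := ⟨h1, h2⟩
          have h6 : s ∉ Set.Ici (t 1) := by simp only [Set.mem_Ici, not_le]; linarith
          rw [Set.indicator_of_mem h5, Set.indicator_of_notMem h6,
            Set.indicator_of_mem h4]
          ring
        · have h5 : s ∉ Set.Ico (0:ℝ) (t 1) := by
            simp only [Set.mem_Ico, not_and, not_lt]; intro h; linarith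
          have h6 : s ∈ Set.Ici (t 1) := h2
          rw [Set.indicator_of_notMem h5, Set.indicator_of_mem h6,
            Set.indicator_of_mem h4]
          ring
    calc H s x = V 1 x * Set.indicator (Set.Ico (0 : ℝ) (t 1)) (fun _ => (1 : ℝ)) s +
          ∑' i : ℕ, (A i + B i) := hH s x
    _ = V 1 x * Set.indicator (Set.Ico (0 : ℝ) (t 1)) (fun _ => (1 : ℝ)) s +
          (A 0 + ∑' i : ℕ, (A (i+1) + B i)) := by rw [e1]
    _ = (V 1 x * Set.indicator (Set.Ico (0 : ℝ) (t 1)) (fun _ => (1 : ℝ)) s + A 0) +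
          ∑' i : ℕ, 1 / ((i:ℝ)+2) ^ 2 * V (i+2) x * ψ i s := by rw [e2]; ring
    _ = (Ici (0:ℝ)).indicator (fun _ => (1:ℝ)) s * V 1 x + Φ s x := by
          rw [e3, hΦapp s x]
  constructor
  · -- continuity
    have hcont : Continuous fun p : ℝ × X => V 1 p.2 + Φ p.1 p.2 := by
      have h1 : Continuous fun p : ℝ × X => V 1 p.2 :=
        (V 1).continuous.comp continuous_snd
      have h2 : Continuous fun p : ℝ × X => Φ p.1 p.2 :=
        isBoundedBilinearMap_apply.continuous.comp
          ((hΦcont.comp continuous_fst).prodMk continuous_snd)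
      exact h1.add h2
    refine ContinuousOn.congr hcont.continuousOn ?_
    intro p hp
    have hp1 : p.1 ∈ Set.Ici (0:ℝ) := hp.1
    show H p.1 p.2 = V 1 p.2 + Φ p.1 p.2
    rw [key p.1 p.2, Set.indicator_of_mem hp1, one_mul]
  · -- local Lipschitz in the second variable
    intro t₀ _ x₀
    refine ⟨1, one_pos, 2 + C, by linarith, fun s x y _ _ => ?_⟩
    have hdiff : H s x - H s y =
        (Ici (0:ℝ)).indicator (fun _ => (1:ℝ)) s * V 1 (x - y) + Φ s (x - y) := by
      rw [key s x, key s y, map_sub, map_sub]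
      ring
    rw [hdiff]
    have h1 : |(Ici (0:ℝ)).indicator (fun _ => (1:ℝ)) s * V 1 (x - y)| ≤ ‖x - y‖ := by
      rw [abs_mul]
      calc |(Ici (0:ℝ)).indicator (fun _ => (1:ℝ)) s| * |V 1 (x - y)|
          ≤ 1 * ‖x - y‖ := mul_le_mul (hind _ _) (hVx 1 le_rfl _) (abs_nonneg _) zero_le_one
      _ = ‖x - y‖ := one_mul _
    have h2 : |Φ s (x - y)| ≤ C * ‖x - y‖ := by
      calc |Φ s (x - y)| = ‖Φ s (x - y)‖ := (Real.norm_eq_abs _).symm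
      _ ≤ ‖Φ s‖ * ‖x - y‖ := (Φ s).le_opNorm _
      _ ≤ C * ‖x - y‖ := by gcongr; exact hΦnorm s
    calc |(Ici (0:ℝ)).indicator (fun _ => (1:ℝ)) s * V 1 (x - y) + Φ s (x - y)|
        ≤ |(Ici (0:ℝ)).indicator (fun _ => (1:ℝ)) s * V 1 (x - y)| + |Φ s (x - y)| :=
          abs_add_le _ _
    _ ≤ ‖x - y‖ + C * ‖x - y‖ := add_le_add h1 h2
    _ ≤ (2 + C) * ‖x - y‖ := by nlinarith [norm_nonneg (x - y)]
end

section
/- Under the standing construction with biorthogonal functionals, define w : [0,1) → X by w(t) := Σ_{n=1}^∞ χ_{[t_n,1)}(t) · (1/Γ(1−α)) (∫_0^t (t−s)^{−α} z_{n+1}′(s) ds) v_{n+1}, define H : [0,∞) × X → ℝ by H(t,x) := V₁*(x) χ_{[0,t₁)}(t) + Σ_{i=1}^∞ [ i^{−2} V_i*(x) χ_{[t_i,∞)}(t) + (i+1)^{−2} V_{i+1}*(x) ((t − t_i)/(t_{i+1} − t_i)) χ_{[t_i, t_{i+1})}(t) ], let φ(s) := min{s+1, 1}, and set f_α(t,x)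 := φ(H(t,x)) · w(t) for (t,x) ∈ [0,1) × X. Then f_α is continuous on [0,1) × X and locally Lipschitz: for every (t₀,x₀) ∈ [0,1) × X there exist r, L > 0 such that ‖f_α(t,x) − f_α(t,y)‖ ≤ L ‖x − y‖ whenever (t,x),(t,y) lie in the ball of radius r around (t₀,x₀). -/
open Set Filter MeasureTheory

private lemma min_lip (a b : ℝ) : |min (a+1) 1 - min (b+1) 1| ≤ |a - b| := by
  have h1 := le_abs_self (a - b)
  have h2 := neg_abs_le (a - b)
  rcases le_total (a+1) 1 with ha | ha <;> rcases le_total (b+1) 1 with hb | hb <;>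
    simp only [min_eq_left, min_eq_right, ha, hb] <;>
    (apply abs_le.mpr; constructor <;> linarith)

private lemma cont_fracint (α : ℝ) (hα1 : α < 1)
    (g : ℝ → ℝ) (hg : Continuous g) (M : ℝ) (hM : ∀ x, |g x| ≤ M)
    (c : ℝ) (hc : 0 < c) (hgc : ∀ x, x < c → g x = 0) :
    Continuous fun s => ∫ σ in (0:ℝ)..s, (s - σ) ^ (-α) * g σ := by
  have hM0 : 0 ≤ M := (abs_nonneg _).trans (hM 0)
  have key : ∀ s : ℝ, (∫ σ in (0:ℝ)..s, (s - σ) ^ (-α) * g σ)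
      = ∫ u, (Set.Ioc (0:ℝ) s).indicator (fun u => u ^ (-α) * g (s - u)) u := by
    intro s
    rcases le_or_gt s 0 with hs | hs
    · have h1 : ∀ σ ∈ Set.uIcc (0:ℝ) s, (s - σ) ^ (-α) * g σ = 0 := by
        intro σ hσ
        have : σ ≤ 0 := by
          rcases hσ with ⟨h, h'⟩
          simpa [max_eq_left hs] using h'
        rw [hgc σ (lt_of_le_of_lt this hc), mul_zero]
      rw [intervalIntegral.integral_congr h1]
      have h2 : Set.Ioc (0:ℝ) s = ∅ := Set.Ioc_eq_empty (by linarith)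
      simp [h2]
    · have hsub : (∫ σ in (0:ℝ)..s, (s - σ) ^ (-α) * g σ)
          = ∫ u in (0:ℝ)..s, u ^ (-α) * g (s - u) := by
        have h := intervalIntegral.integral_comp_sub_left
          (a := (0:ℝ)) (b := s) (fun u => u ^ (-α) * g (s - u)) s
        simp only [sub_self, sub_zero] at h
        rw [← h]
        apply intervalIntegral.integral_congr
        intro σ _
        simp [sub_sub_cancel]
      rw [hsub, intervalIntegral.integral_of_le hs.le,
        ← MeasureTheory.integral_indicator measurableSet_Ioc]
  rw [show (fun s : ℝ => ∫ σ in (0:ℝ)..s, (s - σ) ^ (-α) * g σ)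
      = fun s => ∫ u, (Set.Ioc (0:ℝ) s).indicator (fun u => u ^ (-α) * g (s - u)) u
      from funext key]
  rw [continuous_iff_continuousAt]
  intro s₀
  apply MeasureTheory.continuousAt_of_dominated
    (bound := (Set.Ioc (0:ℝ) (|s₀|+1)).indicator (fun u => u ^ (-α) * M))
  · refine Filter.Eventually.of_forall (fun s => ?_)
    apply Measurable.aestronglyMeasurable
    have hm : Measurable fun u : ℝ => u ^ (-α) := by measurability
    exact (hm.mul
      (hg.measurable.comp (measurable_const.sub measurable_id))).indicator measurableSet_Ioc
  · filter_upwards [Metric.ball_mem_nhds s₀ one_pos] with s hs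
    refine Filter.Eventually.of_forall (fun u => ?_)
    have hbnd_nonneg : 0 ≤ (Set.Ioc (0:ℝ) (|s₀|+1)).indicator (fun u => u ^ (-α) * M) u := by
      apply Set.indicator_nonneg
      intro u hu
      exact mul_nonneg (Real.rpow_nonneg hu.1.le _) hM0
    by_cases hu : u ∈ Set.Ioc (0:ℝ) s
    · rw [Set.indicator_of_mem hu]
      have hss : s < s₀ + 1 := by
        have := (abs_lt.mp (by simpa [Real.dist_eq] using hs)).2
        linarith
      have hu2 : u ∈ Set.Ioc (0:ℝ) (|s₀|+1) :=
        ⟨hu.1, hu.2.trans (by have := le_abs_self s₀; linarith)⟩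
      rw [Set.indicator_of_mem hu2]
      rw [Real.norm_eq_abs, abs_mul, abs_of_nonneg (Real.rpow_nonneg hu.1.le _)]
      exact mul_le_mul_of_nonneg_left (hM _) (Real.rpow_nonneg hu.1.le _)
    · rw [Set.indicator_of_notMem hu, norm_zero]
      exact hbnd_nonneg
  · have hInt : IntervalIntegrable (fun u : ℝ => u ^ (-α)) volume 0 (|s₀|+1) :=
      intervalIntegral.intervalIntegrable_rpow' (by linarith)
    have hIoc : MeasureTheory.IntegrableOn (fun u : ℝ => u ^ (-α))
        (Set.Ioc (0:ℝ) (|s₀|+1)) volume := hInt.1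
    exact MeasureTheory.IntegrableOn.integrable_indicator (hIoc.mul_const M) measurableSet_Ioc
  · have h0 : ∀ᵐ u : ℝ, u ≠ s₀ := by
      rw [MeasureTheory.ae_iff]
      have : {u : ℝ | ¬ u ≠ s₀} = {s₀} := by ext u; simp
      rw [this]
      exact measure_singleton s₀
    filter_upwards [h0] with u hu
    rcases le_or_gt u 0 with hu0 | hu0
    · have : (fun s => (Set.Ioc (0:ℝ) s).indicator (fun u => u ^ (-α) * g (s - u)) u)
          = fun _ => (0:ℝ) := by
        funext s
        exact Set.indicator_of_notMem (fun hmem => absurd hmem.1 (not_lt.2 hu0)) _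
      rw [this]; exact continuousAt_const
    · rcases lt_or_gt_of_ne hu with hlt | hgt
      · have hcont : ContinuousAt (fun s => u ^ (-α) * g (s - u)) s₀ :=
          (continuousAt_const.mul ((hg.continuousAt).comp
            ((continuous_id.sub continuous_const).continuousAt)))
        have hev : (fun s : ℝ => (Set.Ioc (0:ℝ) s).indicator
            (fun u' => u' ^ (-α) * g (s - u')) u) =ᶠ[nhds s₀]
            (fun s => u ^ (-α) * g (s - u)) := by
          filter_upwards [Ioi_mem_nhds hlt] with s hs
          exact Set.indicator_of_mem (Set.mem_Ioc.mpr ⟨hu0, le_of_lt hs⟩) _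
        exact hcont.congr_of_eventuallyEq hev
      · have hev : (fun s : ℝ => (Set.Ioc (0:ℝ) s).indicator
            (fun u' => u' ^ (-α) * g (s - u')) u) =ᶠ[nhds s₀]
            (fun _ => (0:ℝ)) := by
          filter_upwards [Iio_mem_nhds hgt] with s hs
          exact Set.indicator_of_notMem (fun hmem => absurd hmem.2 (not_le.2 hs)) _
        exact continuousAt_const.congr_of_eventuallyEq hev
/-- Under the standing construction with biorthogonal functionals, the function
`f_α(t,x) = φ(H(t,x)) · w(t)`, with `φ(s) = min{s+1,1}`, is continuous on `[0,1) × X`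
and locally Lipschitz. -/
theorem f_alpha_continuous_and_locally_Lipschitz
    (α : ℝ) (hα : α ∈ Set.Ioo (0 : ℝ) 1)
    (X : Type*) [NormedAddCommGroup X] [NormedSpace ℝ X] [CompleteSpace X]
    (t : ℕ → ℝ) (z : ℕ → ℝ → ℝ) (v : ℕ → X) (V : ℕ → X →L[ℝ] ℝ)
    (ht_mem : ∀ n, 1 ≤ n → t n ∈ Set.Ioo (0 : ℝ) 1)
    (ht_mono : ∀ n, 1 ≤ n → t n < t (n + 1))
    (ht_lim : Filter.Tendsto t Filter.atTop (nhds 1))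
    (ht_step : ∀ n, 2 ≤ n → t (n + 1) - t n < t n - t (n - 1))
    (hz1 : ∀ s : ℝ, z 1 s = 1)
    (hz_smooth : ∀ n, 2 ≤ n → ContDiff ℝ 1 (z n))
    (hz_one : ∀ n, 2 ≤ n → ∀ s ∈ Set.Icc (t n) (t (n + 1)), z n s = 1)
    (hz_mid : ∀ n, 2 ≤ n → ∀ s ∈ Set.Ioo ((t (n - 1) + t n) / 2) (t n) ∪
        Set.Ioo (t (n + 1)) ((t (n + 1) + t (n + 2)) / 2),
      0 < z n s ∧ z n s < 1)
    (hz_zero : ∀ n, 2 ≤ n → ∀ s : ℝ,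
      s ∉ Set.Ioo ((t (n - 1) + t n) / 2) ((t (n + 1) + t (n + 2)) / 2) → z n s = 0)
    (hz_deriv_nonneg : ∀ n, 2 ≤ n →
      ∀ s ∈ Set.Icc ((t (n - 1) + t n) / 2) (t n), 0 ≤ deriv (z n) s)
    (hz_deriv_nonpos : ∀ n, 2 ≤ n →
      ∀ s ∈ Set.Icc (t (n + 1)) ((t (n + 1) + t (n + 2)) / 2), deriv (z n) s ≤ 0)
    (hv : ∀ n, 1 ≤ n → ‖v n‖ = 1)
    (hV_norm : ∀ n, 1 ≤ n → ‖V n‖ ≤ 1)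
    (hV_biorth : ∀ n m, 1 ≤ n → 1 ≤ m → V n (v m) = if n = m then 1 else 0) :
    ∀ (w : ℝ → X) (H : ℝ → X → ℝ) (f : ℝ → X → X),
      (∀ s : ℝ, w s = ∑' n : ℕ,
        Set.indicator (Set.Ico (t (n + 1)) 1)
          (fun r : ℝ => (1 / Real.Gamma (1 - α)) *
            ∫ σ in (0 : ℝ)..r, ((r - σ) ^ (-α)) * deriv (z (n + 2)) σ) s • v (n + 2)) →
      (∀ (s : ℝ) (x : X), H s x =
        V 1 x * Set.indicator (Set.Ico (0 : ℝ) (t 1)) (fun _ => (1 : ℝ)) s +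
        ∑' i : ℕ,
          ((1 / ((i : ℝ) + 1) ^ 2) * V (i + 1) x *
              Set.indicator (Set.Ici (t (i + 1))) (fun _ => (1 : ℝ)) s +
            (1 / ((i : ℝ) + 2) ^ 2) * V (i + 2) x *
              ((s - t (i + 1)) / (t (i + 2) - t (i + 1))) *
              Set.indicator (Set.Ico (t (i + 1)) (t (i + 2))) (fun _ => (1 : ℝ)) s)) →
      (∀ (s : ℝ) (x : X), f s x = (min (H s x + 1) 1) • w s) →
      -- f_α is continuous on [0,1) × X
      ContinuousOn (fun p : ℝ × X => f p.1 p.2) (Set.Ico 0 1 ×ˢ Set.univ) ∧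
      -- f_α is locally Lipschitz on [0,1) × X
      (∀ t₀ ∈ Set.Ico (0 : ℝ) 1, ∀ x₀ : X, ∃ r > (0 : ℝ), ∃ L > (0 : ℝ),
        ∀ (s : ℝ) (x y : X), s ∈ Set.Ico (0 : ℝ) 1 →
          dist (s, x) (t₀, x₀) < r → dist (s, y) (t₀, x₀) < r →
          ‖f s x - f s y‖ ≤ L * ‖x - y‖) := by
  intro w H f hw hH hf
  obtain ⟨hα0, hα1⟩ := hα
  -- monotonicity of t
  have ht_mono' : ∀ m n, 1 ≤ m → m ≤ n → t m ≤ t n := by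
    intro m n hm hmn
    induction n, hmn using Nat.le_induction with
    | base => exact le_rfl
    | succ n hn ih => exact ih.trans (ht_mono n (hm.trans hn)).le
  -- continuity of derivatives of z
  have hzc : ∀ n, 2 ≤ n → Continuous (deriv (z n)) :=
    fun n hn => (hz_smooth n hn).continuous_deriv le_rfl
  -- vanishing of derivative left of the support
  have hzd0 : ∀ n, 2 ≤ n → ∀ σ : ℝ, σ < (t (n-1) + t n) / 2 → deriv (z n) σ = 0 := by
    intro n hn σ hσ
    have hev : z n =ᶠ[nhds σ] fun _ => (0:ℝ) := by
      filter_upwards [Iio_mem_nhds hσ] with x hx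
      exact hz_zero n hn x (fun hmem => absurd hmem.1 (not_lt.2 hx.le))
    rw [hev.deriv_eq]
    exact deriv_const σ 0
  have hzd1 : ∀ n, 2 ≤ n → ∀ σ : ℝ, (t (n+1) + t (n+2)) / 2 < σ → deriv (z n) σ = 0 := by
    intro n hn σ hσ
    have hev : z n =ᶠ[nhds σ] fun _ => (0:ℝ) := by
      filter_upwards [Ioi_mem_nhds hσ] with x hx
      exact hz_zero n hn x (fun hmem => absurd hmem.2 (not_lt.2 hx.le))
    rw [hev.deriv_eq]
    exact deriv_const σ 0
  -- boundedness of derivatives of z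
  have hMb : ∀ n, 2 ≤ n → ∃ M : ℝ, ∀ σ : ℝ, |deriv (z n) σ| ≤ M := by
    intro n hn
    obtain ⟨C, hC⟩ := (isCompact_Icc (a := (0:ℝ)) (b := 1)).exists_bound_of_continuousOn
      (hzc n hn).continuousOn
    refine ⟨max C 0, fun σ => ?_⟩
    by_cases hσ : σ ∈ Set.Icc (0:ℝ) 1
    · exact le_trans (by simpa [Real.norm_eq_abs] using hC σ hσ) (le_max_left _ _)
    · have hpos : 0 < (t (n-1) + t n) / 2 := by
        have h1 := (ht_mem (n-1) (by omega)).1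
        have h2 := (ht_mem n (by omega)).1
        linarith
      have hlt1 : (t (n+1) + t (n+2)) / 2 < 1 := by
        have h1 := (ht_mem (n+1) (by omega)).2
        have h2 := (ht_mem (n+2) (by omega)).2
        linarith
      rcases lt_or_ge σ 0 with h | h
      · rw [hzd0 n hn σ (by linarith)]
        simp [le_max_iff]
      · have h1 : 1 < σ := by
          rcases lt_or_ge 1 σ with h' | h'
          · exact h'
          · exact absurd ⟨h, h'⟩ hσ
        rw [hzd1 n hn σ (by linarith)]
        simp [le_max_iff]
  -- continuity of the fractional-integral coefficients
  have hcint : ∀ n : ℕ, Continuous fun s : ℝ =>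
      (1 / Real.Gamma (1 - α)) * ∫ σ in (0:ℝ)..s, ((s - σ) ^ (-α)) * deriv (z (n+2)) σ := by
    intro n
    have h2 : (2:ℕ) ≤ n + 2 := by omega
    obtain ⟨M, hM⟩ := hMb (n+2) h2
    have hpos : 0 < (t (n+1) + t (n+2)) / 2 := by
      have h1 := (ht_mem (n+1) (by omega)).1
      have h2 := (ht_mem (n+2) (by omega)).1
      linarith
    exact continuous_const.mul
      (cont_fracint α hα1 _ (hzc _ h2) M hM ((t (n+1) + t (n+2)) / 2) hpos
        (fun x hx => hzd0 (n+2) h2 x hx))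
  -- vanishing of the coefficients before t (n+1)
  have hczero : ∀ (n : ℕ) (s : ℝ), s < t (n+1) →
      (∫ σ in (0:ℝ)..s, ((s - σ) ^ (-α)) * deriv (z (n+2)) σ) = 0 := by
    intro n s hs
    have h2 : (2:ℕ) ≤ n + 2 := by omega
    have ht1 : 0 < t (n+1) := (ht_mem (n+1) (by omega)).1
    have ht2 : t (n+1) < t (n+2) := ht_mono (n+1) (by omega)
    have key : ∀ σ ∈ Set.uIcc (0:ℝ) s, ((s - σ) ^ (-α)) * deriv (z (n+2)) σ = 0 := by
      intro σ hσ
      have hσ' : σ ≤ max 0 s := hσ.2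
      have hσ'' : σ < (t (n+1) + t (n+2)) / 2 :=
        lt_of_le_of_lt hσ' (max_lt (by linarith) (by linarith))
      rw [hzd0 (n+2) h2 σ hσ'', mul_zero]
    rw [intervalIntegral.integral_congr key, intervalIntegral.integral_zero]
  -- finite representation of w
  have wrep : ∀ N : ℕ, 1 ≤ N → ∀ s ∈ Set.Ico (0:ℝ) (t N),
      w s = ∑ n ∈ Finset.range (N - 1),
        ((1 / Real.Gamma (1 - α)) *
          ∫ σ in (0:ℝ)..s, ((s - σ) ^ (-α)) * deriv (z (n+2)) σ) • v (n+2) := by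
    intro N hN s hs
    have htN1 : t N < 1 := (ht_mem N hN).2
    rw [hw s, tsum_eq_sum (s := Finset.range (N-1)) ?_]
    · apply Finset.sum_congr rfl
      intro n _
      rcases lt_or_ge s (t (n+1)) with h | h
      · rw [Set.indicator_of_notMem (fun hmem => absurd hmem.1 (not_le.2 h)), hczero n s h]
        simp
      · rw [Set.indicator_of_mem (Set.mem_Ico.mpr ⟨h, lt_trans hs.2 htN1⟩)]
    · intro n hn
      have hn' : N - 1 ≤ n := by simpa using hn
      have hle : t N ≤ t (n+1) := ht_mono' N (n+1) hN (by omega)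
      rw [Set.indicator_of_notMem
        (fun hmem => absurd hmem.1 (not_le.2 (lt_of_lt_of_le hs.2 hle)))]
      simp
  -- the clamp identity
  have per : ∀ (i : ℕ) (s : ℝ),
      Set.indicator (Set.Ici (t (i+2))) (fun _ => (1:ℝ)) s
        + ((s - t (i+1)) / (t (i+2) - t (i+1))) *
          Set.indicator (Set.Ico (t (i+1)) (t (i+2))) (fun _ => (1:ℝ)) s
      = max 0 (min ((s - t (i+1)) / (t (i+2) - t (i+1))) 1) := by
    intro i s
    have hlt : t (i+1) < t (i+2) := ht_mono (i+1) (by omega)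
    have hd : 0 < t (i+2) - t (i+1) := sub_pos.2 hlt
    rcases lt_or_ge s (t (i+1)) with h1 | h1
    · rw [Set.indicator_of_notMem
          (fun hm => absurd (Set.mem_Ici.mp hm) (not_le.2 (by linarith))),
        Set.indicator_of_notMem (fun hm => absurd hm.1 (not_le.2 h1))]
      have hr : (s - t (i+1)) / (t (i+2) - t (i+1)) ≤ 0 :=
        div_nonpos_iff.2 (Or.inr ⟨by linarith, hd.le⟩)
      rw [mul_zero, add_zero, min_eq_left (by linarith), max_eq_left hr]
    · rcases lt_or_ge s (t (i+2)) with h2 | h2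
      · rw [Set.indicator_of_notMem
            (fun hm => absurd (Set.mem_Ici.mp hm) (not_le.2 h2)),
          Set.indicator_of_mem (Set.mem_Ico.mpr ⟨h1, h2⟩)]
        have h0 : 0 ≤ (s - t (i+1)) / (t (i+2) - t (i+1)) := div_nonneg (by linarith) hd.le
        have hle1 : (s - t (i+1)) / (t (i+2) - t (i+1)) ≤ 1 := (div_le_one hd).2 (by linarith)
        rw [min_eq_left hle1, max_eq_right h0, zero_add, mul_one]
      · rw [Set.indicator_of_mem (Set.mem_Ici.mpr h2),
          Set.indicator_of_notMem (fun hm => absurd hm.2 (not_lt.2 h2))]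
        have hge : 1 ≤ (s - t (i+1)) / (t (i+2) - t (i+1)) := (one_le_div hd).2 (by linarith)
        rw [min_eq_right hge, max_eq_right zero_le_one, mul_zero, add_zero]
  -- finite representation of H
  have Hrep : ∀ N : ℕ, 2 ≤ N → ∀ s ∈ Set.Ico (0:ℝ) (t N), ∀ x : X,
      H s x = V 1 x + ∑ i ∈ Finset.range (N-1),
        (1 / ((i:ℝ) + 2) ^ 2) * V (i+2) x *
          max 0 (min ((s - t (i+1)) / (t (i+2) - t (i+1))) 1) := by
    intro N hN s hs x
    obtain ⟨hs0, hsN⟩ := hs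
    rw [hH s x, tsum_eq_sum (s := Finset.range (N-1)) ?_]
    · have hsplit : ∀ i ∈ Finset.range (N-1),
          (1 / ((i:ℝ)+1)^2) * V (i+1) x *
              Set.indicator (Set.Ici (t (i+1))) (fun _ => (1:ℝ)) s
            + (1 / ((i:ℝ)+2)^2) * V (i+2) x * ((s - t (i+1)) / (t (i+2) - t (i+1))) *
              Set.indicator (Set.Ico (t (i+1)) (t (i+2))) (fun _ => (1:ℝ)) s
          = ((1 / ((i:ℝ)+1)^2) * V (i+1) x *
              Set.indicator (Set.Ici (t (i+1))) (fun _ => (1:ℝ)) s)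
            + ((1 / ((i:ℝ)+2)^2) * V (i+2) x *
                max 0 (min ((s - t (i+1)) / (t (i+2) - t (i+1))) 1)
              - (1 / ((i:ℝ)+2)^2) * V (i+2) x *
                Set.indicator (Set.Ici (t (i+2))) (fun _ => (1:ℝ)) s) := by
        intro i _
        have h := per i s
        rw [← h]
        ring
      rw [Finset.sum_congr rfl hsplit, Finset.sum_add_distrib, Finset.sum_sub_distrib]
      have hN1 : N - 1 = (N - 2) + 1 := by omega
      have hA : ∑ i ∈ Finset.range (N-1), (1 / ((i:ℝ)+1)^2) * V (i+1) x *
            Set.indicator (Set.Ici (t (i+1))) (fun _ => (1:ℝ)) s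
          = V 1 x * Set.indicator (Set.Ici (t 1)) (fun _ => (1:ℝ)) s
            + ∑ i ∈ Finset.range (N-2), (1 / ((i:ℝ)+2)^2) * V (i+2) x *
              Set.indicator (Set.Ici (t (i+2))) (fun _ => (1:ℝ)) s := by
        rw [hN1, Finset.sum_range_succ', add_comm]
        congr 1
        · norm_num
        · apply Finset.sum_congr rfl
          intro i _
          have hidx : i + 1 + 1 = i + 2 := rfl
          rw [hidx]
          push_cast
          ring
      have hE : ∑ i ∈ Finset.range (N-1), (1 / ((i:ℝ)+2)^2) * V (i+2) x *
            Set.indicator (Set.Ici (t (i+2))) (fun _ => (1:ℝ)) s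
          = ∑ i ∈ Finset.range (N-2), (1 / ((i:ℝ)+2)^2) * V (i+2) x *
            Set.indicator (Set.Ici (t (i+2))) (fun _ => (1:ℝ)) s := by
        rw [hN1, Finset.sum_range_succ]
        have hidx : N - 2 + 2 = N := by omega
        rw [hidx]
        have h0 : Set.indicator (Set.Ici (t N)) (fun _ => (1:ℝ)) s = 0 :=
          Set.indicator_of_notMem (fun hm => absurd (Set.mem_Ici.mp hm) (not_le.2 hsN)) _
        rw [h0, mul_zero, add_zero]
      have hχ : Set.indicator (Set.Ico (0:ℝ) (t 1)) (fun _ => (1:ℝ)) s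
          + Set.indicator (Set.Ici (t 1)) (fun _ => (1:ℝ)) s = 1 := by
        rcases lt_or_ge s (t 1) with h | h
        · rw [Set.indicator_of_mem (Set.mem_Ico.mpr ⟨hs0, h⟩),
            Set.indicator_of_notMem (fun hm => absurd (Set.mem_Ici.mp hm) (not_le.2 h))]
          norm_num
        · rw [Set.indicator_of_notMem (fun hm => absurd hm.2 (not_lt.2 h)),
            Set.indicator_of_mem (Set.mem_Ici.mpr h)]
          norm_num
      have hVχ : V 1 x * Set.indicator (Set.Ico (0:ℝ) (t 1)) (fun _ => (1:ℝ)) s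
          + V 1 x * Set.indicator (Set.Ici (t 1)) (fun _ => (1:ℝ)) s = V 1 x := by
        rw [← mul_add, hχ, mul_one]
      rw [hA, hE]
      linarith [hVχ]
    · intro i hi
      have hi' : N - 1 ≤ i := by simpa using hi
      have htle : t N ≤ t (i+1) := ht_mono' N (i+1) (by omega) (by omega)
      have hIci : Set.indicator (Set.Ici (t (i+1))) (fun _ => (1:ℝ)) s = 0 :=
        Set.indicator_of_notMem
          (fun hm => absurd (Set.mem_Ici.mp hm) (not_le.2 (by linarith))) _
      have hIco : Set.indicator (Set.Ico (t (i+1)) (t (i+2))) (fun _ => (1:ℝ)) s = 0 :=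
        Set.indicator_of_notMem (fun hm => absurd hm.1 (not_le.2 (by linarith))) _
      rw [hIci, hIco]
      ring
  -- Lipschitz estimate for H in x
  have hVle : ∀ m : ℕ, 1 ≤ m → ∀ u : X, |V m u| ≤ ‖u‖ := by
    intro m hm u
    rw [← Real.norm_eq_abs]
    calc ‖V m u‖ ≤ ‖V m‖ * ‖u‖ := (V m).le_opNorm u
      _ ≤ 1 * ‖u‖ := mul_le_mul_of_nonneg_right (hV_norm m hm) (norm_nonneg u)
      _ = ‖u‖ := one_mul _
  have hHlip : ∀ N : ℕ, 2 ≤ N → ∀ s ∈ Set.Ico (0:ℝ) (t N), ∀ x y : X,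
      |H s x - H s y| ≤ (N:ℝ) * ‖x - y‖ := by
    intro N hN s hs x y
    rw [Hrep N hN s hs x, Hrep N hN s hs y]
    have hdiff : (V 1 x + ∑ i ∈ Finset.range (N-1),
          (1 / ((i:ℝ)+2)^2) * V (i+2) x *
            max 0 (min ((s - t (i+1)) / (t (i+2) - t (i+1))) 1))
        - (V 1 y + ∑ i ∈ Finset.range (N-1),
          (1 / ((i:ℝ)+2)^2) * V (i+2) y *
            max 0 (min ((s - t (i+1)) / (t (i+2) - t (i+1))) 1))
        = V 1 (x - y) + ∑ i ∈ Finset.range (N-1),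
          (1 / ((i:ℝ)+2)^2) * V (i+2) (x - y) *
            max 0 (min ((s - t (i+1)) / (t (i+2) - t (i+1))) 1) := by
      rw [map_sub (V 1), add_sub_add_comm, ← Finset.sum_sub_distrib]
      congr 1
      apply Finset.sum_congr rfl
      intro i _
      rw [map_sub]
      ring
    rw [hdiff]
    have hterm : ∀ i ∈ Finset.range (N-1),
        |(1 / ((i:ℝ)+2)^2) * V (i+2) (x - y) *
          max 0 (min ((s - t (i+1)) / (t (i+2) - t (i+1))) 1)| ≤ ‖x - y‖ := by
      intro i _
      have hcl : |max 0 (min ((s - t (i+1)) / (t (i+2) - t (i+1))) 1)| ≤ 1 := by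
        rw [abs_of_nonneg (le_max_left 0 _)]
        exact max_le zero_le_one (min_le_right _ _)
      have hco : |1 / ((i:ℝ)+2)^2| ≤ 1 := by
        rw [abs_of_nonneg (by positivity), div_le_one (by positivity)]
        nlinarith [Nat.cast_nonneg (α := ℝ) i]
      calc |(1 / ((i:ℝ)+2)^2) * V (i+2) (x - y) *
            max 0 (min ((s - t (i+1)) / (t (i+2) - t (i+1))) 1)|
          = |1 / ((i:ℝ)+2)^2| * |V (i+2) (x - y)| *
            |max 0 (min ((s - t (i+1)) / (t (i+2) - t (i+1))) 1)| := by
            rw [abs_mul, abs_mul]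
        _ ≤ 1 * ‖x - y‖ * 1 := by
            apply mul_le_mul _ hcl (abs_nonneg _) (by positivity)
            exact mul_le_mul hco (hVle (i+2) (by omega) _) (abs_nonneg _) zero_le_one
        _ = ‖x - y‖ := by ring
    have hsum_le : ∑ i ∈ Finset.range (N-1),
        |(1 / ((i:ℝ)+2)^2) * V (i+2) (x - y) *
          max 0 (min ((s - t (i+1)) / (t (i+2) - t (i+1))) 1)| ≤ ((N-1:ℕ):ℝ) * ‖x - y‖ := by
      have h := Finset.sum_le_card_nsmul (Finset.range (N-1)) _ (‖x - y‖) hterm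
      simpa [Finset.card_range, nsmul_eq_mul] using h
    calc |V 1 (x - y) + ∑ i ∈ Finset.range (N-1),
          (1 / ((i:ℝ)+2)^2) * V (i+2) (x - y) *
            max 0 (min ((s - t (i+1)) / (t (i+2) - t (i+1))) 1)|
        ≤ |V 1 (x - y)| + |∑ i ∈ Finset.range (N-1),
            (1 / ((i:ℝ)+2)^2) * V (i+2) (x - y) *
              max 0 (min ((s - t (i+1)) / (t (i+2) - t (i+1))) 1)| := abs_add_le _ _
      _ ≤ ‖x - y‖ + ((N-1:ℕ):ℝ) * ‖x - y‖ :=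
          add_le_add (hVle 1 le_rfl _) ((Finset.abs_sum_le_sum_abs _ _).trans hsum_le)
      _ ≤ (N:ℝ) * ‖x - y‖ := by
          rw [Nat.cast_sub (by omega : 1 ≤ N)]
          exact le_of_eq (by push_cast; ring)
  constructor
  · -- continuity
    intro p hp
    have hp1 : p.1 ∈ Set.Ico (0:ℝ) 1 := hp.1
    have hex : ∃ N : ℕ, 2 ≤ N ∧ p.1 < t N := by
      have h1 : ∀ᶠ n in Filter.atTop, p.1 < t n := ht_lim.eventually (eventually_gt_nhds hp1.2)
      obtain ⟨N, hN⟩ := (h1.and (Filter.eventually_ge_atTop 2)).exists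
      exact ⟨N, hN.2, hN.1⟩
    obtain ⟨N, hN2, hpN⟩ := hex
    have hGcont : Continuous (fun q : ℝ × X =>
        (min ((V 1 q.2 + ∑ i ∈ Finset.range (N-1),
            (1 / ((i:ℝ)+2)^2) * V (i+2) q.2 *
              max 0 (min ((q.1 - t (i+1)) / (t (i+2) - t (i+1))) 1)) + 1) 1)
        • (∑ n ∈ Finset.range (N-1),
            ((1 / Real.Gamma (1 - α)) *
              ∫ σ in (0:ℝ)..q.1, ((q.1 - σ) ^ (-α)) * deriv (z (n+2)) σ) • v (n+2))) := by
      apply Continuous.smul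
      · apply Continuous.min ?_ continuous_const
        apply Continuous.add ?_ continuous_const
        apply Continuous.add ((V 1).continuous.comp continuous_snd)
        apply continuous_finset_sum
        intro i _
        apply Continuous.mul
        · exact continuous_const.mul ((V (i+2)).continuous.comp continuous_snd)
        · apply Continuous.max continuous_const
          apply Continuous.min ?_ continuous_const
          exact ((continuous_fst.sub continuous_const).div_const _)
      · exact (continuous_finset_sum _
          (fun n _ => (hcint n).smul continuous_const)).comp continuous_fst
    have hmem : (Set.Iio (t N) ×ˢ (Set.univ : Set X)) ∈ nhds p :=
      prod_mem_nhds (Iio_mem_nhds hpN) Filter.univ_mem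
    rw [← continuousWithinAt_inter hmem]
    apply (hGcont.continuousAt).continuousWithinAt.congr
    · intro q hq
      have hq1 : q.1 ∈ Set.Ico (0:ℝ) 1 := hq.1.1
      have hq2 : q.1 < t N := hq.2.1
      rw [hf q.1 q.2, wrep N (by omega) q.1 ⟨hq1.1, hq2⟩,
        Hrep N hN2 q.1 ⟨hq1.1, hq2⟩ q.2]
    · rw [hf p.1 p.2, wrep N (by omega) p.1 ⟨hp1.1, hpN⟩,
        Hrep N hN2 p.1 ⟨hp1.1, hpN⟩ p.2]
  · -- local Lipschitz
    intro t₀ ht₀ x₀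
    have h2 : (1 + t₀)/2 < 1 := by
      obtain ⟨h, h'⟩ := ht₀
      linarith
    have hex : ∃ N : ℕ, 2 ≤ N ∧ (1 + t₀)/2 < t N := by
      have h1 : ∀ᶠ n in Filter.atTop, (1 + t₀)/2 < t n :=
        ht_lim.eventually (eventually_gt_nhds h2)
      obtain ⟨N, hN⟩ := (h1.and (Filter.eventually_ge_atTop 2)).exists
      exact ⟨N, hN.2, hN.1⟩
    obtain ⟨N, hN2, hNt⟩ := hex
    have hWcont : Continuous (fun s : ℝ => ∑ n ∈ Finset.range (N-1),
        ((1 / Real.Gamma (1 - α)) *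
          ∫ σ in (0:ℝ)..s, ((s - σ) ^ (-α)) * deriv (z (n+2)) σ) • v (n+2)) :=
      continuous_finset_sum _ (fun n _ => (hcint n).smul continuous_const)
    obtain ⟨C, hC⟩ := (isCompact_Icc (a := (0:ℝ)) (b := (1 + t₀)/2)).exists_bound_of_continuousOn
      hWcont.continuousOn
    have hC0 : 0 ≤ C := le_trans (norm_nonneg _) (hC 0 ⟨le_rfl, by linarith [ht₀.1]⟩)
    have hL0 : 0 < (N:ℝ) * C + 1 := by
      have : 0 ≤ (N:ℝ) * C := mul_nonneg (Nat.cast_nonneg N) hC0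
      linarith
    refine ⟨(1 - t₀)/2, by linarith [ht₀.2], (N:ℝ) * C + 1, hL0, ?_⟩
    intro s x y hs hdx hdy
    have hst : |s - t₀| < (1 - t₀)/2 := by
      have h1 : dist s t₀ ≤ dist (s, x) (t₀, x₀) := by
        rw [Prod.dist_eq]
        exact le_max_left _ _
      have := lt_of_le_of_lt h1 hdx
      rwa [Real.dist_eq] at this
    have hsup : s < (1 + t₀)/2 := by
      have := (abs_lt.mp hst).2
      linarith
    have hsN : s < t N := lt_trans hsup hNt
    have hsIco : s ∈ Set.Ico (0:ℝ) (t N) := ⟨hs.1, hsN⟩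
    have hwb : ‖w s‖ ≤ C := by
      rw [wrep N (by omega) s hsIco]
      exact hC s ⟨hs.1, hsup.le⟩
    have hHl := hHlip N hN2 s hsIco x y
    rw [hf s x, hf s y, ← sub_smul, norm_smul, Real.norm_eq_abs]
    calc |min (H s x + 1) 1 - min (H s y + 1) 1| * ‖w s‖
        ≤ |H s x - H s y| * ‖w s‖ :=
          mul_le_mul_of_nonneg_right (min_lip _ _) (norm_nonneg _)
      _ ≤ ((N:ℝ) * ‖x - y‖) * C :=
          mul_le_mul hHl hwb (norm_nonneg _) (by positivity)
      _ ≤ ((N:ℝ) * C + 1) * ‖x - y‖ := by nlinarith [norm_nonneg (x - y)]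
end

section
/- Under the standing construction with biorthogonal functionals, let u(t) := Σ_{n=1}^∞ z_n(t) v_n, w(t) := Σ_{n=1}^∞ χ_{[t_n,1)}(t) · (1/Γ(1−α)) (∫_0^t (t−s)^{−α} z_{n+1}′(s) ds) v_{n+1}, H(t,x) := V₁*(x) χ_{[0,t₁)}(t) + Σ_{i=1}^∞ [ i^{−2} V_i*(x) χ_{[t_i,∞)}(t) + (i+1)^{−2} V_{i+1}*(x) ((t − t_i)/(t_{i+1} − t_i)) χ_{[t_i, t_{i+1})}(t) ], φ(s) := min{s+1, 1} and f_α(t,x) := φ(H(t,x)) w(t). Then H(t, u(t)) ≥ 0 for all t ∈ [0,1), hence φ(H(t,u(t))) = 1 and f_α(t, u(t)) = w(t) for all t ∈ [0,1); consequently u is a solution of the fractional Cauchy problem cD^α u(t) = f_α(t, u(t)) on [0,1) with u(0) = v₁, i.e., for every t ∈ (0,1) the map r ↦ (1/Γ(1−α)) ∫_0^r (r−s)^{−α}(u(s)−v₁) ds is differentiable at t with derivative f_α(t,u(t)). -/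
/-!
Since `t_n → 1`, on `[0, t_{K+1}]` only `z_1, …, z_K` are nonzero, so `u` is locally a finite sum
and biorthogonality gives `V_i*(u(t)) = z_i(t) ≥ 0`; every term of `H(t, u(t))` is then
nonnegative, whence `φ(H(t, u(t))) = 1` and `f_α(t, u(t)) = w(t)`.

For the fractional equation, `u - v₁ = ∑_{i=2}^{K} z_i v_i` on `[0, t_{K+1}]`, and each `z_i`
is `C¹` with compact support in `(0, ∞)`. Writing `∫_0^r (r - σ)^{-α} z_i(σ) dσ` as the
convolution of the locally integrable kernel `τ₊^{-α}` with `z_i`, the derivative in `r` falls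
on `z_i`, which produces exactly the terms of `w`.
-/

open Set Filter MeasureTheory

section RiemannLiouville

variable {E : Type*} [NormedAddCommGroup E] [NormedSpace ℝ E]

theorem locallyIntegrable_indicator_Ioi_rpow_neg {α : ℝ} (hα : α < 1) :
    LocallyIntegrable ((Ioi (0 : ℝ)).indicator fun τ => τ ^ (-α)) := by
  refine locallyIntegrable_of_norm_le_rpow (μ := volume) (C := 1) (α := α) (by simp)
    (by simpa using hα) (Eventually.of_forall fun x => ?_)
    ((measurable_id.pow_const _).indicator measurableSet_Ioi).aestronglyMeasurable
  by_cases hx : x ∈ Ioi 0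
  · rw [indicator_of_mem hx, one_mul, Real.norm_of_nonneg hx.le,
      Real.norm_of_nonneg (Real.rpow_nonneg hx.le _)]
  · rw [indicator_of_notMem hx, norm_zero]
    positivity

theorem convolution_indicator_Ioi_rpow_neg {α : ℝ} {g : ℝ → E} (hg : ∀ x < 0, g x = 0)
    {r : ℝ} (hr : 0 ≤ r) :
    convolution ((Ioi (0 : ℝ)).indicator fun τ => τ ^ (-α)) g
        (ContinuousLinearMap.lsmul ℝ ℝ) volume r
      = ∫ σ in (0 : ℝ)..r, (r - σ) ^ (-α) • g σ := by
  have hpt : (fun τ => ContinuousLinearMap.lsmul ℝ ℝ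
        ((Ioi (0 : ℝ)).indicator (fun τ => τ ^ (-α)) τ) (g (r - τ)))
      = (Ioc 0 r).indicator fun τ => τ ^ (-α) • g (r - τ) := by
    ext τ
    by_cases hτ : τ ∈ Ioc 0 r
    · simp [indicator_of_mem hτ, indicator_of_mem (show τ ∈ Ioi 0 from hτ.1)]
    · rw [indicator_of_notMem hτ]
      by_cases hτ0 : 0 < τ
      · rw [hg _ (by linarith [not_and.1 hτ hτ0]), map_zero]
      · simp [indicator_of_notMem (show τ ∉ Ioi 0 from hτ0)]
  rw [convolution_def, hpt, integral_indicator measurableSet_Ioc,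
    ← intervalIntegral.integral_of_le hr]
  simpa using (intervalIntegral.integral_comp_sub_left
    (fun σ => (r - σ) ^ (-α) • g σ) r (a := 0) (b := r))

theorem deriv_eq_zero_of_forall_lt_eq_zero {g : ℝ → E} {a x : ℝ} (hg : ∀ y < a, g y = 0)
    (hx : x < a) : deriv g x = 0 := by
  have hg_nhds : g =ᶠ[nhds x] fun _ => 0 := (eventually_lt_nhds hx).mono hg
  rw [hg_nhds.deriv_eq, deriv_const]

theorem hasDerivAt_intervalIntegral_rpow_neg_smul {α : ℝ} (hα : α < 1) {g : ℝ → E}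
    (hg : ContDiff ℝ 1 g) (hgc : HasCompactSupport g) (hg0 : ∀ x < 0, g x = 0)
    {s : ℝ} (hs : 0 < s) :
    HasDerivAt (fun r => ∫ σ in (0 : ℝ)..r, (r - σ) ^ (-α) • g σ)
      (∫ σ in (0 : ℝ)..s, (s - σ) ^ (-α) • deriv g σ) s := by
  have hconv := hgc.hasDerivAt_convolution_right (ContinuousLinearMap.lsmul ℝ ℝ) (μ := volume)
    (locallyIntegrable_indicator_Ioi_rpow_neg hα) hg s
  rw [convolution_indicator_Ioi_rpow_neg
    (fun x hx => deriv_eq_zero_of_forall_lt_eq_zero hg0 hx) hs.le] at hconv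
  refine hconv.congr_of_eventuallyEq ?_
  filter_upwards [lt_mem_nhds hs] with r hr
  exact (convolution_indicator_Ioi_rpow_neg hg0 hr.le).symm

theorem intervalIntegrable_rpow_neg_smul {α : ℝ} (hα : α < 1) {g : ℝ → E} (hg : Continuous g)
    (r : ℝ) : IntervalIntegrable (fun σ => (r - σ) ^ (-α) • g σ) volume 0 r := by
  have hker : IntervalIntegrable (fun σ : ℝ => (r - σ) ^ (-α)) volume 0 r := by
    simpa using (intervalIntegral.intervalIntegrable_rpow' (r := -α) (a := r) (b := 0)
      (by linarith)).comp_sub_left r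
  exact hker.smul_continuousOn hg.continuousOn

end RiemannLiouville

theorem apply_tsum_smul_of_biorthogonal {ι X : Type*} [AddCommGroup X] [Module ℝ X]
    [TopologicalSpace X] (B : X →L[ℝ] ℝ) {b : ι → X} {c : ι → ℝ} {i : ι} (hBi : B (b i) = 1)
    (hB : ∀ j ≠ i, B (b j) = 0) (hc : Summable fun j => c j • b j) :
    B (∑' j, c j • b j) = c i := by
  rw [B.map_tsum hc, tsum_eq_single i fun j hj => by simp [hB j hj]]
  simp [hBi]

theorem nonneg_of_eqOn_one_of_pos {g : ℝ → ℝ} {a b c d : ℝ} (hone : ∀ x ∈ Icc b c, g x = 1)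
    (hpos : ∀ x ∈ Ioo a b ∪ Ioo c d, 0 < g x) (hzero : ∀ x, x ∉ Ioo a d → g x = 0) (x : ℝ) :
    0 ≤ g x := by
  by_cases hx : x ∈ Ioo a d
  · rcases lt_or_ge x b with hxb | hbx
    · exact (hpos x (Or.inl ⟨hx.1, hxb⟩)).le
    rcases le_or_gt x c with hxc | hcx
    · rw [hone x ⟨hbx, hxc⟩]; exact zero_le_one
    · exact (hpos x (Or.inr ⟨hcx, hx.2⟩)).le
  · rw [hzero x hx]

section StandingConstruction

variable {X : Type*} [NormedAddCommGroup X] [NormedSpace ℝ X] {α : ℝ}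
  {t : ℕ → ℝ} {z : ℕ → ℝ → ℝ} {v : ℕ → X} {V : ℕ → X →L[ℝ] ℝ}

theorem monotoneOn_Ici_one_of_lt_succ (ht_mono : ∀ n, 1 ≤ n → t n < t (n + 1)) :
    MonotoneOn t (Ici 1) :=
  (strictMonoOn_Ici_of_pred_lt fun m hm => by
    simpa [Nat.sub_add_cancel hm.le] using ht_mono (m - 1) (by omega)).monotoneOn

theorem bump_eq_zero_of_le (ht_mono : ∀ n, 1 ≤ n → t n < t (n + 1))
    (hz_zero : ∀ n, 2 ≤ n → ∀ s : ℝ,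
      s ∉ Set.Ioo ((t (n - 1) + t n) / 2) ((t (n + 1) + t (n + 2)) / 2) → z n s = 0)
    {N n : ℕ} (hN : 1 ≤ N) (hNn : N < n) {x : ℝ} (hx : x ≤ t N) : z n x = 0 := by
  refine hz_zero n (by omega) x fun hmem => ?_
  have hle : t N ≤ t (n - 1) :=
    monotoneOn_Ici_one_of_lt_succ ht_mono hN (show 1 ≤ n - 1 by omega) (by omega)
  have hlt := ht_mono (n - 1) (by omega)
  rw [Nat.sub_add_cancel (by omega)] at hlt
  linarith [hmem.1]

theorem bump_smul_eq_zero_of_notMem_range (ht_mono : ∀ n, 1 ≤ n → t n < t (n + 1))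
    (hz_zero : ∀ n, 2 ≤ n → ∀ s : ℝ,
      s ∉ Set.Ioo ((t (n - 1) + t n) / 2) ((t (n + 1) + t (n + 2)) / 2) → z n s = 0)
    {N : ℕ} (hN : 1 ≤ N) {x : ℝ} (hx : x ≤ t N) :
    ∀ n ∉ Finset.range N, z (n + 1) x • v (n + 1) = 0 := fun n hn => by
  rw [bump_eq_zero_of_le ht_mono hz_zero hN (by simpa using hn) hx, zero_smul]

theorem exists_lt_succ_of_tendsto (ht_lim : Tendsto t atTop (nhds 1)) {s : ℝ} (hs : s < 1) :
    ∃ K, s < t (K + 1) :=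
  (((tendsto_add_atTop_iff_nat 1).2 ht_lim).eventually (eventually_gt_nhds hs)).exists

theorem bump_nonneg (hz1 : ∀ s : ℝ, z 1 s = 1)
    (hz_one : ∀ n, 2 ≤ n → ∀ s ∈ Set.Icc (t n) (t (n + 1)), z n s = 1)
    (hz_mid : ∀ n, 2 ≤ n → ∀ s ∈ Set.Ioo ((t (n - 1) + t n) / 2) (t n) ∪
        Set.Ioo (t (n + 1)) ((t (n + 1) + t (n + 2)) / 2),
      0 < z n s ∧ z n s < 1)
    (hz_zero : ∀ n, 2 ≤ n → ∀ s : ℝ,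
      s ∉ Set.Ioo ((t (n - 1) + t n) / 2) ((t (n + 1) + t (n + 2)) / 2) → z n s = 0)
    {n : ℕ} (hn : 1 ≤ n) (x : ℝ) : 0 ≤ z n x := by
  rcases hn.eq_or_lt with rfl | hn
  · rw [hz1]; exact zero_le_one
  · exact nonneg_of_eqOn_one_of_pos (hz_one n hn) (fun y hy => (hz_mid n hn y hy).1)
      (hz_zero n hn) x

theorem bump_hasCompactSupport
    (hz_zero : ∀ n, 2 ≤ n → ∀ s : ℝ,
      s ∉ Set.Ioo ((t (n - 1) + t n) / 2) ((t (n + 1) + t (n + 2)) / 2) → z n s = 0)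
    {n : ℕ} (hn : 2 ≤ n) : HasCompactSupport (z n) :=
  HasCompactSupport.intro isCompact_Icc fun x hx =>
    hz_zero n hn x fun hmem => hx (Ioo_subset_Icc_self hmem)

theorem apply_tsum_bump_smul (ht_mono : ∀ n, 1 ≤ n → t n < t (n + 1))
    (hz_zero : ∀ n, 2 ≤ n → ∀ s : ℝ,
      s ∉ Set.Ioo ((t (n - 1) + t n) / 2) ((t (n + 1) + t (n + 2)) / 2) → z n s = 0)
    (hV_biorth : ∀ n m, 1 ≤ n → 1 ≤ m → V n (v m) = if n = m then 1 else 0)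
    {N : ℕ} (hN : 1 ≤ N) {x : ℝ} (hx : x ≤ t N) {i : ℕ} (hi : 1 ≤ i) :
    V i (∑' n, z (n + 1) x • v (n + 1)) = z i x := by
  have hcoord := apply_tsum_smul_of_biorthogonal (V i) (b := fun n => v (n + 1))
    (c := fun n => z (n + 1) x) (i := i - 1) (by simp [Nat.sub_add_cancel hi, hV_biorth i i hi hi])
    (fun j hj => by rw [hV_biorth i (j + 1) hi (by omega), if_neg (by omega)])
    (summable_of_ne_finset_zero (bump_smul_eq_zero_of_notMem_range ht_mono hz_zero hN hx))
  rwa [Nat.sub_add_cancel hi] at hcoord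

theorem H_nonneg_of_coord_nonneg {H : ℝ → X → ℝ} (ht_mono : ∀ n, 1 ≤ n → t n < t (n + 1))
    (hH : ∀ (s : ℝ) (x : X), H s x =
        V 1 x * Set.indicator (Set.Ico (0 : ℝ) (t 1)) (fun _ => (1 : ℝ)) s +
        ∑' i : ℕ,
          ((1 / ((i : ℝ) + 1) ^ 2) * V (i + 1) x *
              Set.indicator (Set.Ici (t (i + 1))) (fun _ => (1 : ℝ)) s +
            (1 / ((i : ℝ) + 2) ^ 2) * V (i + 2) x *
              ((s - t (i + 1)) / (t (i + 2) - t (i + 1))) *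
              Set.indicator (Set.Ico (t (i + 1)) (t (i + 2))) (fun _ => (1 : ℝ)) s))
    {x : X} (hx : ∀ i, 1 ≤ i → 0 ≤ V i x) (s : ℝ) : 0 ≤ H s x := by
  have hind : ∀ I : Set ℝ, 0 ≤ I.indicator (fun _ => (1 : ℝ)) s := fun I =>
    indicator_nonneg (fun _ _ => zero_le_one) s
  rw [hH]
  refine add_nonneg (mul_nonneg (hx 1 le_rfl) (hind _)) (tsum_nonneg fun i => add_nonneg ?_ ?_)
  · exact mul_nonneg (mul_nonneg (by positivity) (hx _ (by omega))) (hind _)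
  · by_cases hs : s ∈ Ico (t (i + 1)) (t (i + 2))
    · have hstep := ht_mono (i + 1) (by omega)
      rw [indicator_of_mem hs, mul_one]
      exact mul_nonneg (mul_nonneg (by positivity) (hx _ (by omega)))
        (div_nonneg (by linarith [hs.1]) (by linarith))
    · rw [indicator_of_notMem hs, mul_zero]

theorem sub_eq_sum_of_le (ht_mono : ∀ n, 1 ≤ n → t n < t (n + 1)) (hz1 : ∀ s : ℝ, z 1 s = 1)
    (hz_zero : ∀ n, 2 ≤ n → ∀ s : ℝ,
      s ∉ Set.Ioo ((t (n - 1) + t n) / 2) ((t (n + 1) + t (n + 2)) / 2) → z n s = 0)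
    {u : ℝ → X} (hu : ∀ s : ℝ, u s = ∑' n : ℕ, z (n + 1) s • v (n + 1)) {K : ℕ} {x : ℝ}
    (hx : x ≤ t (K + 1)) : u x - v 1 = ∑ i ∈ Finset.range K, z (i + 2) x • v (i + 2) := by
  rw [hu, tsum_eq_sum (bump_smul_eq_zero_of_notMem_range ht_mono hz_zero K.succ_pos hx),
    Finset.sum_range_succ', zero_add, hz1, one_smul, add_sub_cancel_right]

theorem w_eq_sum (ht_mono : ∀ n, 1 ≤ n → t n < t (n + 1))
    (hz_zero : ∀ n, 2 ≤ n → ∀ s : ℝ,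
      s ∉ Set.Ioo ((t (n - 1) + t n) / 2) ((t (n + 1) + t (n + 2)) / 2) → z n s = 0)
    {w : ℝ → X}
    (hw : ∀ s : ℝ, w s = ∑' n : ℕ,
        Set.indicator (Set.Ico (t (n + 1)) 1)
          (fun r : ℝ => (1 / Real.Gamma (1 - α)) *
            ∫ σ in (0 : ℝ)..r, ((r - σ) ^ (-α)) * deriv (z (n + 2)) σ) s • v (n + 2))
    {K : ℕ} {s : ℝ} (hs0 : 0 ≤ s) (hs1 : s < 1) (hsK : s < t (K + 1)) :
    w s = ∑ i ∈ Finset.range K,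
      ((1 / Real.Gamma (1 - α)) * ∫ σ in (0 : ℝ)..s, (s - σ) ^ (-α) * deriv (z (i + 2)) σ) •
        v (i + 2) := by
  have hint_zero : ∀ i, s < t (i + 1) →
      ∫ σ in (0 : ℝ)..s, (s - σ) ^ (-α) * deriv (z (i + 2)) σ = 0 := by
    intro i hi
    refine (intervalIntegral.integral_congr (g := fun _ => 0) fun σ hσ => ?_).trans (by simp)
    rw [uIcc_of_le hs0] at hσ
    have hz : ∀ y < t (i + 1), z (i + 2) y = 0 := fun y hy =>
      bump_eq_zero_of_le ht_mono hz_zero (by omega) (by omega) hy.le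
    simp only [deriv_eq_zero_of_forall_lt_eq_zero hz (hσ.2.trans_lt hi), mul_zero]
  have hterm : ∀ i, (Ico (t (i + 1)) 1).indicator (fun r => (1 / Real.Gamma (1 - α)) *
        ∫ σ in (0 : ℝ)..r, (r - σ) ^ (-α) * deriv (z (i + 2)) σ) s
      = (1 / Real.Gamma (1 - α)) * ∫ σ in (0 : ℝ)..s, (s - σ) ^ (-α) * deriv (z (i + 2)) σ := by
    intro i
    by_cases hi : s < t (i + 1)
    · rw [indicator_of_notMem fun h => not_le.2 hi h.1, hint_zero i hi, mul_zero]
    · rw [indicator_of_mem (show s ∈ Ico (t (i + 1)) 1 from ⟨not_lt.1 hi, hs1⟩)]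
  simp_rw [hw, hterm]
  refine tsum_eq_sum fun i hi => ?_
  have hKi : t (K + 1) ≤ t (i + 1) :=
    monotoneOn_Ici_one_of_lt_succ ht_mono (by simp) (by simp) (by simpa using hi)
  rw [hint_zero i (hsK.trans_le hKi), mul_zero, zero_smul]

variable [CompleteSpace X]

theorem intervalIntegral_rpow_neg_smul_eq_sum (hα : α < 1)
    (hz_smooth : ∀ n, 2 ≤ n → ContDiff ℝ 1 (z n)) {u : ℝ → X} {K : ℕ}
    (hsub : ∀ x ≤ t (K + 1), u x - v 1 = ∑ i ∈ Finset.range K, z (i + 2) x • v (i + 2))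
    {r : ℝ} (hr0 : 0 ≤ r) (hr : r ≤ t (K + 1)) :
    ∫ σ in (0 : ℝ)..r, (r - σ) ^ (-α) • (u σ - v 1)
      = ∑ i ∈ Finset.range K, (∫ σ in (0 : ℝ)..r, (r - σ) ^ (-α) * z (i + 2) σ) • v (i + 2) := by
  have heq : EqOn (fun σ => (r - σ) ^ (-α) • (u σ - v 1))
      (fun σ => ∑ i ∈ Finset.range K, ((r - σ) ^ (-α) * z (i + 2) σ) • v (i + 2)) (uIcc 0 r) := by
    intro σ hσ
    rw [uIcc_of_le hr0] at hσ
    simp only [hsub σ (hσ.2.trans hr), Finset.smul_sum, smul_smul]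
  have hint : ∀ i ∈ Finset.range K, IntervalIntegrable
      (fun σ => ((r - σ) ^ (-α) * z (i + 2) σ) • v (i + 2)) volume 0 r := fun i _ =>
    (intervalIntegrable_rpow_neg_smul hα (hz_smooth _ (by omega)).continuous r).smul_continuousOn
      continuousOn_const
  rw [intervalIntegral.integral_congr heq, intervalIntegral.integral_finsetSum hint]
  simp_rw [intervalIntegral.integral_smul_const]

theorem hasDerivAt_fractionalIntegral_sub (hα : α < 1) (ht1 : 0 < t 1)
    (ht_mono : ∀ n, 1 ≤ n → t n < t (n + 1))
    (ht_lim : Filter.Tendsto t Filter.atTop (nhds 1))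
    (hz1 : ∀ s : ℝ, z 1 s = 1)
    (hz_smooth : ∀ n, 2 ≤ n → ContDiff ℝ 1 (z n))
    (hz_zero : ∀ n, 2 ≤ n → ∀ s : ℝ,
      s ∉ Set.Ioo ((t (n - 1) + t n) / 2) ((t (n + 1) + t (n + 2)) / 2) → z n s = 0)
    {u w : ℝ → X} (hu : ∀ s : ℝ, u s = ∑' n : ℕ, z (n + 1) s • v (n + 1))
    (hw : ∀ s : ℝ, w s = ∑' n : ℕ,
        Set.indicator (Set.Ico (t (n + 1)) 1)
          (fun r : ℝ => (1 / Real.Gamma (1 - α)) *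
            ∫ σ in (0 : ℝ)..r, ((r - σ) ^ (-α)) * deriv (z (n + 2)) σ) s • v (n + 2))
    {s : ℝ} (hs : s ∈ Ioo 0 1) :
    HasDerivAt (fun r : ℝ => (1 / Real.Gamma (1 - α)) •
      ∫ σ in (0 : ℝ)..r, ((r - σ) ^ (-α)) • (u σ - v 1)) (w s) s := by
  obtain ⟨K, hsK⟩ := exists_lt_succ_of_tendsto ht_lim hs.2
  rw [w_eq_sum ht_mono hz_zero hw hs.1.le hs.2 hsK]
  have hz_neg : ∀ n, 2 ≤ n → ∀ x < 0, z n x = 0 := fun n hn x hx =>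
    bump_eq_zero_of_le ht_mono hz_zero le_rfl (by omega) (hx.le.trans ht1.le)
  refine (HasDerivAt.fun_sum fun i _ =>
    ((hasDerivAt_intervalIntegral_rpow_neg_smul hα (hz_smooth (i + 2) (by omega))
      (bump_hasCompactSupport hz_zero (by omega)) (hz_neg (i + 2) (by omega)) hs.1).const_mul
        (1 / Real.Gamma (1 - α))).smul_const (v (i + 2))).congr_of_eventuallyEq ?_
  filter_upwards [Ioo_mem_nhds hs.1 hsK] with r hr
  rw [intervalIntegral_rpow_neg_smul_eq_sum hα hz_smooth
    (fun x hx => sub_eq_sum_of_le ht_mono hz1 hz_zero hu hx) hr.1.le hr.2.le, Finset.smul_sum]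
  simp_rw [smul_smul]
  rfl

end StandingConstruction

theorem u_solves_FCP_general
    (α : ℝ) (hα : α ∈ Set.Ioo (0 : ℝ) 1)
    (X : Type*) [NormedAddCommGroup X] [NormedSpace ℝ X] [CompleteSpace X]
    (t : ℕ → ℝ) (z : ℕ → ℝ → ℝ) (v : ℕ → X) (V : ℕ → X →L[ℝ] ℝ)
    (ht_mem : ∀ n, 1 ≤ n → t n ∈ Set.Ioo (0 : ℝ) 1)
    (ht_mono : ∀ n, 1 ≤ n → t n < t (n + 1))
    (ht_lim : Filter.Tendsto t Filter.atTop (nhds 1))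
    (hz1 : ∀ s : ℝ, z 1 s = 1)
    (hz_smooth : ∀ n, 2 ≤ n → ContDiff ℝ 1 (z n))
    (hz_one : ∀ n, 2 ≤ n → ∀ s ∈ Set.Icc (t n) (t (n + 1)), z n s = 1)
    (hz_mid : ∀ n, 2 ≤ n → ∀ s ∈ Set.Ioo ((t (n - 1) + t n) / 2) (t n) ∪
        Set.Ioo (t (n + 1)) ((t (n + 1) + t (n + 2)) / 2),
      0 < z n s ∧ z n s < 1)
    (hz_zero : ∀ n, 2 ≤ n → ∀ s : ℝ,
      s ∉ Set.Ioo ((t (n - 1) + t n) / 2) ((t (n + 1) + t (n + 2)) / 2) → z n s = 0)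
    (hV_biorth : ∀ n m, 1 ≤ n → 1 ≤ m → V n (v m) = if n = m then 1 else 0) :
    ∀ (w : ℝ → X) (H : ℝ → X → ℝ) (f : ℝ → X → X),
    ∀ (u w : ℝ → X) (H : ℝ → X → ℝ) (f : ℝ → X → X),
      (∀ s : ℝ, u s = ∑' n : ℕ, z (n + 1) s • v (n + 1)) →
      (∀ s : ℝ, w s = ∑' n : ℕ,
        Set.indicator (Set.Ico (t (n + 1)) 1)
          (fun r : ℝ => (1 / Real.Gamma (1 - α)) *
            ∫ σ in (0 : ℝ)..r, ((r - σ) ^ (-α)) * deriv (z (n + 2)) σ) s • v (n + 2)) →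
      (∀ (s : ℝ) (x : X), H s x =
        V 1 x * Set.indicator (Set.Ico (0 : ℝ) (t 1)) (fun _ => (1 : ℝ)) s +
        ∑' i : ℕ,
          ((1 / ((i : ℝ) + 1) ^ 2) * V (i + 1) x *
              Set.indicator (Set.Ici (t (i + 1))) (fun _ => (1 : ℝ)) s +
            (1 / ((i : ℝ) + 2) ^ 2) * V (i + 2) x *
              ((s - t (i + 1)) / (t (i + 2) - t (i + 1))) *
              Set.indicator (Set.Ico (t (i + 1)) (t (i + 2))) (fun _ => (1 : ℝ)) s)) →
      (∀ (s : ℝ) (x : X), f s x = (min (H s x + 1) 1) • w s) →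
      -- H(t, u(t)) ≥ 0 on [0,1)
      (∀ s ∈ Set.Ico (0 : ℝ) 1, 0 ≤ H s (u s)) ∧
      -- hence φ(H(t,u(t))) = 1
      (∀ s ∈ Set.Ico (0 : ℝ) 1, min (H s (u s) + 1) 1 = 1) ∧
      -- and f_α(t, u(t)) = w(t)
      (∀ s ∈ Set.Ico (0 : ℝ) 1, f s (u s) = w s) ∧
      -- u(0) = v₁
      u 0 = v 1 ∧
      -- u solves cD^α u(t) = f_α(t, u(t)) on (0,1)
      (∀ s ∈ Set.Ioo (0 : ℝ) 1,
        HasDerivAt (fun r : ℝ => (1 / Real.Gamma (1 - α)) •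
          ∫ σ in (0 : ℝ)..r, ((r - σ) ^ (-α)) • (u σ - v 1)) (f s (u s)) s) := by
  intro _ _ _ u w H f hu hw hH hf
  have hH_nonneg : ∀ s ∈ Ico (0 : ℝ) 1, 0 ≤ H s (u s) := by
    intro s hs
    obtain ⟨K, hsK⟩ := exists_lt_succ_of_tendsto ht_lim hs.2
    refine H_nonneg_of_coord_nonneg ht_mono hH (fun i hi => ?_) s
    rw [hu, apply_tsum_bump_smul ht_mono hz_zero hV_biorth K.succ_pos hsK.le hi]
    exact bump_nonneg hz1 hz_one hz_mid hz_zero hi s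
  have hφ : ∀ s ∈ Ico (0 : ℝ) 1, min (H s (u s) + 1) 1 = 1 := fun s hs =>
    min_eq_right (by linarith [hH_nonneg s hs])
  have hf_eq : ∀ s ∈ Ico (0 : ℝ) 1, f s (u s) = w s := fun s hs => by
    rw [hf, hφ s hs, one_smul]
  refine ⟨hH_nonneg, hφ, hf_eq, ?_, fun s hs => ?_⟩
  · simpa [sub_eq_zero] using
      sub_eq_sum_of_le ht_mono hz1 hz_zero hu (K := 0) (ht_mem 1 le_rfl).1.le
  · rw [hf_eq s (Ioo_subset_Ico_self hs)]
    exact hasDerivAt_fractionalIntegral_sub hα.2 (ht_mem 1 le_rfl).1 ht_mono ht_lim hz1 hz_smooth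
      hz_zero hu hw hs

/-- Under the standing construction with biorthogonal functionals, one has
`H(t,u(t)) ≥ 0`, hence `φ(H(t,u(t))) = 1` and `f_α(t,u(t)) = w(t)` on `[0,1)`;
consequently `u` solves the fractional Cauchy problem `cD^α u = f_α(t,u)` on `(0,1)`
with `u(0) = v₁`. -/
theorem u_solves_FCP
    (α : ℝ) (hα : α ∈ Set.Ioo (0 : ℝ) 1)
    (X : Type*) [NormedAddCommGroup X] [NormedSpace ℝ X] [CompleteSpace X]
    (t : ℕ → ℝ) (z : ℕ → ℝ → ℝ) (v : ℕ → X) (V : ℕ → X →L[ℝ] ℝ)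
    (ht_mem : ∀ n, 1 ≤ n → t n ∈ Set.Ioo (0 : ℝ) 1)
    (ht_mono : ∀ n, 1 ≤ n → t n < t (n + 1))
    (ht_lim : Filter.Tendsto t Filter.atTop (nhds 1))
    (ht_step : ∀ n, 2 ≤ n → t (n + 1) - t n < t n - t (n - 1))
    (hz1 : ∀ s : ℝ, z 1 s = 1)
    (hz_smooth : ∀ n, 2 ≤ n → ContDiff ℝ 1 (z n))
    (hz_one : ∀ n, 2 ≤ n → ∀ s ∈ Set.Icc (t n) (t (n + 1)), z n s = 1)
    (hz_mid : ∀ n, 2 ≤ n → ∀ s ∈ Set.Ioo ((t (n - 1) + t n) / 2) (t n) ∪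
        Set.Ioo (t (n + 1)) ((t (n + 1) + t (n + 2)) / 2),
      0 < z n s ∧ z n s < 1)
    (hz_zero : ∀ n, 2 ≤ n → ∀ s : ℝ,
      s ∉ Set.Ioo ((t (n - 1) + t n) / 2) ((t (n + 1) + t (n + 2)) / 2) → z n s = 0)
    (hz_deriv_nonneg : ∀ n, 2 ≤ n →
      ∀ s ∈ Set.Icc ((t (n - 1) + t n) / 2) (t n), 0 ≤ deriv (z n) s)
    (hz_deriv_nonpos : ∀ n, 2 ≤ n →
      ∀ s ∈ Set.Icc (t (n + 1)) ((t (n + 1) + t (n + 2)) / 2), deriv (z n) s ≤ 0)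
    (hv : ∀ n, 1 ≤ n → ‖v n‖ = 1)
    (hV_norm : ∀ n, 1 ≤ n → ‖V n‖ ≤ 1)
    (hV_biorth : ∀ n m, 1 ≤ n → 1 ≤ m → V n (v m) = if n = m then 1 else 0) :
    ∀ (w : ℝ → X) (H : ℝ → X → ℝ) (f : ℝ → X → X),
    ∀ (u w : ℝ → X) (H : ℝ → X → ℝ) (f : ℝ → X → X),
      (∀ s : ℝ, u s = ∑' n : ℕ, z (n + 1) s • v (n + 1)) →
      (∀ s : ℝ, w s = ∑' n : ℕ,
        Set.indicator (Set.Ico (t (n + 1)) 1)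
          (fun r : ℝ => (1 / Real.Gamma (1 - α)) *
            ∫ σ in (0 : ℝ)..r, ((r - σ) ^ (-α)) * deriv (z (n + 2)) σ) s • v (n + 2)) →
      (∀ (s : ℝ) (x : X), H s x =
        V 1 x * Set.indicator (Set.Ico (0 : ℝ) (t 1)) (fun _ => (1 : ℝ)) s +
        ∑' i : ℕ,
          ((1 / ((i : ℝ) + 1) ^ 2) * V (i + 1) x *
              Set.indicator (Set.Ici (t (i + 1))) (fun _ => (1 : ℝ)) s +
            (1 / ((i : ℝ) + 2) ^ 2) * V (i + 2) x *
              ((s - t (i + 1)) / (t (i + 2) - t (i + 1))) *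
              Set.indicator (Set.Ico (t (i + 1)) (t (i + 2))) (fun _ => (1 : ℝ)) s)) →
      (∀ (s : ℝ) (x : X), f s x = (min (H s x + 1) 1) • w s) →
      -- H(t, u(t)) ≥ 0 on [0,1)
      (∀ s ∈ Set.Ico (0 : ℝ) 1, 0 ≤ H s (u s)) ∧
      -- hence φ(H(t,u(t))) = 1
      (∀ s ∈ Set.Ico (0 : ℝ) 1, min (H s (u s) + 1) 1 = 1) ∧
      -- and f_α(t, u(t)) = w(t)
      (∀ s ∈ Set.Ico (0 : ℝ) 1, f s (u s) = w s) ∧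
      -- u(0) = v₁
      u 0 = v 1 ∧
      -- u solves cD^α u(t) = f_α(t, u(t)) on (0,1)
      (∀ s ∈ Set.Ioo (0 : ℝ) 1,
        HasDerivAt (fun r : ℝ => (1 / Real.Gamma (1 - α)) •
          ∫ σ in (0 : ℝ)..r, ((r - σ) ^ (-α)) • (u σ - v 1)) (f s (u s)) s) :=
  u_solves_FCP_general α hα X t z v V ht_mem ht_mono ht_lim hz1 hz_smooth hz_one hz_mid hz_zero
    hV_biorth
end
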